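/- arXiv:1602.07504 — 8 statements merged into one kernel-verified Lean document; each statement's English description precedes it below -/
import Mathlib

section
/- Let G be a finite simple graph and let U be a connected vertex cover of G. Then U is a minimal connected vertex cover of G if and only if for every vertex u ∈ U, either u is a cut vertex of the subgraph of G induced by U, or there is an edge ux of G with x ∉ U. -/
/-- `U` is a vertex cover of `G`: every edge has at least one endpoint in `U`. -/
def IsVertexCover {V : Type*} (G : SimpleGraph V) (U : Set V) : Prop :=
  ∀ ⦃a b : V⦄, G.Adj a b → a ∈ U ∨ b ∈ U

/-- `U` is a connected vertex cover of `G`. -/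
def IsCVC {V : Type*} (G : SimpleGraph V) (U : Set V) : Prop :=
  IsVertexCover G U ∧ (G.induce U).Connected

/-- `v` is a cut vertex of the subgraph of `G` induced by `A`:
`G[A]` is connected and deleting `v` leaves a disconnected graph. -/
def IsCutVertexOf {V : Type*} (G : SimpleGraph V) (A : Set V) (v : V) : Prop :=
  (G.induce A).Connected ∧ ¬ (G.induce (A \ {v})).Connected

private lemma reach_mono {V : Type*} (G : SimpleGraph V) {A B : Set V} (h : A ⊆ B)
    {x y : A} (hr : (G.induce A).Reachable x y) :
    (G.induce B).Reachable ⟨x, h x.2⟩ ⟨y, h y.2⟩ := by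
  exact hr.map ⟨Set.inclusion h, fun hadj => hadj⟩

private lemma exists_nbr {V : Type*} {G : SimpleGraph V} {U : Set V}
    (hconn : (G.induce U).Connected) {a u : V} (ha : a ∈ U) (hu : u ∈ U)
    (hne : a ≠ u) : ∃ b ∈ U, G.Adj a b := by
  obtain ⟨p⟩ := hconn.preconnected ⟨a, ha⟩ ⟨u, hu⟩
  have hne' : (⟨a, ha⟩ : U) ≠ ⟨u, hu⟩ := by
    intro h; exact hne (congrArg Subtype.val h)
  obtain ⟨w, hadj, p', -⟩ := p.exists_eq_cons_of_ne hne'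
  exact ⟨w.1, w.2, hadj⟩

theorem stmt0 {V : Type*} [Fintype V] (G : SimpleGraph V) (U : Set V)
    (hU : IsCVC G U) :
    (IsCVC G U ∧ ∀ W : Set V, W ⊂ U → ¬ IsCVC G W) ↔
      ∀ u ∈ U, IsCutVertexOf G U u ∨ ∃ x : V, G.Adj u x ∧ x ∉ U := by
  obtain ⟨hcov, hconn⟩ := hU
  constructor
  · rintro ⟨-, hmin⟩ u hu
    by_contra hcon
    push_neg at hcon
    obtain ⟨hncut, hedge⟩ := hcon
    have hconn' : (G.induce (U \ {u})).Connected := by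
      by_contra h'
      exact hncut ⟨hconn, h'⟩
    refine hmin (U \ {u}) (Set.sdiff_singleton_ssubset.mpr hu) ⟨?_, hconn'⟩
    intro a b hab
    rcases hcov hab with ha | hb
    · by_cases hau : a = u
      · subst hau
        have hbU := hedge b hab
        exact Or.inr ⟨hbU, fun hbu => G.irrefl (hbu ▸ hab)⟩
      · exact Or.inl ⟨ha, hau⟩
    · by_cases hbu : b = u
      · subst hbu
        have haU := hedge a hab.symm
        exact Or.inl ⟨haU, fun hau => G.irrefl (hau ▸ hab)⟩
      · exact Or.inr ⟨hb, hbu⟩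
  · intro hcond
    refine ⟨⟨hcov, hconn⟩, ?_⟩
    rintro W hWU ⟨hWcov, hWconn⟩
    obtain ⟨u, huU, huW⟩ := Set.exists_of_ssubset hWU
    rcases hcond u huU with hcut | ⟨x, hux, hxU⟩
    · apply hcut.2
      have hWsub : W ⊆ U \ {u} := fun w hw =>
        ⟨hWU.subset hw, fun hwu => huW (by simpa [Set.mem_singleton_iff.mp hwu] using hw)⟩
      -- every vertex of U \ {u} is in W or adjacent to a vertex of W
      have hanchor : ∀ a, a ∈ U \ {u} → ∃ w ∈ W, a = w ∨ G.Adj a w := by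
        rintro a ⟨haU, hau⟩
        by_cases haW : a ∈ W
        · exact ⟨a, haW, Or.inl rfl⟩
        · obtain ⟨b, hbU, hab⟩ := exists_nbr hconn haU huU hau
          rcases hWcov hab with h | h
          · exact absurd h haW
          · exact ⟨b, h, Or.inr hab⟩
      obtain ⟨⟨w0, hw0⟩⟩ := hWconn.nonempty
      haveI : Nonempty ↥(U \ {u}) := ⟨⟨w0, hWsub hw0⟩⟩
      refine ⟨fun a b => ?_⟩
      obtain ⟨wa, hwa, hra⟩ := hanchor a.1 a.2
      obtain ⟨wb, hwb, hrb⟩ := hanchor b.1 b.2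
      have step : ∀ (c : ↥(U \ {u})) (w : V) (hw : w ∈ W), c.1 = w ∨ G.Adj c.1 w →
          (G.induce (U \ {u})).Reachable c ⟨w, hWsub hw⟩ := by
        rintro c w hw (h | h)
        · exact SimpleGraph.Reachable.refl _ |>.mono le_rfl |>.trans
            (by rw [show c = (⟨w, hWsub hw⟩ : ↥(U \ {u})) from Subtype.ext h])
        · exact SimpleGraph.Adj.reachable (by exact h)
      have hmid : (G.induce (U \ {u})).Reachable ⟨wa, hWsub hwa⟩ ⟨wb, hWsub hwb⟩ := by
        have := hWconn.preconnected ⟨wa, hwa⟩ ⟨wb, hwb⟩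
        exact reach_mono G hWsub this
      exact ((step a wa hwa hra).trans hmid).trans (step b wb hwb hrb).symm
    · rcases hWcov hux with h | h
      · exact huW h
      · exact hxU (hWU.subset h)
end

section
/- Let v be a cut vertex of a connected finite simple graph G. Then v belongs to every connected vertex cover of G. -/
/-- `v` is a cut vertex of the connected graph `G`:
deleting `v` from `G` leaves a disconnected graph. -/
def IsCutVertex {V : Type*} (G : SimpleGraph V) (v : V) : Prop :=
  G.Connected ∧ ¬ (G.induce {v}ᶜ).Connected

theorem stmt2 {V : Type*} [Fintype V] (G : SimpleGraph V) (hG : G.Connected)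
    (v : V) (hv : IsCutVertex G v) :
    ∀ U : Set V, IsCVC G U → v ∈ U := by
  intro U hU
  by_contra hvU
  obtain ⟨hcov, hconn⟩ := hU
  obtain ⟨hGc, hnc⟩ := hv
  apply hnc
  have hsub : U ⊆ ({v}ᶜ : Set V) := by
    intro x hx
    simp only [Set.mem_compl_iff, Set.mem_singleton_iff]
    rintro rfl; exact hvU hx
  let φ : G.induce U →g G.induce ({v}ᶜ : Set V) :=
    ⟨fun x => ⟨x.1, hsub x.2⟩, fun {a b} h => h⟩
  have hreachU : ∀ a b : U,
      (G.induce ({v}ᶜ : Set V)).Reachable ⟨a.1, hsub a.2⟩ ⟨b.1, hsub b.2⟩ :=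
    fun a b => (hconn a b).map φ
  have key : ∀ w : ({v}ᶜ : Set V), ∃ u : U,
      (G.induce ({v}ᶜ : Set V)).Reachable w ⟨u.1, hsub u.2⟩ := by
    rintro ⟨w, hw⟩
    by_cases hwU : w ∈ U
    · exact ⟨⟨w, hwU⟩, SimpleGraph.Reachable.refl _⟩
    · have hwv : w ≠ v := by simpa using hw
      obtain ⟨u, hadj⟩ : ∃ u, G.Adj w u := by
        obtain ⟨p⟩ := hGc.preconnected w v
        cases p with
        | nil => exact absurd rfl hwv
        | cons h _ => exact ⟨_, h⟩
      have huU : u ∈ U := (hcov hadj).resolve_left hwU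
      have hadj' : (G.induce ({v}ᶜ : Set V)).Adj ⟨w, hw⟩ ⟨u, hsub huU⟩ := hadj
      exact ⟨⟨u, huU⟩, hadj'.reachable⟩
  have hne : Nonempty U := hconn.nonempty
  obtain ⟨u0⟩ := hne
  have : Nonempty ({v}ᶜ : Set V) := ⟨⟨u0.1, hsub u0.2⟩⟩
  refine ⟨fun a b => ?_⟩
  obtain ⟨ua, ha⟩ := key a
  obtain ⟨ub, hb⟩ := key b
  exact ha.trans ((hreachU ua ub).trans hb.symm)
end

section
/- Every finite simple graph G on n vertices has at most 1.8668^n minimal connected vertex covers. -/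
/-- `U` is a minimal connected vertex cover of `G`. -/
def IsMinCVC {V : Type*} (G : SimpleGraph V) (U : Set V) : Prop :=
  IsCVC G U ∧ ∀ W : Set V, W ⊂ U → ¬ IsCVC G W

set_option linter.unusedSectionVars false
set_option linter.unnecessarySimpa false
set_option maxHeartbeats 1000000

open SimpleGraph

section Helpers

variable {V : Type*} [Fintype V] {G : SimpleGraph V}


lemma nat_le_pow (n : ℕ) : (n : ℝ) ≤ 1.8668 ^ n := by
  rcases n with _ | _ | n
  · norm_num
  · norm_num
  · induction n with
    | zero => norm_num
    | succ k ih =>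
      have h1 : (1.8668:ℝ) ^ (k+1+2) = 1.8668 * 1.8668 ^ (k+2) := by ring
      have h2 : ((k:ℝ)+2) ≤ 1.8668 ^ (k+2) := by exact_mod_cast ih
      have h3 : (1.8668:ℝ) * ((k:ℝ)+2) ≤ 1.8668 * 1.8668 ^ (k+2) := by nlinarith
      have h4 : ((k:ℝ)+3) ≤ 1.8668 * ((k:ℝ)+2) := by nlinarith [Nat.cast_nonneg (α := ℝ) k]
      push_cast
      nlinarith

lemma real_bound (m s : ℕ) (hm : 1 ≤ m) :
    (3:ℝ)^m * (∑ k ∈ Finset.range m, (Nat.choose s k : ℝ)) ≤ 1.8668 ^ (2*m+s) := by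
  obtain ⟨m', rfl⟩ : ∃ m', m = m' + 1 := ⟨m - 1, by omega⟩
  set x : ℝ := 1.8668 with hx
  set y : ℝ := 0.8668 with hy
  have hy0 : (0:ℝ) < y := by norm_num [hy]
  have hy1 : y ≤ 1 := by norm_num [hy]
  have hxy : 1 + y = x := by norm_num [hx, hy]
  have hx3 : (3:ℝ) ≤ x^2 := by norm_num [hx]
  have hx3y : (3:ℝ) ≤ x^2 * y := by norm_num [hx, hy]
  -- step 1 : ∑_{k<m'+1} C(s,k) * y^m' ≤ ∑_{k<m'+1} C(s,k) * y^k
  have step1 : (∑ k ∈ Finset.range (m'+1), (Nat.choose s k : ℝ)) * y^m'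
      ≤ ∑ k ∈ Finset.range (m'+1), (Nat.choose s k : ℝ) * y^k := by
    rw [Finset.sum_mul]
    apply Finset.sum_le_sum
    intro k hk
    have hk' : k ≤ m' := by simpa [Nat.lt_succ_iff] using hk
    have := pow_le_pow_of_le_one hy0.le hy1 hk'
    have h0 : (0:ℝ) ≤ (Nat.choose s k : ℝ) := by positivity
    nlinarith
  -- step 2: extend the sum
  have step2 : (∑ k ∈ Finset.range (m'+1), (Nat.choose s k : ℝ) * y^k)
      ≤ ∑ k ∈ Finset.range (s+1), (Nat.choose s k : ℝ) * y^k := by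
    have hsub1 : Finset.range (m'+1) ⊆ Finset.range (m'+1+(s+1)) :=
      Finset.range_subset_range.mpr (by omega)
    have hsub2 : Finset.range (s+1) ⊆ Finset.range (m'+1+(s+1)) :=
      Finset.range_subset_range.mpr (by omega)
    have h1 : (∑ k ∈ Finset.range (m'+1), (Nat.choose s k : ℝ) * y^k)
        ≤ ∑ k ∈ Finset.range (m'+1+(s+1)), (Nat.choose s k : ℝ) * y^k := by
      apply Finset.sum_le_sum_of_subset_of_nonneg hsub1
      intro i _ _; positivity
    have h2 : (∑ k ∈ Finset.range (m'+1+(s+1)), (Nat.choose s k : ℝ) * y^k)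
        = ∑ k ∈ Finset.range (s+1), (Nat.choose s k : ℝ) * y^k := by
      symm
      apply Finset.sum_subset hsub2
      intro k hk1 hk
      have hks : s < k := by
        simp only [Finset.mem_range] at hk1 hk
        omega
      simp [Nat.choose_eq_zero_of_lt hks]
    linarith
  -- step 3: binomial
  have step3 : (∑ k ∈ Finset.range (s+1), (Nat.choose s k : ℝ) * y^k) = x^s := by
    rw [← hxy, add_comm (1:ℝ) y, add_pow]
    apply Finset.sum_congr rfl
    intro k hk
    simp [mul_comm]
  -- step 4: 3^(m'+1) ≤ x^(2*(m'+1)) * y^m'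
  have step4 : (3:ℝ)^(m'+1) ≤ x^(2*(m'+1)) * y^m' := by
    have h1 : (3:ℝ)^(m'+1) = 3 * 3^m' := by ring
    have h2 : x^(2*(m'+1)) * y^m' = x^2 * (x^2*y)^m' := by
      rw [mul_pow, ← pow_mul]; ring
    rw [h1, h2]
    have h3 : (3:ℝ)^m' ≤ (x^2*y)^m' := by
      apply pow_le_pow_left₀ (by norm_num) hx3y _
    nlinarith [pow_pos (show (0:ℝ) < 3 by norm_num) m', pow_pos (mul_pos (by positivity : (0:ℝ) < x^2) hy0) m']
  -- combine
  have hyp : (0:ℝ) < y^m' := pow_pos hy0 m'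
  have main : (3:ℝ)^(m'+1) * (∑ k ∈ Finset.range (m'+1), (Nat.choose s k : ℝ)) * y^m'
      ≤ (x^(2*(m'+1)) * x^s) * y^m' := by
    have c1 : (3:ℝ)^(m'+1) * ((∑ k ∈ Finset.range (m'+1), (Nat.choose s k : ℝ)) * y^m')
        ≤ (3:ℝ)^(m'+1) * x^s := by
      apply mul_le_mul_of_nonneg_left _ (by positivity)
      calc (∑ k ∈ Finset.range (m'+1), (Nat.choose s k : ℝ)) * y^m'
          ≤ ∑ k ∈ Finset.range (m'+1), (Nat.choose s k : ℝ) * y^k := step1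
        _ ≤ ∑ k ∈ Finset.range (s+1), (Nat.choose s k : ℝ) * y^k := step2
        _ = x^s := step3
    have c2 : (3:ℝ)^(m'+1) * x^s ≤ (x^(2*(m'+1)) * y^m') * x^s := by
      apply mul_le_mul_of_nonneg_right step4 (by positivity)
    calc (3:ℝ)^(m'+1) * (∑ k ∈ Finset.range (m'+1), (Nat.choose s k : ℝ)) * y^m'
        = (3:ℝ)^(m'+1) * ((∑ k ∈ Finset.range (m'+1), (Nat.choose s k : ℝ)) * y^m') := by ring
      _ ≤ (3:ℝ)^(m'+1) * x^s := c1
      _ ≤ (x^(2*(m'+1)) * y^m') * x^s := c2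
      _ = (x^(2*(m'+1)) * x^s) * y^m' := by ring
  have main2 : (3:ℝ)^(m'+1) * (∑ k ∈ Finset.range (m'+1), (Nat.choose s k : ℝ)) * y^m'
      ≤ x^(2*(m'+1)+s) * y^m' := by
    have e : x^(2*(m'+1)+s) = x^(2*(m'+1))*x^s := pow_add x _ _
    rw [e]; exact main
  exact le_of_mul_le_mul_right main2 hyp





/-- inclusion homomorphism between induced subgraphs -/
def inclHom {A B : Set V} (h : A ⊆ B) : G.induce A →g G.induce B where
  toFun := fun v => ⟨v.1, h v.2⟩
  map_rel' := by intro a b hab; simpa using hab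

lemma inclHom_reachable {A B : Set V} (h : A ⊆ B) {x y : ↥A}
    (hr : (G.induce A).Reachable x y) :
    (G.induce B).Reachable ⟨x.1, h x.2⟩ ⟨y.1, h y.2⟩ :=
  hr.map (inclHom h)

lemma card_cc_of_connected {A : Set V} (h : (G.induce A).Connected) :
    Nat.card (G.induce A).ConnectedComponent = 1 := by
  haveI : Nonempty ↥A := h.nonempty
  have hsub : Subsingleton (G.induce A).ConnectedComponent := by
    constructor
    intro c d
    induction c using SimpleGraph.ConnectedComponent.ind with
    | _ v =>
      induction d using SimpleGraph.ConnectedComponent.ind with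
      | _ w => exact ConnectedComponent.sound (h.preconnected v w)
  haveI : Nonempty (G.induce A).ConnectedComponent :=
    ⟨(G.induce A).connectedComponentMk (Classical.arbitrary _)⟩
  exact Nat.card_eq_one_iff_unique.mpr ⟨hsub, this⟩

/-- In a connected induced subgraph with two distinct vertices, every vertex has a neighbor. -/
lemma exists_adj_of_connected {A : Set V} (h : (G.induce A).Connected)
    {a b : V} (ha : a ∈ A) (hb : b ∈ A) (hab : a ≠ b) :
    ∃ w, w ∈ A ∧ G.Adj a w := by
  have hr : (G.induce A).Reachable ⟨a, ha⟩ ⟨b, hb⟩ := h.preconnected _ _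
  obtain ⟨p⟩ := hr
  cases p with
  | nil => exact absurd rfl hab
  | cons h' p' =>
    rename_i v
    exact ⟨v.1, v.2, by simpa using h'⟩

/-- If G has no edges, reachability in an induced subgraph implies equality. -/
lemma eq_of_reachable_edgeless {A : Set V} (hG : ∀ x y : V, ¬ G.Adj x y)
    {x y : ↥A} (h : (G.induce A).Reachable x y) : x = y := by
  obtain ⟨p⟩ := h
  cases p with
  | nil => rfl
  | cons h' p' => exact absurd (by simpa using h' : G.Adj _ _) (hG _ _)

lemma walk_prop {A : Set V} {Q : ↥A → Prop}
    (hQ : ∀ u v : ↥A, (G.induce A).Adj u v → Q u → Q v)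
    {a b : ↥A} (p : (G.induce A).Walk a b) (ha : Q a) : Q b := by
  induction p with
  | nil => exact ha
  | cons h' p' ih => exact ih (hQ _ _ h' ha)

lemma step_lemma (U A : Set V) (hAU : A ⊆ U) (hUconn : (G.induce U).Connected)
    (d : V) (hdA : d ∈ A)
    (hcut : ¬ (G.induce (U \ {d})).Connected)
    (hex : ∃ w, w ∈ U ∧ G.Adj d w)
    (hnb : ∀ w, G.Adj d w → w ∈ U → w ∈ A) :
    Nat.card (G.induce A).ConnectedComponent + 1
      ≤ Nat.card (G.induce (A \ {d})).ConnectedComponent := by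
  classical
  have hdU : d ∈ U := hAU hdA
  obtain ⟨w0, hw0U, hw0adj⟩ := hex
  have hw0ne : w0 ≠ d := (hw0adj.ne).symm
  haveI hne' : Nonempty ↥(U \ {d}) := ⟨⟨w0, hw0U, hw0ne⟩⟩
  have hnp : ¬ (G.induce (U \ {d})).Preconnected := by
    intro hp
    exact hcut ⟨hp⟩
  rw [SimpleGraph.Preconnected] at hnp
  push_neg at hnp
  obtain ⟨x, y, hxy⟩ := hnp
  set Hd := G.induce (U \ {d}) with hHd
  -- claim Y : d has a neighbor on the non-x side
  have claimY : ∃ y', G.Adj d y' ∧ y' ∈ U ∧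
      ∃ h : y' ∈ U \ {d}, ¬ Hd.Reachable ⟨y', h⟩ x := by
    by_contra hcon
    push_neg at hcon
    set Q : ↥U → Prop := fun u => u.1 = d ∨
      ∃ h : u.1 ∈ U \ {d}, Hd.Reachable ⟨u.1, h⟩ x with hQdef
    have hQ : ∀ u v : ↥U, (G.induce U).Adj u v → Q u → Q v := by
      intro u v huv hu
      by_cases hvd : v.1 = d
      · exact Or.inl hvd
      · right
        have hvU : v.1 ∈ U \ {d} := ⟨v.2, hvd⟩
        have hGuv : G.Adj u.1 v.1 := by simpa using huv
        rcases hu with hud | ⟨hu', hru⟩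
        · refine ⟨hvU, hcon v.1 (hud ▸ hGuv) v.2 hvU⟩
        · refine ⟨hvU, ?_⟩
          have hadj : Hd.Adj ⟨v.1, hvU⟩ ⟨u.1, hu'⟩ := by simpa [hHd] using hGuv.symm
          exact hadj.reachable.trans hru
    have hQx : Q ⟨x.1, x.2.1⟩ := Or.inr ⟨x.2, by exact Reachable.refl _⟩
    have hQy : Q ⟨y.1, y.2.1⟩ := by
      obtain ⟨p⟩ := hUconn.preconnected ⟨x.1, x.2.1⟩ ⟨y.1, y.2.1⟩
      exact walk_prop hQ p hQx
    rcases hQy with hyd | ⟨hy', hry⟩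
    · exact y.2.2 hyd
    · have : Hd.Reachable y x := by
        have hyy : (⟨y.1, hy'⟩ : ↥(U \ {d})) = y := Subtype.ext rfl
        rwa [hyy] at hry
      exact hxy this.symm
  -- claim X : d has a neighbor on the x side
  have claimX : ∃ x', G.Adj d x' ∧ x' ∈ U ∧
      ∃ h : x' ∈ U \ {d}, Hd.Reachable ⟨x', h⟩ x := by
    by_contra hcon
    push_neg at hcon
    set Q : ↥U → Prop := fun u => u.1 = d ∨
      ∃ h : u.1 ∈ U \ {d}, ¬ Hd.Reachable ⟨u.1, h⟩ x with hQdef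
    have hQ : ∀ u v : ↥U, (G.induce U).Adj u v → Q u → Q v := by
      intro u v huv hu
      by_cases hvd : v.1 = d
      · exact Or.inl hvd
      · right
        have hvU : v.1 ∈ U \ {d} := ⟨v.2, hvd⟩
        have hGuv : G.Adj u.1 v.1 := by simpa using huv
        rcases hu with hud | ⟨hu', hru⟩
        · exact ⟨hvU, hcon v.1 (hud ▸ hGuv) v.2 hvU⟩
        · refine ⟨hvU, fun hr => hru ?_⟩
          have hadj : Hd.Adj ⟨u.1, hu'⟩ ⟨v.1, hvU⟩ := by simpa [hHd] using hGuv
          exact hadj.reachable.trans hr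
    have hQy : Q ⟨y.1, y.2.1⟩ := Or.inr ⟨y.2, fun h => hxy h.symm⟩
    have hQx : Q ⟨x.1, x.2.1⟩ := by
      obtain ⟨p⟩ := hUconn.preconnected ⟨y.1, y.2.1⟩ ⟨x.1, x.2.1⟩
      exact walk_prop hQ p hQy
    rcases hQx with hxd | ⟨hx', hrx⟩
    · exact x.2.2 hxd
    · apply hrx
      have hxx : (⟨x.1, hx'⟩ : ↥(U \ {d})) = x := Subtype.ext rfl
      rw [hxx]
  obtain ⟨x', hx'adj, hx'U, hx'm, hx'r⟩ := claimX
  obtain ⟨y', hy'adj, hy'U, hy'm, hy'nr⟩ := claimY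
  have hx'A : x' ∈ A \ {d} := ⟨hnb x' hx'adj hx'U, hx'm.2⟩
  have hy'A : y' ∈ A \ {d} := ⟨hnb y' hy'adj hy'U, hy'm.2⟩
  -- the component map
  have hsub : A \ {d} ⊆ A := Set.diff_subset
  set φ : (G.induce (A \ {d})).ConnectedComponent → (G.induce A).ConnectedComponent :=
    ConnectedComponent.map (inclHom hsub) with hφ
  have hφmk : ∀ (v : ↥(A \ {d})), φ ((G.induce (A \ {d})).connectedComponentMk v)
      = (G.induce A).connectedComponentMk ⟨v.1, hsub v.2⟩ := by
    intro v; rfl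
  have hsurj : Function.Surjective φ := by
    intro c
    induction c using SimpleGraph.ConnectedComponent.ind with
    | _ v =>
      by_cases hv : v.1 = d
      · refine ⟨(G.induce (A \ {d})).connectedComponentMk ⟨x', hx'A⟩, ?_⟩
        rw [hφmk]
        apply ConnectedComponent.sound
        have hadj : (G.induce A).Adj ⟨x', hsub hx'A⟩ v := by
          simp only [comap_adj, Function.Embedding.coe_subtype]
          rw [hv]
          exact hx'adj.symm
        exact hadj.reachable
      · refine ⟨(G.induce (A \ {d})).connectedComponentMk ⟨v.1, ⟨v.2, hv⟩⟩, ?_⟩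
        rw [hφmk]
  set cx := (G.induce (A \ {d})).connectedComponentMk ⟨x', hx'A⟩ with hcx
  set cy := (G.induce (A \ {d})).connectedComponentMk ⟨y', hy'A⟩ with hcy
  have hφeq : φ cx = φ cy := by
    rw [hcx, hcy, hφmk, hφmk]
    have h1 : (G.induce A).Adj ⟨x', hsub hx'A⟩ ⟨d, hdA⟩ := by
      simpa using hx'adj.symm
    have h2 : (G.induce A).Adj ⟨y', hsub hy'A⟩ ⟨d, hdA⟩ := by
      simpa using hy'adj.symm
    rw [ConnectedComponent.sound h1.reachable, ConnectedComponent.sound h2.reachable]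
  have hcne : cx ≠ cy := by
    intro h
    have hr : (G.induce (A \ {d})).Reachable ⟨x', hx'A⟩ ⟨y', hy'A⟩ :=
      ConnectedComponent.exact h
    have hsub2 : A \ {d} ⊆ U \ {d} := Set.diff_subset_diff_left hAU
    have hr2 : Hd.Reachable ⟨x', hx'm⟩ ⟨y', hy'm⟩ := by
      have := inclHom_reachable hsub2 hr
      exact this
    exact hy'nr (hr2.symm.trans hx'r)
  -- counting
  haveI : Fintype (G.induce (A \ {d})).ConnectedComponent := Fintype.ofFinite _
  haveI : Fintype (G.induce A).ConnectedComponent := Fintype.ofFinite _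
  set g := Function.surjInv hsurj with hg
  have hginj : Function.Injective g := Function.injective_surjInv hsurj
  have hmiss : cx ∉ Set.range g ∨ cy ∉ Set.range g := by
    by_contra hcc
    push_neg at hcc
    obtain ⟨⟨b1, hb1⟩, ⟨b2, hb2⟩⟩ := hcc
    have e1 : φ cx = b1 := by rw [← hb1]; exact Function.surjInv_eq hsurj b1
    have e2 : φ cy = b2 := by rw [← hb2]; exact Function.surjInv_eq hsurj b2
    have : b1 = b2 := by rw [← e1, ← e2, hφeq]
    rw [this] at hb1
    exact hcne (hb1.symm.trans hb2)
  have hlt : Fintype.card (G.induce A).ConnectedComponent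
      < Fintype.card (G.induce (A \ {d})).ConnectedComponent := by
    rcases hmiss with hm | hm
    · exact Fintype.card_lt_of_injective_of_notMem g hginj hm
    · exact Fintype.card_lt_of_injective_of_notMem g hginj hm
  rw [Nat.card_eq_fintype_card, Nat.card_eq_fintype_card]
  omega





lemma chain_lemma (U : Set V) (hUconn : (G.induce U).Connected) (D : Finset V)
    (hDU : ∀ d ∈ D, d ∈ U)
    (hDnb : ∀ d ∈ D, ∀ w, G.Adj d w → w ∉ D)
    (hcut : ∀ d ∈ D, ¬ (G.induce (U \ {d})).Connected)
    (hex : ∀ d ∈ D, ∃ w, w ∈ U ∧ G.Adj d w) :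
    D.card + 1 ≤ Nat.card (G.induce (U \ ↑D)).ConnectedComponent := by
  classical
  induction D using Finset.induction_on with
  | empty =>
    have : U \ ↑(∅ : Finset V) = U := by simp
    rw [this]
    simp only [Finset.card_empty, zero_add]
    rw [card_cc_of_connected hUconn]
  | @insert d D' hd ih =>
    have hsetid : U \ ↑(insert d D') = (U \ ↑D') \ {d} := by
      ext x
      simp only [Finset.coe_insert, Set.mem_diff, Set.mem_insert_iff,
        Set.mem_singleton_iff, Finset.mem_coe]
      tauto
    have hmem : ∀ x ∈ D', x ∈ insert d D' := fun x hx => Finset.mem_insert_of_mem hx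
    have hdmem : d ∈ insert d D' := Finset.mem_insert_self d D'
    have ih' := ih (fun x hx => hDU x (hmem x hx))
      (fun x hx w hw hwD => hDnb x (hmem x hx) w hw (hmem w hwD))
      (fun x hx => hcut x (hmem x hx)) (fun x hx => hex x (hmem x hx))
    have hstep := step_lemma U (U \ ↑D') Set.diff_subset hUconn d
      ⟨hDU d hdmem, fun hdD' => hd (by simpa using hdD')⟩
      (hcut d hdmem) (hex d hdmem)
      (fun w hw hwU => ⟨hwU, fun hwD' => hDnb d hdmem w hw (hmem w hwD')⟩)
    rw [hsetid, Finset.card_insert_of_notMem hd]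
    omega

lemma comps_le_lemma (A : Set V) (P : Finset (V × V))
    (hPadj : ∀ p ∈ P, G.Adj p.1 p.2)
    (hreach : ∀ v : ↥A, ∃ (w : ↥A) (p : V × V), p ∈ P ∧ (w.1 = p.1 ∨ w.1 = p.2) ∧
      (G.induce A).Reachable v w) :
    Nat.card (G.induce A).ConnectedComponent ≤ P.card := by
  classical
  have hkey : ∀ c : (G.induce A).ConnectedComponent, ∃ (p : ↥P) (w : ↥A),
      (w.1 = p.1.1 ∨ w.1 = p.1.2) ∧ (G.induce A).connectedComponentMk w = c := by
    intro c
    obtain ⟨v, hv⟩ := c.exists_rep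
    obtain ⟨w, p, hpP, hwp, hr⟩ := hreach v
    exact ⟨⟨p, hpP⟩, w, hwp, by rw [← hv]; exact ConnectedComponent.sound hr.symm⟩
  choose ψ w hw1 hw2 using hkey
  have hinj : Function.Injective ψ := by
    intro c1 c2 heq
    have hr : (G.induce A).Reachable (w c1) (w c2) := by
      by_cases hww : (w c1).1 = (w c2).1
      · rw [show w c1 = w c2 from Subtype.ext hww]
      · have hadj : G.Adj (w c1).1 (w c2).1 := by
          have hp : G.Adj (ψ c1).1.1 (ψ c1).1.2 := hPadj _ (ψ c1).2
          have h2' := hw1 c2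
          rw [← heq] at h2'
          rcases hw1 c1 with h1 | h1 <;> rcases h2' with h2 | h2
          · exact absurd (h1.trans h2.symm) hww
          · rw [h1, h2]; exact hp
          · rw [h1, h2]; exact hp.symm
          · exact absurd (h1.trans h2.symm) hww
        exact (by simpa using hadj : (G.induce A).Adj (w c1) (w c2)).reachable
    rw [← hw2 c1, ← hw2 c2, ConnectedComponent.sound hr]
  calc Nat.card (G.induce A).ConnectedComponent ≤ Nat.card ↥P :=
        Nat.card_le_card_of_injective ψ hinj
    _ = P.card := Nat.card_eq_finsetCard P





lemma exists_max_matching (G : SimpleGraph V) :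
    ∃ P : Finset (V × V), (∀ p ∈ P, G.Adj p.1 p.2) ∧
      (∀ p ∈ P, ∀ q ∈ P, (p.1 = q.1 ∨ p.1 = q.2 ∨ p.2 = q.1 ∨ p.2 = q.2) → p = q) ∧
      (∀ Q : Finset (V × V), (∀ p ∈ Q, G.Adj p.1 p.2) →
        (∀ p ∈ Q, ∀ q ∈ Q, (p.1 = q.1 ∨ p.1 = q.2 ∨ p.2 = q.1 ∨ p.2 = q.2) → p = q) →
        Q.card ≤ P.card) := by
  classical
  obtain ⟨P, hPmem, hPmax⟩ := Finset.exists_max_image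
    (Finset.univ.filter fun Q : Finset (V × V) =>
      (∀ p ∈ Q, G.Adj p.1 p.2) ∧
      (∀ p ∈ Q, ∀ q ∈ Q, (p.1 = q.1 ∨ p.1 = q.2 ∨ p.2 = q.1 ∨ p.2 = q.2) → p = q))
    Finset.card ⟨∅, by simp⟩
  simp only [Finset.mem_filter, Finset.mem_univ, true_and] at hPmem
  refine ⟨P, hPmem.1, hPmem.2, fun Q h1 h2 => ?_⟩
  exact hPmax Q (by simp only [Finset.mem_filter, Finset.mem_univ, true_and]; exact ⟨h1, h2⟩)

/-- the maximality consequence: every edge touches the matched vertex set -/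
lemma matching_saturates (G : SimpleGraph V) (P : Finset (V × V))
    (hPadj : ∀ p ∈ P, G.Adj p.1 p.2)
    (hPdisj : ∀ p ∈ P, ∀ q ∈ P, (p.1 = q.1 ∨ p.1 = q.2 ∨ p.2 = q.1 ∨ p.2 = q.2) → p = q)
    (hPmax : ∀ Q : Finset (V × V), (∀ p ∈ Q, G.Adj p.1 p.2) →
      (∀ p ∈ Q, ∀ q ∈ Q, (p.1 = q.1 ∨ p.1 = q.2 ∨ p.2 = q.1 ∨ p.2 = q.2) → p = q) →
      Q.card ≤ P.card)
    {x y : V} (hxy : G.Adj x y)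
    (hx : ∀ p ∈ P, x ≠ p.1 ∧ x ≠ p.2) (hy : ∀ p ∈ P, y ≠ p.1 ∧ y ≠ p.2) : False := by
  classical
  have hxyP : (x, y) ∉ P := by
    intro h
    exact (hx _ h).1 rfl
  have h1 : ∀ p ∈ insert (x, y) P, G.Adj p.1 p.2 := by
    intro p hp
    rcases Finset.mem_insert.mp hp with h | h
    · rw [h]; exact hxy
    · exact hPadj p h
  have h2 : ∀ p ∈ insert (x, y) P, ∀ q ∈ insert (x, y) P,
      (p.1 = q.1 ∨ p.1 = q.2 ∨ p.2 = q.1 ∨ p.2 = q.2) → p = q := by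
    intro p hp q hq htouch
    rcases Finset.mem_insert.mp hp with hp' | hp' <;>
      rcases Finset.mem_insert.mp hq with hq' | hq'
    · rw [hp', hq']
    · exfalso
      subst hp'
      rcases htouch with h | h | h | h
      · exact (hx q hq').1 h
      · exact (hx q hq').2 h
      · exact (hy q hq').1 h
      · exact (hy q hq').2 h
    · exfalso
      subst hq'
      rcases htouch with h | h | h | h
      · exact (hx p hp').1 h.symm
      · exact (hy p hp').1 h.symm
      · exact (hx p hp').2 h.symm
      · exact (hy p hp').2 h.symm
    · exact hPdisj p hp' q hq' htouch
  have := hPmax _ h1 h2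
  rw [Finset.card_insert_of_notMem hxyP] at this
  omega

end Helpers

theorem stmt4 {V : Type*} [Fintype V] (G : SimpleGraph V) :
    ({U : Set V | IsMinCVC G U}.ncard : ℝ) ≤ 1.8668 ^ (Fintype.card V) := by
  classical
  obtain ⟨P, hPadj, hPdisj, hPmax⟩ := exists_max_matching G
  set VM : Finset V := P.biUnion (fun p => {p.1, p.2}) with hVMdef
  have hVMmem : ∀ v, v ∈ VM ↔ ∃ p ∈ P, v = p.1 ∨ v = p.2 := by
    intro v
    simp [hVMdef, Finset.mem_biUnion]
  have hedge : ∀ x y, G.Adj x y → x ∈ VM ∨ y ∈ VM := by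
    intro x y hxy
    by_contra hc
    push_neg at hc
    refine matching_saturates G P hPadj hPdisj hPmax hxy ?_ ?_
    · intro p hp
      constructor
      · intro h; exact hc.1 ((hVMmem x).mpr ⟨p, hp, Or.inl h⟩)
      · intro h; exact hc.1 ((hVMmem x).mpr ⟨p, hp, Or.inr h⟩)
    · intro p hp
      constructor
      · intro h; exact hc.2 ((hVMmem y).mpr ⟨p, hp, Or.inl h⟩)
      · intro h; exact hc.2 ((hVMmem y).mpr ⟨p, hp, Or.inr h⟩)
  by_cases hP0 : P = ∅
  · -- G is edgeless : minimal CVCs are singletons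
    have hnoadj : ∀ x y : V, ¬ G.Adj x y := by
      intro x y h
      rcases hedge x y h with h' | h' <;> rw [hVMmem] at h' <;>
        · obtain ⟨p, hp, _⟩ := h'
          rw [hP0] at hp
          exact absurd hp (Finset.notMem_empty p)
    have hsing : ∀ U : Set V, IsMinCVC G U → ∃ u, u ∈ U ∧ U = {u} := by
      intro U hU
      have hconn := hU.1.2
      obtain ⟨u⟩ := hconn.nonempty
      refine ⟨u.1, u.2, ?_⟩
      ext v
      constructor
      · intro hv
        have heq := eq_of_reachable_edgeless hnoadj (hconn.preconnected ⟨v, hv⟩ u)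
        simpa using congrArg Subtype.val heq
      · intro hv
        rw [Set.mem_singleton_iff] at hv
        rw [hv]
        exact u.2
    have hinj : Function.Injective
        (fun U : ↥{U : Set V | IsMinCVC G U} => (hsing U.1 U.2).choose) := by
      intro U1 U2 heq
      have h1 := (hsing U1.1 U1.2).choose_spec
      have h2 := (hsing U2.1 U2.2).choose_spec
      have heq' : (hsing U1.1 U1.2).choose = (hsing U2.1 U2.2).choose := heq
      apply Subtype.ext
      rw [h1.2, h2.2, heq']
    have hle : Nat.card ↥{U : Set V | IsMinCVC G U} ≤ Fintype.card V := by
      have := Nat.card_le_card_of_injective _ hinj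
      rwa [Nat.card_eq_fintype_card (α := V)] at this
    rw [← Nat.card_coe_set_eq]
    calc (Nat.card ↥{U : Set V | IsMinCVC G U} : ℝ)
        ≤ (Fintype.card V : ℝ) := by exact_mod_cast hle
      _ ≤ 1.8668 ^ (Fintype.card V) := nat_le_pow _
  · -- main case : the matching is nonempty
    have hm1 : 1 ≤ P.card := Finset.card_pos.mpr (Finset.nonempty_iff_ne_empty.mpr hP0)
    set S : Finset V := VMᶜ with hSdef
    have hS : ∀ v, v ∈ S ↔ v ∉ VM := by
      intro v; rw [hSdef, Finset.mem_compl]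
    have hSadj : ∀ v w, v ∈ S → G.Adj v w → w ∈ VM := by
      intro v w hv h
      rcases hedge v w h with h' | h'
      · exact absurd h' ((hS v).mp hv)
      · exact h'
    set Dof : Set V → Finset V :=
      fun U => S.filter (fun v => v ∈ U ∧ ∀ w, G.Adj v w → w ∈ U) with hDof
    -- (A) cardinality bound on Dof U
    have keyA : ∀ U : Set V, IsMinCVC G U → (Dof U).card + 1 ≤ P.card := by
      intro U hU
      obtain ⟨⟨hcov, hconn⟩, hmin⟩ := hU
      obtain ⟨p0, hp0⟩ := Finset.nonempty_iff_ne_empty.mpr hP0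
      have hadj0 := hPadj p0 hp0
      have hu0 : ∃ u0, u0 ∈ U ∧ u0 ∈ VM := by
        rcases hcov hadj0 with h | h
        · exact ⟨p0.1, h, (hVMmem _).mpr ⟨p0, hp0, Or.inl rfl⟩⟩
        · exact ⟨p0.2, h, (hVMmem _).mpr ⟨p0, hp0, Or.inr rfl⟩⟩
      obtain ⟨u0, hu0U, hu0VM⟩ := hu0
      have hSnb : ∀ v, v ∈ U → v ∈ S → ∃ w, w ∈ U ∧ G.Adj v w := by
        intro v hvU hvS
        have hne : v ≠ u0 := by
          intro h; rw [h] at hvS; exact ((hS u0).mp hvS) hu0VM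
        exact exists_adj_of_connected hconn hvU hu0U hne
      have hDU : ∀ d ∈ Dof U, d ∈ U := by
        intro d hd; rw [hDof] at hd; exact (Finset.mem_filter.mp hd).2.1
      have hDS : ∀ d ∈ Dof U, d ∈ S := by
        intro d hd; rw [hDof] at hd; exact (Finset.mem_filter.mp hd).1
      have hDall : ∀ d ∈ Dof U, ∀ w, G.Adj d w → w ∈ U := by
        intro d hd; rw [hDof] at hd; exact (Finset.mem_filter.mp hd).2.2
      have hDnb : ∀ d ∈ Dof U, ∀ w, G.Adj d w → w ∉ Dof U := by
        intro d hd w hw hwD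
        exact (hS w).mp (hDS w hwD) (hSadj d w (hDS d hd) hw)
      have hcut : ∀ d ∈ Dof U, ¬ (G.induce (U \ {d})).Connected := by
        intro d hd hconn'
        have hdU := hDU d hd
        have hdall := hDall d hd
        have hssub : U \ {d} ⊂ U := by
          constructor
          · exact Set.diff_subset
          · intro hsub
            exact (hsub hdU).2 rfl
        refine hmin _ hssub ⟨?_, hconn'⟩
        intro a b hab
        rcases hcov hab with h | h
        · by_cases had : a = d
          · subst had
            exact Or.inr ⟨hdall b hab, (hab.ne).symm⟩
          · exact Or.inl ⟨h, had⟩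
        · by_cases hbd : b = d
          · subst hbd
            exact Or.inl ⟨hdall a hab.symm, hab.ne⟩
          · exact Or.inr ⟨h, hbd⟩
      have hex : ∀ d ∈ Dof U, ∃ w, w ∈ U ∧ G.Adj d w :=
        fun d hd => hSnb d (hDU d hd) (hDS d hd)
      have hchain := chain_lemma U hconn (Dof U) hDU hDnb hcut hex
      have hreach : ∀ v : ↥(U \ ↑(Dof U)), ∃ (w : ↥(U \ ↑(Dof U))) (p : V × V),
          p ∈ P ∧ (w.1 = p.1 ∨ w.1 = p.2) ∧
          (G.induce (U \ ↑(Dof U))).Reachable v w := by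
        intro v
        by_cases hvVM : v.1 ∈ VM
        · obtain ⟨p, hp, hvp⟩ := (hVMmem v.1).mp hvVM
          exact ⟨v, p, hp, hvp, Reachable.refl v⟩
        · have hvS : v.1 ∈ S := (hS v.1).mpr hvVM
          obtain ⟨w, hwU, hw⟩ := hSnb v.1 v.2.1 hvS
          have hwVM : w ∈ VM := hSadj v.1 w hvS hw
          have hwD : w ∉ Dof U := fun h => (hS w).mp (hDS w h) hwVM
          have hwmem : w ∈ U \ ↑(Dof U) := ⟨hwU, by simpa using hwD⟩
          obtain ⟨p, hp, hwp⟩ := (hVMmem w).mp hwVM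
          refine ⟨⟨w, hwmem⟩, p, hp, hwp, ?_⟩
          exact (by simpa using hw : (G.induce (U \ ↑(Dof U))).Adj v ⟨w, hwmem⟩).reachable
      have hcomps := comps_le_lemma (U \ ↑(Dof U)) P hPadj hreach
      omega
    -- the target of the injection
    set F : Finset (Finset V) := S.powerset.filter (fun D => D.card + 1 ≤ P.card) with hF
    have hDmemF : ∀ U : Set V, IsMinCVC G U → Dof U ∈ F := by
      intro U hU
      rw [hF, Finset.mem_filter, Finset.mem_powerset]
      constructor
      · rw [hDof]; exact Finset.filter_subset _ _
      · exact keyA U hU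
    set Φ : ↥{U : Set V | IsMinCVC G U} → (↥P → Fin 3) × ↥F := fun U =>
      (fun p => if p.1.1 ∈ U.1 then (if p.1.2 ∈ U.1 then 0 else 2) else 1,
       ⟨Dof U.1, hDmemF U.1 U.2⟩) with hΦ
    -- code lemma for recovering matched vertices
    have code : ∀ (W : Set V), _root_.IsVertexCover G W → ∀ p ∈ P,
        (((if p.1 ∈ W then (if p.2 ∈ W then (0:Fin 3) else 2) else 1) ≠ 1) ↔ p.1 ∈ W) ∧
        (((if p.1 ∈ W then (if p.2 ∈ W then (0:Fin 3) else 2) else 1) ≠ 2) ↔ p.2 ∈ W) := by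
      intro W hcov p hp
      have hc : p.1 ∈ W ∨ p.2 ∈ W := hcov (hPadj p hp)
      by_cases a : p.1 ∈ W <;> by_cases b : p.2 ∈ W <;>
        simp only [a, b, if_true, if_false, iff_true, iff_false, not_not] <;>
        first
          | decide
          | tauto
    have hΦinj : Function.Injective Φ := by
      intro U1 U2 heq
      have hU1 : IsMinCVC G U1.1 := U1.2
      have hU2 : IsMinCVC G U2.1 := U2.2
      have hcov1 : _root_.IsVertexCover G U1.1 := hU1.1.1
      have hcov2 : _root_.IsVertexCover G U2.1 := hU2.1.1
      have hfeq : ∀ p : ↥P,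
          (if p.1.1 ∈ U1.1 then (if p.1.2 ∈ U1.1 then (0:Fin 3) else 2) else 1) =
          (if p.1.1 ∈ U2.1 then (if p.1.2 ∈ U2.1 then (0:Fin 3) else 2) else 1) := by
        intro p
        have := congrFun (congrArg Prod.fst heq) p
        simpa [hΦ] using this
      have hDeq : Dof U1.1 = Dof U2.1 := by
        have := congrArg (fun z => (Prod.snd z).val) heq
        simpa [hΦ] using this
      have hVMiff : ∀ v, v ∈ VM → (v ∈ U1.1 ↔ v ∈ U2.1) := by
        intro v hv
        obtain ⟨p, hp, hvp⟩ := (hVMmem v).mp hv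
        have hc1 := code U1.1 hcov1 p hp
        have hc2 := code U2.1 hcov2 p hp
        have hpe := hfeq ⟨p, hp⟩
        simp only at hpe
        rcases hvp with h | h
        · rw [h, ← hc1.1, ← hc2.1, hpe]
        · rw [h, ← hc1.2, ← hc2.2, hpe]
      have hSiff : ∀ v, v ∉ VM → (v ∈ U1.1 ↔ v ∈ U2.1) := by
        intro v hvVM
        have hvS : v ∈ S := (hS v).mpr hvVM
        have char : ∀ (W : Set V), IsMinCVC G W →
            (v ∈ W ↔ v ∈ Dof W ∨ ∃ w, G.Adj v w ∧ w ∉ W) := by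
          intro W hW
          constructor
          · intro hvW
            by_cases hall : ∀ w, G.Adj v w → w ∈ W
            · left
              rw [hDof]
              exact Finset.mem_filter.mpr ⟨hvS, hvW, hall⟩
            · right
              push_neg at hall
              exact hall
          · intro h
            rcases h with h | ⟨w, hadj, hwW⟩
            · rw [hDof] at h
              exact (Finset.mem_filter.mp h).2.1
            · rcases hW.1.1 hadj with h' | h'
              · exact h'
              · exact absurd h' hwW
        rw [char _ hU1, char _ hU2, hDeq]
        constructor
        · rintro (h | ⟨w, h1, h2⟩)
          · exact Or.inl h
          · exact Or.inr ⟨w, h1, fun hw2 =>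
              h2 ((hVMiff w (hSadj v w hvS h1)).mpr hw2)⟩
        · rintro (h | ⟨w, h1, h2⟩)
          · exact Or.inl h
          · exact Or.inr ⟨w, h1, fun hw1 =>
              h2 ((hVMiff w (hSadj v w hvS h1)).mp hw1)⟩
      apply Subtype.ext
      ext v
      by_cases hv : v ∈ VM
      · exact hVMiff v hv
      · exact hSiff v hv
    -- counting
    have hcount : Nat.card ↥{U : Set V | IsMinCVC G U} ≤ 3 ^ P.card * F.card := by
      have h1 := Nat.card_le_card_of_injective Φ hΦinj
      rw [Nat.card_prod] at h1
      have e1 : Nat.card (↥P → Fin 3) = 3 ^ P.card := by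
        rw [Nat.card_eq_fintype_card, Fintype.card_fun]
        simp
      have e2 : Nat.card ↥F = F.card := Nat.card_eq_finsetCard F
      rwa [e1, e2] at h1
    have hFle : F.card ≤ ∑ k ∈ Finset.range P.card, (S.card).choose k := by
      have hsub : F ⊆ (Finset.range P.card).biUnion (fun k => Finset.powersetCard k S) := by
        intro D hD
        rw [hF, Finset.mem_filter, Finset.mem_powerset] at hD
        rw [Finset.mem_biUnion]
        exact ⟨D.card, Finset.mem_range.mpr (by omega),
          Finset.mem_powersetCard.mpr ⟨hD.1, rfl⟩⟩
      calc F.card ≤ _ := Finset.card_le_card hsub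
        _ ≤ ∑ k ∈ Finset.range P.card, (Finset.powersetCard k S).card :=
            Finset.card_biUnion_le
        _ = ∑ k ∈ Finset.range P.card, (S.card).choose k := by
            simp [Finset.card_powersetCard]
    have hVMcard : VM.card = 2 * P.card := by
      rw [hVMdef]
      rw [Finset.card_biUnion]
      · rw [Finset.sum_congr rfl (fun p hp => Finset.card_pair (hPadj p hp).ne)]
        simp [mul_comm]
      · intro p hp q hq hne
        rw [Function.onFun, Finset.disjoint_left]
        intro a hap haq
        apply hne
        apply hPdisj p hp q hq
        simp only [Finset.mem_insert, Finset.mem_singleton] at hap haq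
        rcases hap with h1 | h1 <;> rcases haq with h2 | h2
        · exact Or.inl (h1 ▸ h2 ▸ rfl)
        · exact Or.inr (Or.inl (h1 ▸ h2 ▸ rfl))
        · exact Or.inr (Or.inr (Or.inl (h1 ▸ h2 ▸ rfl)))
        · exact Or.inr (Or.inr (Or.inr (h1 ▸ h2 ▸ rfl)))
    have hncard : Fintype.card V = 2 * P.card + S.card := by
      have h1 : S.card = Fintype.card V - VM.card := by
        rw [hSdef, Finset.card_compl]
      have h2 : VM.card ≤ Fintype.card V := by
        rw [← Finset.card_univ]
        exact Finset.card_le_univ VM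
      omega
    rw [← Nat.card_coe_set_eq]
    calc (Nat.card ↥{U : Set V | IsMinCVC G U} : ℝ)
        ≤ ((3 ^ P.card * F.card : ℕ) : ℝ) := by exact_mod_cast hcount
      _ ≤ (3:ℝ) ^ P.card * ∑ k ∈ Finset.range P.card, ((S.card).choose k : ℝ) := by
          push_cast
          have h3 : (0:ℝ) ≤ (3:ℝ) ^ P.card := by positivity
          have := (Nat.cast_le (α := ℝ)).mpr hFle
          push_cast at this
          nlinarith
      _ ≤ 1.8668 ^ (2 * P.card + S.card) := real_bound P.card S.card hm1
      _ = 1.8668 ^ Fintype.card V := by rw [← hncard]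
end

section
/- Every chordal finite simple graph G on n vertices has at most 3^(n/3) minimal connected vertex covers. -/
/-- `G` has an induced cycle of length `n`. -/
def HasInducedCycle {V : Type*} (G : SimpleGraph V) (n : ℕ) : Prop :=
  3 ≤ n ∧ ∃ f : ZMod n → V, Function.Injective f ∧
    ∀ i j : ZMod n, G.Adj (f i) (f j) ↔ (j = i + 1 ∨ i = j + 1)

/-- `G` is chordal: it has no induced cycle of length at least `4`. -/
def IsChordal {V : Type*} (G : SimpleGraph V) : Prop :=
  ∀ n : ℕ, 4 ≤ n → ¬ HasInducedCycle G n

namespace CVCProof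

open SimpleGraph Finset

set_option linter.unusedSectionVars false

lemma cube_le_three_pow : ∀ k : ℕ, k ^ 3 ≤ 3 ^ k := by
  intro k
  induction k using Nat.strong_induction_on with
  | _ k IH =>
    match k, IH with
    | 0, _ => decide
    | 1, _ => decide
    | 2, _ => decide
    | 3, _ => decide
    | (m+4), IH =>
      have h1 : (m+3) ^ 3 ≤ 3 ^ (m+3) := IH (m+3) (by omega)
      have h2 : (m+4) ^ 3 ≤ 3 * (m+3) ^ 3 := by
        have : (m+4)^3 + (2*m^3+15*m^2+33*m+17) = 3*(m+3)^3 := by ring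
        omega
      calc (m+4) ^ 3 ≤ 3 * (m+3) ^ 3 := h2
        _ ≤ 3 * 3 ^ (m+3) := by omega
        _ = 3 ^ (m+4) := by ring

section MoonMoser

variable {V : Type*} [DecidableEq V]

/-- `S` is a maximal independent set within `W` for graph `G`. -/
def IsMisOn (G : SimpleGraph V) (W S : Finset V) : Prop :=
  S ⊆ W ∧ (∀ a ∈ S, ∀ b ∈ S, ¬ G.Adj a b) ∧ ∀ x ∈ W, x ∉ S → ∃ y ∈ S, G.Adj x y

open Classical in
noncomputable def misFinset (G : SimpleGraph V) (W : Finset V) : Finset (Finset V) :=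
  W.powerset.filter (fun S => IsMisOn G W S)

lemma mem_misFinset {G : SimpleGraph V} {W S : Finset V} :
    S ∈ misFinset G W ↔ IsMisOn G W S := by
  classical
  simp only [misFinset, mem_filter, mem_powerset]
  constructor
  · rintro ⟨-, h⟩; exact h
  · intro h; exact ⟨h.1, h⟩

theorem moon_moser (G : SimpleGraph V) :
    ∀ (n : ℕ) (W : Finset V), W.card = n → (misFinset G W).card ^ 3 ≤ 3 ^ n := by
  intro n
  induction n using Nat.strong_induction_on with
  | _ n IH =>
    classical
    intro W hW
    rcases W.eq_empty_or_nonempty with rfl | ⟨v0, hv0⟩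
    · have : misFinset G ∅ = {∅} := by
        ext S
        rw [mem_misFinset]
        simp only [mem_singleton]
        constructor
        · rintro ⟨hs, -, -⟩; exact subset_empty.mp hs
        · rintro rfl
          exact ⟨le_refl _, by simp, by simp⟩
      rw [this]
      simp only [card_empty] at hW
      subst hW
      norm_num
    obtain ⟨v, hvW, hvmin⟩ := W.exists_min_image
      (fun x => (W.filter (fun y => G.Adj x y)).card) ⟨v0, hv0⟩
    set degW : V → ℕ := fun x => (W.filter (fun y => G.Adj x y)).card with hdegW
    set d : ℕ := degW v with hd
    set Nv : Finset V := W.filter (fun u => u = v ∨ G.Adj v u) with hNv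
    set A : V → Finset V := fun u => W.filter (fun x => ¬(x = u ∨ G.Adj u x)) with hA
    have hNvW : Nv ⊆ W := filter_subset _ _
    have hNvcard : Nv.card = d + 1 := by
      have : Nv = insert v (W.filter (fun u => G.Adj v u)) := by
        ext x
        simp only [hNv, mem_filter, mem_insert]
        constructor
        · rintro ⟨hx, rfl | h⟩
          · exact Or.inl rfl
          · exact Or.inr ⟨hx, h⟩
        · rintro (rfl | ⟨hx, h⟩)
          · exact ⟨hvW, Or.inl rfl⟩
          · exact ⟨hx, Or.inr h⟩
      rw [this, card_insert_of_notMem (by simp [G.irrefl])]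
    have hAcard : ∀ u ∈ Nv, (A u).card + 1 + degW u = W.card := by
      intro u hu
      have huW : u ∈ W := hNvW hu
      have hsplit : W.filter (fun x => (x = u ∨ G.Adj u x)) =
          insert u (W.filter (fun x => G.Adj u x)) := by
        ext x
        simp only [mem_filter, mem_insert]
        constructor
        · rintro ⟨hx, rfl | h⟩
          · exact Or.inl rfl
          · exact Or.inr ⟨hx, h⟩
        · rintro (rfl | ⟨hx, h⟩)
          · exact ⟨huW, Or.inl rfl⟩
          · exact ⟨hx, Or.inr h⟩
      have h2 := W.card_filter_add_card_filter_not
        (p := fun x => (x = u ∨ G.Adj u x))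
      rw [hsplit, card_insert_of_notMem (by simp [G.irrefl])] at h2
      simp only [hA, hdegW]
      omega
    have hcover : misFinset G W ⊆
        Nv.biUnion (fun u => (misFinset G (A u)).image (insert u)) := by
      intro S hS
      rw [mem_misFinset] at hS
      obtain ⟨hSW, hind, hmax⟩ := hS
      have : ∃ u ∈ S, u ∈ Nv := by
        by_contra hc
        push_neg at hc
        have hvS : v ∉ S := fun h => hc v h (by simp [hNv, hvW])
        obtain ⟨y, hyS, hy⟩ := hmax v hvW hvS
        exact hc y hyS (mem_filter.mpr ⟨hSW hyS, Or.inr hy⟩)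
      obtain ⟨u, huS, huNv⟩ := this
      rw [mem_biUnion]
      refine ⟨u, huNv, ?_⟩
      rw [mem_image]
      refine ⟨S.erase u, ?_, by rw [insert_erase huS]⟩
      rw [mem_misFinset]
      refine ⟨?_, ?_, ?_⟩
      · intro x hx
        rw [mem_erase] at hx
        simp only [hA, mem_filter]
        exact ⟨hSW hx.2, by push_neg; exact ⟨hx.1, hind u huS x hx.2⟩⟩
      · intro a ha b hb
        exact hind a (erase_subset _ _ ha) b (erase_subset _ _ hb)
      · intro x hx hxe
        simp only [hA, mem_filter] at hx
        push_neg at hx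
        obtain ⟨hxW, hxu, hxadj⟩ := hx
        have hxS : x ∉ S := by
          intro h
          exact hxe (mem_erase.mpr ⟨hxu, h⟩)
        obtain ⟨y, hyS, hy⟩ := hmax x hxW hxS
        refine ⟨y, mem_erase.mpr ⟨?_, hyS⟩, hy⟩
        rintro rfl
        exact hxadj hy.symm
    have hsum : (misFinset G W).card ≤
        ∑ u ∈ Nv, ((misFinset G (A u)).image (insert u)).card :=
      le_trans (card_le_card hcover) (card_biUnion_le)
    set M : ℕ := Nv.sup (fun u => (misFinset G (A u)).card) with hM
    have hcard1 : (misFinset G W).card ≤ Nv.card * M := by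
      refine le_trans hsum ?_
      calc ∑ u ∈ Nv, ((misFinset G (A u)).image (insert u)).card
          ≤ ∑ u ∈ Nv, (misFinset G (A u)).card := by
            exact sum_le_sum (fun u _ => card_image_le)
        _ ≤ Nv.card * M := by
            rw [← smul_eq_mul]
            exact sum_le_card_nsmul _ _ _
              (fun u hu => le_sup (f := fun u => (misFinset G (A u)).card) hu)
    have hNvne : Nv.Nonempty := ⟨v, by simp [hNv, hvW]⟩
    obtain ⟨u0, hu0, hMu0⟩ := exists_mem_eq_sup Nv hNvne (fun u => (misFinset G (A u)).card)
    have hAlt : (A u0).card < n := by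
      have := hAcard u0 hu0
      omega
    have hdu0 : d ≤ degW u0 := hvmin u0 (hNvW hu0)
    have hAle : (A u0).card ≤ n - d - 1 := by
      have := hAcard u0 hu0
      omega
    have hdn : d + 1 ≤ n := by
      have := card_le_card hNvW
      omega
    have hM3 : M ^ 3 ≤ 3 ^ (n - d - 1) := by
      rw [hM, hMu0]
      calc (misFinset G (A u0)).card ^ 3 ≤ 3 ^ (A u0).card :=
            IH _ hAlt (A u0) rfl
        _ ≤ 3 ^ (n - d - 1) := Nat.pow_le_pow_right (by norm_num) hAle
    calc (misFinset G W).card ^ 3 ≤ (Nv.card * M) ^ 3 :=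
          Nat.pow_le_pow_left hcard1 3
      _ = (d+1) ^ 3 * M ^ 3 := by rw [hNvcard]; ring
      _ ≤ 3 ^ (d+1) * 3 ^ (n - d - 1) :=
          Nat.mul_le_mul (cube_le_three_pow (d+1)) hM3
      _ = 3 ^ n := by rw [← pow_add]; congr 1; omega

end MoonMoser

section WalkHelpers

variable {V : Type*} [DecidableEq V] {G : SimpleGraph V}

lemma takeUntil_start_length {a b : V} (p : G.Walk a b) (h : a ∈ p.support) :
    (p.takeUntil a h).length = 0 := by
  cases p with
  | nil => simp [Walk.takeUntil]
  | cons r q => simp [Walk.takeUntil]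

lemma takeUntil_cons_of_ne {a c b u : V} (r : G.Adj a c) (q : G.Walk c b)
    (h : u ∈ (Walk.cons r q).support) (hne : a ≠ u) :
    (Walk.cons r q).takeUntil u h =
      Walk.cons r (q.takeUntil u (by
        rw [Walk.support_cons] at h
        cases h with
        | head => exact absurd rfl hne
        | tail _ ht => exact ht)) := by
  simp only [Walk.takeUntil]
  rw [dif_neg hne]

lemma length_takeUntil_index {a b : V} (p : G.Walk a b) (hn : p.support.Nodup)
    {i : ℕ} (hi : i < p.support.length) {u : V} (hu : p.support.get ⟨i, hi⟩ = u)
    (h : u ∈ p.support) :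
    (p.takeUntil u h).length = i := by
  induction p generalizing i with
  | nil =>
    simp only [Walk.support_nil, List.length_singleton] at hi
    interval_cases i
    simp only [Walk.support_nil, List.get] at hu
    subst hu
    exact takeUntil_start_length _ _
  | @cons a c b r q ih =>
    match i, hi with
    | 0, hi =>
      simp only [Walk.support_cons, List.get] at hu
      subst hu
      exact takeUntil_start_length _ _
    | (i+1), hi =>
      have hi' : i < q.support.length := by simpa [Walk.support_cons] using hi
      have hu' : q.support.get ⟨i, hi'⟩ = u := by
        simpa [Walk.support_cons, List.get] using hu
      rw [Walk.support_cons] at hn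
      have hmem : u ∈ q.support := hu' ▸ List.get_mem _ _
      have hne : a ≠ u := by
        rintro rfl
        exact List.Nodup.notMem hn hmem
      rw [takeUntil_cons_of_ne r q h hne, Walk.length_cons, ih hn.of_cons hi' hu' hmem]

end WalkHelpers

section Cycle

variable {V : Type*} {G : SimpleGraph V}

lemma zmod_succ_iff {n : ℕ} [NeZero n] (h1 : 1 < n) (i j : ZMod n) :
    j = i + 1 ↔ j.val = (i.val + 1) % n := by
  constructor
  · rintro rfl
    rw [ZMod.val_add, ZMod.val_one_eq_one_mod, Nat.mod_eq_of_lt h1]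
  · intro h
    apply ZMod.val_injective
    rw [h, ZMod.val_add, ZMod.val_one_eq_one_mod, Nat.mod_eq_of_lt h1]

lemma no_induced_cycle_list (hG : IsChordal G)
    (q : List V) (w : V) (hq3 : 3 ≤ q.length) (hnd : q.Nodup) (hw : w ∉ q)
    (hcons : ∀ i (h : i + 1 < q.length), G.Adj (q.get ⟨i, by omega⟩) (q.get ⟨i+1, h⟩))
    (hchord : ∀ i j (hi : i < q.length) (hj : j < q.length), i + 2 ≤ j →
      ¬ G.Adj (q.get ⟨i, hi⟩) (q.get ⟨j, hj⟩))
    (hw0 : G.Adj w (q.get ⟨0, by omega⟩))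
    (hwl : G.Adj w (q.get ⟨q.length - 1, by omega⟩))
    (hwint : ∀ i (hi : i < q.length), 0 < i → i < q.length - 1 →
      ¬ G.Adj w (q.get ⟨i, hi⟩)) : False := by
  set m := q.length with hm
  haveI : NeZero (m + 1) := ⟨Nat.succ_ne_zero m⟩
  have h1m : 1 < m + 1 := by omega
  set f : ZMod (m+1) → V := fun i =>
    if h : i.val < m then q.get ⟨i.val, h⟩ else w with hf
  have hfval : ∀ i : ZMod (m+1), i.val < m + 1 := fun i => ZMod.val_lt i
  have hfq : ∀ (i : ZMod (m+1)) (h : i.val < m), f i = q.get ⟨i.val, h⟩ := by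
    intro i h; simp [hf, h]
  have hfw : ∀ (i : ZMod (m+1)), i.val = m → f i = w := by
    intro i h; simp [hf, h]
  have hlist : ∀ (a b : ℕ) (ha : a < m) (hb : b < m),
      G.Adj (q.get ⟨a, ha⟩) (q.get ⟨b, hb⟩) ↔ (b = a + 1 ∨ a = b + 1) := by
    intro a b ha hb
    constructor
    · intro hadj
      by_contra hc
      push_neg at hc
      rcases Nat.lt_trichotomy a b with h | h | h
      · exact hchord a b ha hb (by omega) hadj
      · subst h; exact G.irrefl hadj
      · exact hchord b a hb ha (by omega) hadj.symm
    · rintro (rfl | rfl)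
      · exact hcons a hb
      · exact (hcons b ha).symm
  have hwlist : ∀ (b : ℕ) (hb : b < m),
      G.Adj w (q.get ⟨b, hb⟩) ↔ (b = 0 ∨ b = m - 1) := by
    intro b hb
    constructor
    · intro hadj
      by_contra hc
      push_neg at hc
      exact hwint b hb (by omega) (by omega) hadj
    · rintro (rfl | rfl)
      · exact hw0
      · exact hwl
  apply hG (m+1) (by omega)
  refine ⟨by omega, f, ?_, ?_⟩
  · intro i j hij
    by_cases hi : i.val < m <;> by_cases hj : j.val < m
    · rw [hfq i hi, hfq j hj] at hij
      exact ZMod.val_injective _ (Fin.mk.injEq _ _ _ _ ▸ (List.Nodup.get_inj_iff hnd).mp hij)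
    · exact absurd ((hfq i hi ▸ hij ▸ hfw j (by have := hfval j; omega)) ▸
        List.get_mem _ _) hw
    · exact absurd ((hfq j hj ▸ hij ▸ hfw i (by have := hfval i; omega)) ▸
        List.get_mem _ _) hw
    · apply ZMod.val_injective
      have := hfval i; have := hfval j; omega
  · intro i j
    rw [zmod_succ_iff h1m, zmod_succ_iff h1m]
    by_cases hi : i.val < m <;> by_cases hj : j.val < m
    · have e1 : (i.val + 1) % (m+1) = i.val + 1 := Nat.mod_eq_of_lt (by omega)
      have e2 : (j.val + 1) % (m+1) = j.val + 1 := Nat.mod_eq_of_lt (by omega)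
      rw [hfq i hi, hfq j hj, hlist _ _ hi hj, e1, e2]
      all_goals omega
    · have hjm : j.val = m := by have := hfval j; omega
      have e1 : (i.val + 1) % (m+1) = i.val + 1 := Nat.mod_eq_of_lt (by omega)
      have e2 : (j.val + 1) % (m+1) = 0 := by rw [hjm]; exact Nat.mod_self _
      rw [hfq i hi, hfw j hjm, adj_comm, hwlist _ hi, e1, e2]
      all_goals omega
    · have him : i.val = m := by have := hfval i; omega
      have e1 : (i.val + 1) % (m+1) = 0 := by rw [him]; exact Nat.mod_self _
      have e2 : (j.val + 1) % (m+1) = j.val + 1 := Nat.mod_eq_of_lt (by omega)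
      rw [hfq j hj, hfw i him, hwlist _ hj, e1, e2]
      all_goals omega
    · have him : i.val = m := by have := hfval i; omega
      have hjm : j.val = m := by have := hfval j; omega
      have e1 : (i.val + 1) % (m+1) = 0 := by rw [him]; exact Nat.mod_self _
      have e2 : (j.val + 1) % (m+1) = 0 := by rw [hjm]; exact Nat.mod_self _
      rw [hfw i him, hfw j hjm, e1, e2]
      simp only [G.irrefl, false_iff]
      omega

end Cycle

section Structure

variable {V : Type*} {G : SimpleGraph V}

lemma reachable_induce_of_walk {s : Set V} :
    ∀ {a b : V} (p : G.Walk a b), (∀ v ∈ p.support, v ∈ s) →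
      ∀ (ha : a ∈ s) (hb : b ∈ s), (G.induce s).Reachable ⟨a, ha⟩ ⟨b, hb⟩ := by
  intro a b p
  induction p with
  | nil => intro _ ha hb; rfl
  | @cons a c b h q ih =>
    intro hsup ha hb
    have hc : c ∈ s := hsup c (by simp [Walk.support_cons])
    have h1 : (G.induce s).Adj ⟨a, ha⟩ ⟨c, hc⟩ := h
    exact h1.reachable.trans (ih (fun v hv => hsup v (by simp [Walk.support_cons, hv])) hc hb)

/-- The graph `G` with vertex `w` deleted (kept on the same vertex type). -/
def del (G : SimpleGraph V) (w : V) : SimpleGraph V where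
  Adj x y := G.Adj x y ∧ x ≠ w ∧ y ≠ w
  symm := ⟨by rintro x y ⟨h, hx, hy⟩; exact ⟨h.symm, hy, hx⟩⟩
  loopless := ⟨by rintro x ⟨h, _, _⟩; exact G.irrefl h⟩

/-- `w` is a cut point: it has two neighbors not connected when `w` is removed. -/
def IsCutPt (G : SimpleGraph V) (w : V) : Prop :=
  ∃ a b, G.Adj w a ∧ G.Adj w b ∧ ¬ (del G w).Reachable a b

lemma del_adj {G : SimpleGraph V} {w x y : V} :
    (del G w).Adj x y ↔ G.Adj x y ∧ x ≠ w ∧ y ≠ w := Iff.rfl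

lemma subL (hG : IsChordal G)
    {U : Set V} (hconn : (G.induce U).Connected)
    {u w x y : V} (hwU : w ∉ U) (hwu : ¬ G.Adj w u)
    (hxU : x ∈ U) (hyU : y ∈ U) (hwx : G.Adj w x) (hwy : G.Adj w y)
    (hxu : x ∈ U \ {u}) (hyu : y ∈ U \ {u}) :
    (G.induce (U \ {u})).Reachable ⟨x, hxu⟩ ⟨y, hyu⟩ := by
  classical
  by_contra hreach
  set RR : V → V → Prop := fun a b => ∀ (ha : a ∈ U \ {u}) (hb : b ∈ U \ {u}),
    ¬ (G.induce (U \ {u})).Reachable ⟨a, ha⟩ ⟨b, hb⟩ with hRRdef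
  set P : ℕ → Prop := fun n => ∃ x' y', G.Adj w x' ∧ G.Adj w y' ∧ x' ∈ U ∧ y' ∈ U ∧
    RR x' y' ∧ ∃ p : G.Walk x' y', p.IsPath ∧ (∀ v ∈ p.support, v ∈ U) ∧ p.length = n
    with hPdef
  have hPex : ∃ n, P n := by
    obtain ⟨pU⟩ := hconn.preconnected ⟨x, hxU⟩ ⟨y, hyU⟩
    set p0 := pU.map (SimpleGraph.Embedding.induce U).toHom with hp0
    refine ⟨p0.bypass.length, x, y, hwx, hwy, hxU, hyU, ?_, p0.bypass,
      p0.bypass_isPath, ?_, rfl⟩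
    · intro ha hb hr
      exact hreach hr
    · intro v hv
      have hv' := p0.support_bypass_subset hv
      rw [hp0, Walk.support_map] at hv'
      obtain ⟨⟨v', hv'U⟩, -, rfl⟩ := List.mem_map.mp hv'
      exact hv'U
  set n0 := Nat.find hPex with hn0def
  obtain ⟨x', y', hwx', hwy', hx'U, hy'U, hRR, p, hpath, hsupU, hplen⟩ := Nat.find_spec hPex
  rw [← hn0def] at hplen
  have hx'u : x' ≠ u := fun h => hwu (h ▸ hwx')
  have hy'u : y' ≠ u := fun h => hwu (h ▸ hwy')
  have hx'm : x' ∈ U \ {u} := ⟨hx'U, hx'u⟩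
  have hy'm : y' ∈ U \ {u} := ⟨hy'U, hy'u⟩
  have hn02 : 2 ≤ n0 := by
    by_contra hlt
    have : n0 = 0 ∨ n0 = 1 := by omega
    rcases this with h0 | h1
    · rw [h0] at hplen
      have hxy : x' = y' := Walk.eq_of_length_eq_zero hplen
      subst hxy
      exact hRR hx'm hx'm (Reachable.refl _)
    · rw [h1] at hplen
      have hadj0 : G.Adj x' y' := Walk.adj_of_length_eq_one hplen
      have hadj : (G.induce (U \ {u})).Adj ⟨x', hx'm⟩ ⟨y', hy'm⟩ := hadj0
      exact hRR hx'm hy'm hadj.reachable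
  set q := p.support with hq
  have hql : q.length = n0 + 1 := by rw [hq, Walk.length_support, hplen]
  have hnd : q.Nodup := hpath.support_nodup
  have hwq : w ∉ q := fun h => hwU (hsupU w h)
  have hget0 : q.get ⟨0, by omega⟩ = x' := by
    rw [List.get_of_eq (hq.trans p.support_eq_cons) ⟨0, by omega⟩]
    rfl
  have hgetlast : q.get ⟨q.length - 1, by omega⟩ = y' := by
    rw [List.get_eq_getElem, ← List.getLast_eq_getElem]
    exact p.getLast_support
  have hchord : ∀ i j (hi : i < q.length) (hj : j < q.length), i + 2 ≤ j →
      ¬ G.Adj (q.get ⟨i, hi⟩) (q.get ⟨j, hj⟩) := by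
    intro i j hi hj hij hadj
    have hv1m : q.get ⟨i, hi⟩ ∈ p.support := by rw [hq] at *; exact List.get_mem _ _
    have hv2m : q.get ⟨j, hj⟩ ∈ p.support := by rw [hq] at *; exact List.get_mem _ _
    have hlen1 : (p.takeUntil _ hv1m).length = i := length_takeUntil_index p hnd hi rfl _
    have hlen2 : (p.takeUntil _ hv2m).length = j := length_takeUntil_index p hnd hj rfl _
    have hsplit := congrArg Walk.length (p.take_spec hv2m)
    rw [Walk.length_append, hplen, hlen2] at hsplit
    set w' := (p.takeUntil _ hv1m).append (Walk.cons hadj (p.dropUntil _ hv2m)) with hw'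
    have hwlen : w'.length = i + (1 + (p.dropUntil _ hv2m).length) := by
      rw [hw', Walk.length_append, Walk.length_cons, hlen1]; omega
    have hltn : w'.bypass.length < n0 := by
      have := w'.length_bypass_le
      omega
    apply Nat.find_min hPex hltn
    refine ⟨x', y', hwx', hwy', hx'U, hy'U, hRR, w'.bypass, w'.bypass_isPath, ?_, rfl⟩
    intro v hv
    have hv2 := w'.support_bypass_subset hv
    rw [hw', Walk.mem_support_append_iff] at hv2
    rcases hv2 with h | h
    · exact hsupU v (p.support_takeUntil_subset _ h)
    · rw [Walk.support_cons] at h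
      rcases List.mem_cons.mp h with rfl | h
      · exact hsupU _ hv1m
      · exact hsupU v (p.support_dropUntil_subset _ h)
  have hwint : ∀ i (hi : i < q.length), 0 < i → i < q.length - 1 →
      ¬ G.Adj w (q.get ⟨i, hi⟩) := by
    intro t ht ht0 htl hadj
    set v := q.get ⟨t, ht⟩ with hv
    have hvm : v ∈ p.support := by rw [hv, hq] at *; exact List.get_mem _ _
    have hvU : v ∈ U := hsupU _ hvm
    have hvu : v ≠ u := fun h => hwu (h ▸ hadj)
    have hvmem : v ∈ U \ {u} := ⟨hvU, hvu⟩
    have hlent : (p.takeUntil _ hvm).length = t := length_takeUntil_index p hnd ht rfl _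
    have hsplit := congrArg Walk.length (p.take_spec hvm)
    rw [Walk.length_append, hplen, hlent] at hsplit
    by_cases hr1 : (G.induce (U \ {u})).Reachable ⟨x', hx'm⟩ ⟨v, hvmem⟩
    · by_cases hr2 : (G.induce (U \ {u})).Reachable ⟨v, hvmem⟩ ⟨y', hy'm⟩
      · exact hRR hx'm hy'm (hr1.trans hr2)
      · apply Nat.find_min hPex (show (p.dropUntil _ hvm).length < n0 by omega)
        exact ⟨v, y', hadj, hwy', hvU, hy'U, fun _ _ hr => hr2 hr, p.dropUntil _ hvm,
          hpath.dropUntil _, fun z hz => hsupU z (p.support_dropUntil_subset _ hz), rfl⟩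
    · apply Nat.find_min hPex (show (p.takeUntil _ hvm).length < n0 by omega)
      exact ⟨x', v, hwx', hadj, hx'U, hvU, fun _ _ hr => hr1 hr, p.takeUntil _ hvm,
        hpath.takeUntil _, fun z hz => hsupU z (p.support_takeUntil_subset _ hz), rfl⟩
  have hcons : ∀ i (h : i + 1 < q.length), G.Adj (q.get ⟨i, by omega⟩) (q.get ⟨i+1, h⟩) := by
    intro i h
    have := List.isChain_iff_getElem.mp p.isChain_adj_support i (by rw [hq] at *; omega)
    rw [hq] at *
    exact this
  exact no_induced_cycle_list hG q w (by omega) hnd hwq hcons hchord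
    (hget0 ▸ hwx') (hgetlast ▸ hwy') hwint

section ClaimM

variable (hG : IsChordal G)
  {U : Set V} (hVC : _root_.IsVertexCover G U) (hconn : (G.induce U).Connected)
  {u : V} (hN : ∀ z, G.Adj u z → z ∈ U)

include hG hVC hconn hN in
lemma claimM {y : V} (hy : y ∈ U) (hyu : y ≠ u) :
    ∀ (n : ℕ) {x : V} (hx : x ∈ U) (hxu : x ≠ u) (p : (del G u).Walk x y),
      p.length ≤ n → (G.induce (U \ {u})).Reachable ⟨x, ⟨hx, hxu⟩⟩ ⟨y, ⟨hy, hyu⟩⟩ := by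
  intro n
  induction n with
  | zero =>
    intro x hx hxu p hlen
    have hxy : x = y := Walk.eq_of_length_eq_zero (Nat.le_zero.mp hlen)
    subst hxy
    rfl
  | succ n IH =>
    intro x hx hxu p
    cases p with
    | nil => intro _; rfl
    | @cons _ z _ h p' =>
      intro hlen
      rw [Walk.length_cons] at hlen
      obtain ⟨hxz, -, hzu⟩ := h
      by_cases hzU : z ∈ U
      · have hstep : (G.induce (U \ {u})).Adj ⟨x, ⟨hx, hxu⟩⟩ ⟨z, ⟨hzU, hzu⟩⟩ := hxz
        exact hstep.reachable.trans (IH hzU hzu p' (by omega))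
      · cases p' with
        | nil => exact absurd hy hzU
        | @cons _ z' _ h2 p'' =>
          rw [Walk.length_cons] at hlen
          obtain ⟨hzz', -, hz'u⟩ := h2
          have hz'U : z' ∈ U := by
            rcases hVC hzz' with hh | hh
            · exact absurd hh hzU
            · exact hh
          have hzu' : ¬ G.Adj z u := fun hc => hzU (hN z hc.symm)
          have hr1 : (G.induce (U \ {u})).Reachable ⟨x, ⟨hx, hxu⟩⟩ ⟨z', ⟨hz'U, hz'u⟩⟩ :=
            subL hG hconn hzU hzu' hx hz'U hxz.symm hzz' ⟨hx, hxu⟩ ⟨hz'U, hz'u⟩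
          exact hr1.trans (IH hz'U hz'u p'' (by omega))

include hconn in
lemma reach_nbr (hu : u ∈ U) :
    ∀ (n : ℕ) (xs : ↥U) (hxu : xs.val ≠ u)
      (p : (G.induce U).Walk xs ⟨u, hu⟩), p.length ≤ n →
      ∃ a, ∃ (ha : a ∈ U) (hau : a ≠ u), G.Adj u a ∧
        (G.induce (U \ {u})).Reachable ⟨xs.val, ⟨xs.property, hxu⟩⟩ ⟨a, ⟨ha, hau⟩⟩ := by
  intro n
  induction n with
  | zero =>
    intro xs hxu p hlen
    have hxy := Walk.eq_of_length_eq_zero (Nat.le_zero.mp hlen)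
    rw [hxy] at hxu
    exact absurd rfl hxu
  | succ n IH =>
    intro xs hxu p
    cases p with
    | nil => exact fun _ => absurd rfl hxu
    | @cons _ z _ h p' =>
      intro hlen
      rw [Walk.length_cons] at hlen
      have hxz : G.Adj xs.val z.val := h
      by_cases hzu : z.val = u
      · refine ⟨xs.val, xs.property, hxu, ?_, Reachable.refl _⟩
        rw [← hzu]
        exact hxz.symm
      · obtain ⟨a, ha, hau, hadj, hr⟩ := IH z hzu p' (by omega)
        have hstep : (G.induce (U \ {u})).Adj ⟨xs.val, ⟨xs.property, hxu⟩⟩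
          ⟨z.val, ⟨z.property, hzu⟩⟩ := hxz
        exact ⟨a, ha, hau, hadj, hstep.reachable.trans hr⟩

end ClaimM

lemma compl_not_cut {U : Set V} (hVC : _root_.IsVertexCover G U) (hconn : (G.induce U).Connected)
    {w : V} (hwU : w ∉ U) : ¬ IsCutPt G w := by
  rintro ⟨a, b, hwa, hwb, hnr⟩
  have haU : a ∈ U := by
    rcases hVC hwa with h | h
    · exact absurd h hwU
    · exact h
  have hbU : b ∈ U := by
    rcases hVC hwb with h | h
    · exact absurd h hwU
    · exact h
  have hr := hconn.preconnected ⟨a, haU⟩ ⟨b, hbU⟩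
  have h2 : (del G w).Reachable a b :=
    hr.map ⟨Subtype.val, fun {x y} h => del_adj.mpr ⟨h,
      fun he => hwU (by rw [← he]; exact x.property),
      fun he => hwU (by rw [← he]; exact y.property)⟩⟩
  exact hnr h2

lemma exists_nbr_outside (hG : IsChordal G) {U : Set V} (hU : IsMinCVC G U)
    (hedge : ∃ a b, G.Adj a b) {u : V} (hu : u ∈ U) (hnocut : ¬ IsCutPt G u) :
    ∃ s, s ∉ U ∧ G.Adj u s := by
  by_contra hc
  push_neg at hc
  have hN : ∀ z, G.Adj u z → z ∈ U := fun z hz =>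
    by_contra fun hzU => hc z hzU hz
  obtain ⟨⟨hVC, hconn⟩, hminimal⟩ := hU
  have hex : ∃ x, x ∈ U ∧ x ≠ u := by
    obtain ⟨a, b, hab⟩ := hedge
    rcases hVC hab with h | h
    · by_cases hau : a = u
      · subst hau
        exact ⟨b, hN b hab, fun hbu => G.irrefl (hbu ▸ hab)⟩
      · exact ⟨a, h, hau⟩
    · by_cases hbu : b = u
      · subst hbu
        exact ⟨a, hN a hab.symm, fun hau => G.irrefl (hau ▸ hab.symm)⟩
      · exact ⟨b, h, hbu⟩
  obtain ⟨x0, hx0U, hx0u⟩ := hex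
  have hVC' : _root_.IsVertexCover G (U \ {u}) := by
    intro a b hab
    rcases hVC hab with h | h
    · by_cases hau : a = u
      · subst hau
        exact Or.inr ⟨hN b hab, fun hbu => G.irrefl ((Set.eq_of_mem_singleton hbu) ▸ hab)⟩
      · exact Or.inl ⟨h, hau⟩
    · by_cases hbu : b = u
      · subst hbu
        exact Or.inl ⟨hN a hab.symm, fun hau => G.irrefl ((Set.eq_of_mem_singleton hau) ▸ hab.symm)⟩
      · exact Or.inr ⟨h, hbu⟩
  have hssub : U \ {u} ⊂ U := Set.sdiff_singleton_ssubset.mpr hu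
  apply hminimal _ hssub
  haveI : Nonempty ↥(U \ {u}) := ⟨⟨x0, hx0U, hx0u⟩⟩
  refine ⟨hVC', ?_⟩
  constructor
  rintro ⟨a, haU, hau⟩ ⟨b, hbU, hbu⟩
  have hau' : a ≠ u := hau
  have hbu' : b ≠ u := hbu
  obtain ⟨pa⟩ := hconn.preconnected ⟨a, haU⟩ ⟨u, hu⟩
  obtain ⟨pb⟩ := hconn.preconnected ⟨b, hbU⟩ ⟨u, hu⟩
  obtain ⟨na, hnaU, hnau, hna, hra⟩ := reach_nbr hconn hu pa.length ⟨a, haU⟩ hau' pa le_rfl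
  obtain ⟨nb, hnbU, hnbu, hnb, hrb⟩ := reach_nbr hconn hu pb.length ⟨b, hbU⟩ hbu' pb le_rfl
  have hdel : (del G u).Reachable na nb := by
    by_contra hr
    exact hnocut ⟨na, nb, hna, hnb, hr⟩
  obtain ⟨pd⟩ := hdel
  have hmid := claimM hG hVC hconn hN hnbU hnbu pd.length hnaU hnau pd le_rfl
  exact (hra.trans hmid).trans hrb.symm

end Structure

end CVCProof

theorem stmt5 {V : Type*} [Fintype V] (G : SimpleGraph V) (hG : IsChordal G) :
    ({U : Set V | IsMinCVC G U}.ncard : ℝ) ≤ (3 : ℝ) ^ ((Fintype.card V : ℝ) / 3) := by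
  classical
  open CVCProof Finset SimpleGraph in
  set n := Fintype.card V with hn
  set mc := {U : Set V | IsMinCVC G U} with hmc
  have key : mc.ncard ^ 3 ≤ 3 ^ n := by
    by_cases hedge : ∃ a b, G.Adj a b
    · set W : Finset V := Finset.univ.filter (fun v => ¬ IsCutPt G v) with hW
      have hmem : ∀ U : Set V, IsMinCVC G U → IsMisOn G W (Set.toFinset Uᶜ) := by
        intro U hU
        obtain ⟨⟨hVC, hconn⟩, hminimal⟩ := hU
        refine ⟨?_, ?_, ?_⟩
        · intro s hs
          rw [Set.mem_toFinset] at hs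
          exact mem_filter.mpr ⟨mem_univ _, compl_not_cut hVC hconn hs⟩
        · intro a ha b hb hab
          rw [Set.mem_toFinset] at ha hb
          rcases hVC hab with h | h
          · exact ha h
          · exact hb h
        · intro x hxW hx
          rw [Set.mem_toFinset] at hx
          have hxU : x ∈ U := by
            by_contra h
            exact hx h
          have hxnc : ¬ IsCutPt G x := (mem_filter.mp hxW).2
          obtain ⟨s, hsU, hadj⟩ := exists_nbr_outside hG ⟨⟨hVC, hconn⟩, hminimal⟩
            hedge hxU hxnc
          exact ⟨s, Set.mem_toFinset.mpr hsU, hadj⟩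
      have hinj : Function.Injective
          (fun Us : mc => (⟨Set.toFinset (Us.valᶜ),
            mem_misFinset.mpr (hmem Us.val Us.property)⟩ :
            {S // S ∈ misFinset G W})) := by
        intro U1 U2 h
        simp only [Subtype.mk.injEq, Set.toFinset_inj] at h
        exact Subtype.ext (compl_injective h)
      have h1 : mc.ncard ≤ (misFinset G W).card := by
        have h2 := Nat.card_le_card_of_injective _ hinj
        rwa [Nat.card_coe_set_eq, Nat.card_eq_finsetCard] at h2
      have h2 := moon_moser G W.card W rfl
      have h3 : W.card ≤ n := by
        rw [hn]
        exact le_trans (card_filter_le _ _) (by simp)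
      calc mc.ncard ^ 3 ≤ (misFinset G W).card ^ 3 := Nat.pow_le_pow_left h1 3
        _ ≤ 3 ^ W.card := h2
        _ ≤ 3 ^ n := Nat.pow_le_pow_right (by norm_num) h3
    · push_neg at hedge
      have hsing : ∀ U, IsMinCVC G U → ∃ v : V, U = {v} := by
        intro U hU
        obtain ⟨⟨hVCU, hconnU⟩, hminU⟩ := hU
        obtain ⟨⟨v, hv⟩⟩ := hconnU.nonempty
        refine ⟨v, ?_⟩
        by_contra hUv
        have hsub : {v} ⊂ U := Set.ssubset_iff_subset_ne.mpr
          ⟨Set.singleton_subset_iff.mpr hv, fun h => hUv h.symm⟩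
        apply hminU _ hsub
        haveI : Nonempty ↥({v} : Set V) := ⟨⟨v, rfl⟩⟩
        refine ⟨fun a b hab => absurd hab (hedge a b), ?_⟩
        constructor
        intro xs ys
        have : xs = ys := Subtype.ext (xs.property.trans ys.property.symm)
        rw [this]
      have h1 : mc.ncard ≤ n := by
        have hinj : Function.Injective
            (fun Us : mc => Classical.choose (hsing Us.val Us.property)) := by
          intro U1 U2 h
          have e1 := Classical.choose_spec (hsing U1.val U1.property)
          have e2 := Classical.choose_spec (hsing U2.val U2.property)
          apply Subtype.ext
          rw [e1, e2]
          simp only at h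
          rw [h]
        have h2 := Nat.card_le_card_of_injective _ hinj
        rwa [Nat.card_coe_set_eq, Nat.card_eq_fintype_card] at h2
      calc mc.ncard ^ 3 ≤ n ^ 3 := Nat.pow_le_pow_left h1 3
        _ ≤ 3 ^ n := cube_le_three_pow n
  -- real arithmetic
  have h0 : (0:ℝ) ≤ (mc.ncard : ℝ) := Nat.cast_nonneg _
  have ha : (mc.ncard : ℝ) ^ (3:ℝ) ≤ (3:ℝ) ^ (n:ℝ) := by
    have h' : ((mc.ncard : ℝ)) ^ (3:ℕ) ≤ (3:ℝ) ^ (n:ℕ) := by exact_mod_cast key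
    have e1 : (mc.ncard : ℝ) ^ (3:ℝ) = (mc.ncard : ℝ) ^ (3:ℕ) := by
      rw [← Real.rpow_natCast (mc.ncard : ℝ) 3]
      norm_num
    have e2 : (3:ℝ) ^ (n:ℝ) = (3:ℝ) ^ (n:ℕ) := Real.rpow_natCast _ n
    rw [e1, e2]
    exact h'
  calc (mc.ncard : ℝ) = ((mc.ncard : ℝ) ^ (3:ℝ)) ^ ((1:ℝ)/3) := by
        rw [← Real.rpow_mul h0]
        norm_num
    _ ≤ ((3:ℝ) ^ (n:ℝ)) ^ ((1:ℝ)/3) :=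
        Real.rpow_le_rpow (Real.rpow_nonneg h0 _) ha (by norm_num)
    _ = (3:ℝ) ^ ((n:ℝ)/3) := by
        rw [← Real.rpow_mul (by norm_num)]
        ring_nf
end

section
/- Let G be a connected chordal finite simple graph with at least 2 vertices, let S be the set of cut vertices of G, and let G' = G − S be the graph obtained by deleting the vertices of S. Then a set U of vertices of G is a minimal connected vertex cover of G if and only if S ⊆ U and U ∩ V(G') is a minimal vertex cover of G'. -/
/-- `U` is a minimal vertex cover of `G`. -/
def IsMinVC {V : Type*} (G : SimpleGraph V) (U : Set V) : Prop :=
  IsVertexCover G U ∧ ∀ W : Set V, W ⊂ U → ¬ IsVertexCover G W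

namespace CVCAux
open SimpleGraph

variable {V : Type*} {G : SimpleGraph V}

/-- Take the first `n` steps of a walk. -/
def takeW {a b : V} : (w : G.Walk a b) → (n : ℕ) → G.Walk a (w.getVert n)
  | Walk.nil, _ => Walk.nil
  | Walk.cons _ _, 0 => Walk.nil
  | Walk.cons h w, n+1 => Walk.cons h (takeW w n)

/-- Drop the first `n` steps of a walk. -/
def dropW {b : V} : {a : V} → (w : G.Walk a b) → (n : ℕ) → G.Walk (w.getVert n) b
  | _, Walk.nil, _ => Walk.nil
  | _, Walk.cons h w, 0 => Walk.cons h w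
  | _, Walk.cons _ w, n+1 => dropW w n

lemma length_takeW {a b : V} : (w : G.Walk a b) → (n : ℕ) → (takeW w n).length = min n w.length
  | Walk.nil, n => by simp [takeW]
  | Walk.cons _ _, 0 => by simp [takeW]; rfl
  | Walk.cons h w, n+1 => by
      rw [takeW]; show (takeW w n).length + 1 = _
      simp only [Walk.length_cons, length_takeW w n, Walk.length_cons]; omega

lemma length_dropW {b : V} : {a : V} → (w : G.Walk a b) → (n : ℕ) →
    (dropW w n).length = w.length - n
  | _, Walk.nil, n => by simp [dropW]
  | _, Walk.cons _ _, 0 => by simp [dropW]; rfl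
  | _, Walk.cons _ w, n+1 => by simp [dropW, length_dropW w n]

lemma shorter_of_adj {a b : V} (w : G.Walk a b) {s t : ℕ} (hst : s + 1 < t)
    (ht : t ≤ w.length) (hadj : G.Adj (w.getVert s) (w.getVert t)) :
    ∃ w' : G.Walk a b, w'.length < w.length := by
  refine ⟨(takeW w s).append (Walk.cons hadj (dropW w t)), ?_⟩
  rw [Walk.length_append, Walk.length_cons, length_takeW, length_dropW]
  omega

lemma shorter_of_eq {a b : V} (w : G.Walk a b) {s t : ℕ} (hst : s < t)
    (ht : t ≤ w.length) (heq : w.getVert s = w.getVert t) :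
    ∃ w' : G.Walk a b, w'.length < w.length := by
  refine ⟨(takeW w s).append ((dropW w t).copy heq.symm rfl), ?_⟩
  rw [Walk.length_append, Walk.length_copy, length_takeW, length_dropW]
  omega

lemma minWalk_adj {a b : V} (w : G.Walk a b)
    (hmin : ∀ w' : G.Walk a b, w.length ≤ w'.length) {s t : ℕ}
    (hs : s ≤ w.length) (ht : t ≤ w.length)
    (hadj : G.Adj (w.getVert s) (w.getVert t)) : t = s + 1 ∨ s = t + 1 := by
  by_contra hc
  push_neg at hc
  rcases lt_trichotomy s t with h | h | h
  · have : s + 1 < t := by omega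
    obtain ⟨w', hw'⟩ := shorter_of_adj w this ht hadj
    exact absurd (hmin w') (by omega)
  · exact G.irrefl (h ▸ hadj)
  · have : t + 1 < s := by omega
    obtain ⟨w', hw'⟩ := shorter_of_adj w this hs hadj.symm
    exact absurd (hmin w') (by omega)

lemma minWalk_inj {a b : V} (w : G.Walk a b)
    (hmin : ∀ w' : G.Walk a b, w.length ≤ w'.length) {s t : ℕ}
    (hs : s ≤ w.length) (ht : t ≤ w.length)
    (heq : w.getVert s = w.getVert t) : s = t := by
  by_contra hc
  rcases lt_trichotomy s t with h | h | h
  · obtain ⟨w', hw'⟩ := shorter_of_eq w h ht heq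
    exact absurd (hmin w') (by omega)
  · exact hc h
  · obtain ⟨w', hw'⟩ := shorter_of_eq w h hs heq.symm
    exact absurd (hmin w') (by omega)

end CVCAux

namespace CVCAux
open SimpleGraph

def IsVertexCover' {V : Type*} (G : SimpleGraph V) (U : Set V) : Prop :=
  ∀ ⦃a b : V⦄, G.Adj a b → a ∈ U ∨ b ∈ U

variable {V : Type*} {G : SimpleGraph V} {U : Set V}

lemma memU (hcover : IsVertexCover' G U) {x c : V} (hx : x ∉ U) (h : G.Adj x c) : c ∈ U :=
  (hcover h).resolve_left hx

def IsChordal' {V : Type*} (G : SimpleGraph V) : Prop :=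
  ∀ n : ℕ, 4 ≤ n → ¬ (3 ≤ n ∧ ∃ f : ZMod n → V, Function.Injective f ∧
    ∀ i j : ZMod n, G.Adj (f i) (f j) ↔ (j = i + 1 ∨ i = j + 1))

lemma nbr_reach (hconn : G.Connected) (hchordal : IsChordal' G)
    (hcover : IsVertexCover' G U)
    (hcut : ∀ v : V, G.Connected ∧ ¬ (G.induce {v}ᶜ).Connected → v ∈ U)
    {x : V} (hx : x ∉ U) :
    ∀ n : ℕ, ∀ (a b : ({x}ᶜ : Set V)) (ha : G.Adj x a) (hb : G.Adj x b),
      (G.induce {x}ᶜ).dist a b ≤ n →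
      (G.induce U).Reachable ⟨a, memU hcover hx ha⟩ ⟨b, memU hcover hx hb⟩ := by
  have hG' : (G.induce {x}ᶜ).Connected := by
    by_contra h
    exact hx (hcut x ⟨hconn, h⟩)
  intro n
  induction n with
  | zero =>
    intro a b ha hb hd
    have hr : (G.induce {x}ᶜ).Reachable a b := hG'.preconnected a b
    have hab : a = b := hr.dist_eq_zero_iff.mp (Nat.le_zero.mp hd)
    subst hab
    exact Reachable.refl _
  | succ n ih =>
    intro a b ha hb hd
    by_cases hle : (G.induce {x}ᶜ).dist a b ≤ n
    · exact ih a b ha hb hle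
    have hdist : (G.induce {x}ᶜ).dist a b = n + 1 := by omega
    obtain ⟨w, hw⟩ := (hG'.preconnected a b).exists_walk_length_eq_dist
    have hmin : ∀ w' : (G.induce {x}ᶜ).Walk a b, w.length ≤ w'.length := fun w' => by
      rw [hw]; exact SimpleGraph.dist_le w'
    have hlen : w.length = n + 1 := by rw [hw, hdist]
    by_cases h1 : w.length = 1
    · have hadj : (G.induce {x}ᶜ).Adj (w.getVert 0) (w.getVert 1) :=
        w.adj_getVert_succ (by omega)
      rw [w.getVert_zero] at hadj
      have hb1 : w.getVert 1 = b := by rw [← h1]; exact w.getVert_length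
      rw [hb1] at hadj
      have : (G.induce U).Adj ⟨a, memU hcover hx ha⟩ ⟨b, memU hcover hx hb⟩ := hadj
      exact this.reachable
    · have hlen2 : 2 ≤ w.length := by omega
      by_cases h2 : ∃ i, 0 < i ∧ i < w.length ∧ G.Adj x (w.getVert i)
      · obtain ⟨i, hi0, hil, hxi⟩ := h2
        have hd1 : (G.induce {x}ᶜ).dist a (w.getVert i) ≤ n := by
          have := SimpleGraph.dist_le (takeW w i)
          rw [length_takeW] at this; omega
        have hd2 : (G.induce {x}ᶜ).dist (w.getVert i) b ≤ n := by
          have := SimpleGraph.dist_le (dropW w i)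
          rw [length_dropW] at this; omega
        exact (ih a (w.getVert i) ha hxi hd1).trans (ih (w.getVert i) b hxi hb hd2)
      · exfalso
        push_neg at h2
        set k := w.length with hk
        haveI : NeZero (k+2) := ⟨by omega⟩
        apply hchordal (k+2) (by omega)
        refine ⟨by omega, ?_⟩
        set g : ℕ → V := fun p => if p = 0 then x else ↑(w.getVert (p-1)) with hg
        have hne : ∀ s : ℕ, (↑(w.getVert s) : V) ≠ x :=
          fun s => Set.mem_compl_singleton_iff.mp (w.getVert s).2
        have hinj : ∀ s t : ℕ, s ≤ k → t ≤ k →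
            (↑(w.getVert s) : V) = ↑(w.getVert t) → s = t :=
          fun s t hs ht h => minWalk_inj w hmin hs ht (Subtype.val_injective h)
        have hadjiff : ∀ s t : ℕ, s ≤ k → t ≤ k →
            (G.Adj ↑(w.getVert s) ↑(w.getVert t) ↔ (t = s+1 ∨ s = t+1)) := by
          intro s t hs ht
          constructor
          · intro h
            exact minWalk_adj w hmin hs ht h
          · rintro (rfl | rfl)
            · exact w.adj_getVert_succ (by omega)
            · exact (w.adj_getVert_succ (by omega)).symm
        have hxiff : ∀ s : ℕ, s ≤ k → (G.Adj x ↑(w.getVert s) ↔ (s = 0 ∨ s = k)) := by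
          intro s hs
          constructor
          · intro h
            by_contra hc
            push_neg at hc
            exact h2 s (by omega) (by omega) h
          · rintro (rfl | rfl)
            · rw [w.getVert_zero]; exact ha
            · rw [w.getVert_length]; exact hb
        have hmod : ∀ r : ℕ, r < k+2 → (r+1) % (k+2) = if r = k+1 then 0 else r+1 := by
          intro r hr
          split_ifs with h
          · subst h; exact Nat.mod_self _
          · exact Nat.mod_eq_of_lt (by omega)
        have hginj : ∀ p q : ℕ, p < k+2 → q < k+2 → g p = g q → p = q := by
          intro p q hp hq h
          rw [hg] at h; dsimp only at h
          split_ifs at h with hp0 hq0 hq0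
          · omega
          · exact absurd h.symm (hne _)
          · exact absurd h (hne _)
          · have := hinj (p-1) (q-1) (by omega) (by omega) h; omega
        have hkey : ∀ p q : ℕ, p < k+2 → q < k+2 →
            (G.Adj (g p) (g q) ↔ (q = (p+1) % (k+2) ∨ p = (q+1) % (k+2))) := by
          intro p q hp hq
          rw [hg]; dsimp only
          by_cases hp0 : p = 0 <;> by_cases hq0 : q = 0
          · rw [if_pos hp0, if_pos hq0]
            constructor
            · intro h; exact absurd h (G.irrefl)
            · intro h; exfalso; rw [hmod p hp, hmod q hq] at h
              split_ifs at h <;> omega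
          · rw [if_pos hp0, if_neg hq0, hxiff (q-1) (by omega),
              hmod p hp, hmod q hq]
            split_ifs <;> omega
          · rw [if_neg hp0, if_pos hq0, G.adj_comm, hxiff (p-1) (by omega),
              hmod p hp, hmod q hq]
            split_ifs <;> omega
          · rw [if_neg hp0, if_neg hq0, hadjiff (p-1) (q-1) (by omega) (by omega),
              hmod p hp, hmod q hq]
            split_ifs <;> omega
        refine ⟨fun i => g i.val, ?_, ?_⟩
        · intro i j h
          exact ZMod.val_injective _ (hginj _ _ (ZMod.val_lt i) (ZMod.val_lt j) h)
        · intro i j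
          show G.Adj (g i.val) (g j.val) ↔ _
          rw [hkey i.val j.val (ZMod.val_lt i) (ZMod.val_lt j)]
          have hv : ∀ (r s : ZMod (k+2)), (s = r + 1) ↔ (s.val = (r.val + 1) % (k+2)) := by
            intro r s
            constructor
            · rintro rfl
              rw [ZMod.val_add, ZMod.val_one'' (by omega : k+2 ≠ 1)]
            · intro h
              apply ZMod.val_injective
              rw [h, ZMod.val_add, ZMod.val_one'' (by omega : k+2 ≠ 1)]
          rw [hv i j, hv j i]

lemma walk_reach (hconn : G.Connected) (hchordal : IsChordal' G)
    (hcover : IsVertexCover' G U)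
    (hcut : ∀ v : V, G.Connected ∧ ¬ (G.induce {v}ᶜ).Connected → v ∈ U) :
    ∀ n : ℕ, ∀ (a b : V) (w : G.Walk a b), w.length ≤ n → ∀ (ha : a ∈ U) (hb : b ∈ U),
      (G.induce U).Reachable ⟨a, ha⟩ ⟨b, hb⟩ := by
  intro n
  induction n with
  | zero =>
    intro a b w hl ha hb
    have : a = b := Walk.eq_of_length_eq_zero (Nat.le_zero.mp hl)
    subst this; exact Reachable.refl _
  | succ n ih =>
    intro a b w hl ha hb
    cases w with
    | nil => exact Reachable.refl _
    | @cons _ c _ h p =>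
      by_cases hc : c ∈ U
      · have h1 : (G.induce U).Adj ⟨a, ha⟩ ⟨c, hc⟩ := h
        have hp : p.length ≤ n := by
          simp only [Walk.length_cons] at hl; omega
        exact h1.reachable.trans (ih c b p hp hc hb)
      · cases p with
        | nil => exact absurd hb hc
        | @cons _ d _ h' p' =>
          have hd : d ∈ U := memU hcover hc h'
          have hr1 := nbr_reach hconn hchordal hcover hcut hc
            ((G.induce {c}ᶜ).dist ⟨a, Set.mem_compl_singleton_iff.mpr h.ne⟩
              ⟨d, Set.mem_compl_singleton_iff.mpr h'.ne'⟩)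
            ⟨a, Set.mem_compl_singleton_iff.mpr h.ne⟩
            ⟨d, Set.mem_compl_singleton_iff.mpr h'.ne'⟩ h.symm h' le_rfl
          have hp : p'.length ≤ n := by
            simp only [Walk.length_cons] at hl; omega
          exact hr1.trans (ih d b p' hp hd hb)

lemma cover_connected (hconn : G.Connected) (hchordal : IsChordal' G)
    (hcover : IsVertexCover' G U)
    (hcut : ∀ v : V, G.Connected ∧ ¬ (G.induce {v}ᶜ).Connected → v ∈ U)
    (hne : U.Nonempty) : (G.induce U).Connected := by
  rw [connected_iff]
  refine ⟨?_, Set.nonempty_coe_sort.mpr hne⟩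
  rintro ⟨a, ha⟩ ⟨b, hb⟩
  obtain ⟨w⟩ := hconn a b
  exact walk_reach hconn hchordal hcover hcut w.length a b w le_rfl ha hb

lemma exists_adj' [Fintype V] (hconn : G.Connected) (hcard : 2 ≤ Fintype.card V) (a : V) :
    ∃ c, G.Adj a c := by
  obtain ⟨b, hb⟩ := Fintype.exists_ne_of_one_lt_card (by omega) a
  obtain ⟨w⟩ := hconn a b
  cases w with
  | nil => exact absurd rfl hb
  | cons h _ => exact ⟨_, h⟩

lemma cut_mem_cvc [Fintype V] (hconn : G.Connected) (hcard : 2 ≤ Fintype.card V)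
    (hcov : IsVertexCover' G U) (hUconn : (G.induce U).Connected)
    {v : V} (hv : ¬(G.induce {v}ᶜ).Connected) : v ∈ U := by
  by_contra hvU
  apply hv
  rw [connected_iff]
  constructor
  · have key : ∀ a : ({v}ᶜ : Set V), ∃ (u : V) (hu : u ∈ U) (hne : u ∈ ({v}ᶜ : Set V)),
        (G.induce {v}ᶜ).Reachable a ⟨u, hne⟩ := by
      rintro ⟨a, hav⟩
      by_cases haU : a ∈ U
      · exact ⟨a, haU, hav, Reachable.refl _⟩
      · obtain ⟨c, hc⟩ := exists_adj' hconn hcard a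
        have hcU : c ∈ U := memU hcov haU hc
        have hcv : c ∈ ({v}ᶜ : Set V) :=
          Set.mem_compl_singleton_iff.mpr (fun h => hvU (h ▸ hcU))
        exact ⟨c, hcU, hcv, Adj.reachable (show (G.induce {v}ᶜ).Adj ⟨a, hav⟩ ⟨c, hcv⟩ from hc)⟩
    intro a b
    obtain ⟨ua, hua, huav, ra⟩ := key a
    obtain ⟨ub, hub, hubv, rb⟩ := key b
    have hUsub : U ⊆ ({v}ᶜ : Set V) :=
      fun u hu => Set.mem_compl_singleton_iff.mpr (fun h => hvU (h ▸ hu))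
    have hr : (G.induce U).Reachable ⟨ua, hua⟩ ⟨ub, hub⟩ := hUconn.preconnected _ _
    have hr2 := hr.map (G.induceHomOfLE hUsub).toHom
    exact ra.trans (hr2.trans rb.symm)
  · obtain ⟨b, hb⟩ := Fintype.exists_ne_of_one_lt_card (by omega) v
    exact ⟨⟨b, hb⟩⟩

end CVCAux

theorem stmt7 {V : Type*} [Fintype V] (G : SimpleGraph V)
    (hconn : G.Connected) (hchordal : IsChordal G) (hcard : 2 ≤ Fintype.card V)
    (S : Set V) (hS : S = {v : V | IsCutVertex G v}) (U : Set V) :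
    IsMinCVC G U ↔
      S ⊆ U ∧ IsMinVC (G.induce Sᶜ) {x : ↥Sᶜ | (x : V) ∈ U} := by
  have hchordal' : CVCAux.IsChordal' G := hchordal
  have hcutS : ∀ (W : Set V), IsVertexCover G W → (G.induce W).Connected → S ⊆ W := by
    intro W hcov hWc v hv
    rw [hS] at hv
    exact CVCAux.cut_mem_cvc hconn hcard hcov hWc hv.2
  have hedge : ∃ a b : V, G.Adj a b := by
    have hNe : Nonempty V := Fintype.card_pos_iff.mp (by omega)
    obtain ⟨a⟩ := hNe
    obtain ⟨c, hc⟩ := CVCAux.exists_adj' hconn hcard a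
    exact ⟨a, c, hc⟩
  have hSmem : ∀ v : V, IsCutVertex G v → v ∈ S := by
    intro v hv; rw [hS]; exact hv
  constructor
  · rintro ⟨⟨hcov, hconnU⟩, hmin⟩
    have hSU : S ⊆ U := hcutS U hcov hconnU
    refine ⟨hSU, ?_, ?_⟩
    · rintro ⟨a, haS⟩ ⟨b, hbS⟩ hab
      exact hcov hab
    · intro W hW hWcov
      obtain ⟨y, hyU, hyW⟩ := (Set.ssubset_iff_of_subset hW.subset).mp hW
      set W' : Set V := S ∪ (Subtype.val '' W) with hW'def
      have hW'sub : W' ⊂ U := by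
        have hsub : W' ⊆ U := by
          rintro z (hz | ⟨w, hwW, rfl⟩)
          · exact hSU hz
          · exact hW.subset hwW
        refine (Set.ssubset_iff_of_subset hsub).mpr ⟨y, hyU, ?_⟩
        rintro (hyS | ⟨z, hzW, hzy⟩)
        · exact y.2 hyS
        · exact hyW (Subtype.val_injective hzy ▸ hzW)
      refine hmin W' hW'sub ⟨?_, ?_⟩
      · intro a b hab
        by_cases haS : a ∈ S
        · exact Or.inl (Or.inl haS)
        by_cases hbS : b ∈ S
        · exact Or.inr (Or.inl hbS)
        · rcases hWcov (show (G.induce Sᶜ).Adj ⟨a, haS⟩ ⟨b, hbS⟩ from hab) with h | h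
          · exact Or.inl (Or.inr ⟨⟨a, haS⟩, h, rfl⟩)
          · exact Or.inr (Or.inr ⟨⟨b, hbS⟩, h, rfl⟩)
      · have hW'cov : CVCAux.IsVertexCover' G W' := by
          intro a b hab
          by_cases haS : a ∈ S
          · exact Or.inl (Or.inl haS)
          by_cases hbS : b ∈ S
          · exact Or.inr (Or.inl hbS)
          · rcases hWcov (show (G.induce Sᶜ).Adj ⟨a, haS⟩ ⟨b, hbS⟩ from hab) with h | h
            · exact Or.inl (Or.inr ⟨⟨a, haS⟩, h, rfl⟩)
            · exact Or.inr (Or.inr ⟨⟨b, hbS⟩, h, rfl⟩)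
        have hne : W'.Nonempty := by
          obtain ⟨a, b, hab⟩ := hedge
          rcases hW'cov hab with h | h
          · exact ⟨a, h⟩
          · exact ⟨b, h⟩
        exact CVCAux.cover_connected hconn hchordal' hW'cov
          (fun v hv => Or.inl (hSmem v hv)) hne
  · rintro ⟨hSU, hUcov, hUmin⟩
    have hcovU : IsVertexCover G U := by
      intro a b hab
      by_cases haS : a ∈ S
      · exact Or.inl (hSU haS)
      by_cases hbS : b ∈ S
      · exact Or.inr (hSU hbS)
      · exact hUcov (show (G.induce Sᶜ).Adj ⟨a, haS⟩ ⟨b, hbS⟩ from hab)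
    have hne : U.Nonempty := by
      obtain ⟨a, b, hab⟩ := hedge
      rcases hcovU hab with h | h
      · exact ⟨a, h⟩
      · exact ⟨b, h⟩
    have hUconn : (G.induce U).Connected :=
      CVCAux.cover_connected hconn hchordal' hcovU (fun v hv => hSU (hSmem v hv)) hne
    refine ⟨⟨hcovU, hUconn⟩, ?_⟩
    rintro W hWU ⟨hWcov, hWconn⟩
    have hSW : S ⊆ W := hcutS W hWcov hWconn
    obtain ⟨y, hyU, hyW⟩ := (Set.ssubset_iff_of_subset hWU.subset).mp hWU
    have hyS : y ∉ S := fun h => hyW (hSW h)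
    refine hUmin {x : ↥Sᶜ | (x : V) ∈ W} ?_ ?_
    · have hsub : {x : ↥Sᶜ | (x : V) ∈ W} ⊆ {x : ↥Sᶜ | (x : V) ∈ U} :=
        fun x hx => hWU.subset hx
      exact (Set.ssubset_iff_of_subset hsub).mpr ⟨⟨y, hyS⟩, hyU, hyW⟩
    · rintro ⟨a, haS⟩ ⟨b, hbS⟩ hab
      exact hWcov hab
end

section
/- Let G be a finite simple graph, let uv be an edge of G, and let G/uv be the graph obtained from G by contracting the edge uv: its vertex set is V(G) \ {v}, and two distinct vertices a, b are adjacent in G/uv if and only if ab is an edge of G, or a = u and vb is an edge of G, or b = u and va is an edge of G. Then the chordality of G/uv is at most the chordality of G. -/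
/-- The chordality of `G`: the length of a longest induced cycle of `G`
(`0` if `G` has no cycles). -/
noncomputable def chordality {V : Type*} (G : SimpleGraph V) : ℕ :=
  sSup {n : ℕ | HasInducedCycle G n}

/-- The graph obtained from `G` by contracting the edge `uv`: its vertices are those of
`G` except `v`, and distinct vertices `a, b` are adjacent iff `ab ∈ E(G)`, or `a = u` and
`vb ∈ E(G)`, or `b = u` and `va ∈ E(G)`. -/
def contractEdge {V : Type*} (G : SimpleGraph V) (u v : V) :
    SimpleGraph {a : V // a ≠ v} :=
  SimpleGraph.fromRel (fun a b =>
    G.Adj (a : V) (b : V) ∨ ((a : V) = u ∧ G.Adj v (b : V)))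

private lemma zmod_eq_iff_val {m : ℕ} [NeZero m] (x y : ZMod m) : x = y ↔ x.val = y.val :=
  (ZMod.val_injective m).eq_iff.symm

private lemma val_neg_one' {m : ℕ} (hm : 1 < m) : (-1 : ZMod m).val = m - 1 := by
  haveI : NeZero m := ⟨by omega⟩
  have h1 : ((m - 1 + 1 : ℕ) : ZMod m) = 0 := by
    rw [show m - 1 + 1 = m from by omega, ZMod.natCast_self]
  rw [Nat.cast_add, Nat.cast_one] at h1
  have h2 : (-1 : ZMod m) = ((m - 1 : ℕ) : ZMod m) := by linear_combination -h1
  rw [h2, ZMod.val_cast_of_lt (by omega)]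

private lemma succ_val {m : ℕ} [NeZero m] (hm : 1 < m) (i j : ZMod m) :
    j = i + 1 ↔ (i.val + 1 < m ∧ j.val = i.val + 1) ∨ (i.val + 1 = m ∧ j.val = 0) := by
  haveI : Fact (1 < m) := ⟨hm⟩
  constructor
  · rintro rfl
    rcases Nat.lt_or_ge (i.val + 1) m with h | h
    · exact Or.inl ⟨h, by rw [ZMod.val_add, ZMod.val_one, Nat.mod_eq_of_lt h]⟩
    · have hlt := ZMod.val_lt i
      have he : i.val + 1 = m := by omega
      exact Or.inr ⟨he, by rw [ZMod.val_add, ZMod.val_one, he, Nat.mod_self]⟩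
  · rintro (⟨h1, h2⟩ | ⟨h1, h2⟩) <;> apply ZMod.val_injective <;>
      rw [ZMod.val_add, ZMod.val_one]
    · rw [Nat.mod_eq_of_lt h1]; exact h2
    · rw [h1, Nat.mod_self]; exact h2

private lemma contractEdge_adj_iff {V : Type*} (G : SimpleGraph V) (u v : V)
    (a b : {x : V // x ≠ v}) :
    (contractEdge G u v).Adj a b ↔ (a : V) ≠ (b : V) ∧
      (G.Adj a b ∨ ((a : V) = u ∧ G.Adj v b) ∨ ((b : V) = u ∧ G.Adj v a)) := by
  rw [contractEdge, SimpleGraph.fromRel_adj]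
  constructor
  · rintro ⟨hne, h⟩
    refine ⟨fun hh => hne (Subtype.ext hh), ?_⟩
    rcases h with (h | h) | (h | h)
    · exact Or.inl h
    · exact Or.inr (Or.inl h)
    · exact Or.inl h.symm
    · exact Or.inr (Or.inr h)
  · rintro ⟨hne, h⟩
    refine ⟨fun hh => hne (congrArg _ hh), ?_⟩
    tauto

private lemma cycle_pairs {V : Type*} {G : SimpleGraph V} {u v : V} {n : ℕ}
    (f : ZMod n → {x : V // x ≠ v}) (hfinj : Function.Injective f)
    (hf : ∀ i j, (contractEdge G u v).Adj (f i) (f j) ↔ (j = i + 1 ∨ i = j + 1))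
    (hf0 : (f 0 : V) = u) :
    (∀ a b : ZMod n, a ≠ 0 → b ≠ 0 →
      (G.Adj (f a) (f b) ↔ (b = a + 1 ∨ a = b + 1))) ∧
    (∀ a : ZMod n, a ≠ 0 → a ≠ 1 → a ≠ -1 → ¬G.Adj u (f a) ∧ ¬G.Adj v (f a)) := by
  have hnonu : ∀ a : ZMod n, a ≠ 0 → (f a : V) ≠ u := by
    intro a ha h
    exact ha (hfinj (Subtype.ext (h.trans hf0.symm)))
  constructor
  · intro a b ha hb
    rw [← hf a b, contractEdge_adj_iff]
    constructor
    · intro h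
      exact ⟨h.ne, Or.inl h⟩
    · intro h
      rcases h.2 with h' | ⟨h', _⟩ | ⟨h', _⟩
      · exact h'
      · exact absurd h' (hnonu a ha)
      · exact absurd h' (hnonu b hb)
  · intro a h0 h1 hm
    have hne : ¬(contractEdge G u v).Adj (f 0) (f a) := by
      rw [hf]
      rintro (h | h)
      · exact h1 (by rw [h, zero_add])
      · exact hm (by linear_combination -h)
    rw [contractEdge_adj_iff] at hne
    push_neg at hne
    have hne2 : (f 0 : V) ≠ (f a : V) := by
      intro h
      exact h0 (hfinj (Subtype.ext h)).symm
    have h3 := hne hne2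
    rw [hf0] at h3
    exact ⟨fun h => h3.1 (hf0 ▸ h), fun h => (h3.2.1 rfl) h⟩

/-- Case A: `u` keeps both cycle neighbours in `G`. -/
private lemma lemA {V : Type*} {G : SimpleGraph V} {u v : V} {n : ℕ} (hn3 : 3 ≤ n)
    (f : ZMod n → {x : V // x ≠ v}) (hfinj : Function.Injective f)
    (hf : ∀ i j, (contractEdge G u v).Adj (f i) (f j) ↔ (j = i + 1 ∨ i = j + 1))
    (hf0 : (f 0 : V) = u)
    (hu1 : G.Adj u (f 1)) (hum : G.Adj u (f (-1))) :
    HasInducedCycle G n := by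
  haveI : NeZero n := ⟨by omega⟩
  haveI : Fact (1 < n) := ⟨by omega⟩
  obtain ⟨hadj, hout⟩ := cycle_pairs f hfinj hf hf0
  have hv0 : (0 : ZMod n).val = 0 := ZMod.val_zero
  have hv1 : (1 : ZMod n).val = 1 := ZMod.val_one n
  have hvm : (-1 : ZMod n).val = n - 1 := val_neg_one' (by omega)
  have h01 : (0 : ZMod n) ≠ 1 := by
    intro h; have := congrArg ZMod.val h; rw [hv0, hv1] at this; omega
  have h0m : (0 : ZMod n) ≠ -1 := by
    intro h; have := congrArg ZMod.val h; rw [hv0, hvm] at this; omega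
  -- u's adjacencies
  have hGu : ∀ a : ZMod n, G.Adj u (f a) ↔ (a = 1 ∨ a = -1) := by
    intro a
    constructor
    · intro h
      by_contra hc
      push_neg at hc
      by_cases ha : a = 0
      · rw [ha, hf0] at h; exact G.irrefl h
      · exact (hout a ha hc.1 hc.2).1 h
    · rintro (rfl | rfl)
      · exact hu1
      · exact hum
  have hiff : ∀ j : ZMod n, (j = 1 ∨ j = -1) ↔ (j = 0 + 1 ∨ (0 : ZMod n) = j + 1) := by
    intro j
    rw [zero_add]
    constructor
    · rintro (rfl | rfl)
      · exact Or.inl rfl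
      · exact Or.inr (by ring)
    · rintro (rfl | h)
      · exact Or.inl rfl
      · exact Or.inr (by linear_combination -h)
  refine ⟨hn3, fun i => (f i : V), fun i j h => hfinj (Subtype.ext h), fun i j => ?_⟩
  beta_reduce
  by_cases hi : i = 0
  · subst hi
    rw [hf0, hGu j, hiff j]
  · by_cases hj : j = 0
    · subst hj
      rw [hf0, G.adj_comm, hGu i]
      rw [hiff i]
      tauto
    · exact hadj i j hi hj

/-- Case B: `v` takes over `u`'s role. -/
private lemma lemB {V : Type*} {G : SimpleGraph V} {u v : V} {n : ℕ} (hn3 : 3 ≤ n)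
    (f : ZMod n → {x : V // x ≠ v}) (hfinj : Function.Injective f)
    (hf : ∀ i j, (contractEdge G u v).Adj (f i) (f j) ↔ (j = i + 1 ∨ i = j + 1))
    (hf0 : (f 0 : V) = u)
    (hv1 : G.Adj v (f 1)) (hvm : G.Adj v (f (-1))) :
    HasInducedCycle G n := by
  haveI : NeZero n := ⟨by omega⟩
  haveI : Fact (1 < n) := ⟨by omega⟩
  obtain ⟨hadj, hout⟩ := cycle_pairs f hfinj hf hf0
  have hval0 : (0 : ZMod n).val = 0 := ZMod.val_zero
  have hval1 : (1 : ZMod n).val = 1 := ZMod.val_one n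
  have hvalm : (-1 : ZMod n).val = n - 1 := val_neg_one' (by omega)
  have hGv : ∀ a : ZMod n, a ≠ 0 → (G.Adj v (f a) ↔ (a = 1 ∨ a = -1)) := by
    intro a ha
    constructor
    · intro h
      by_contra hc
      push_neg at hc
      exact (hout a ha hc.1 hc.2).2 h
    · rintro (rfl | rfl)
      · exact hv1
      · exact hvm
  have hiff : ∀ j : ZMod n, (j = 1 ∨ j = -1) ↔ (j = 0 + 1 ∨ (0 : ZMod n) = j + 1) := by
    intro j
    rw [zero_add]
    constructor
    · rintro (rfl | rfl)
      · exact Or.inl rfl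
      · exact Or.inr (by ring)
    · rintro (rfl | h)
      · exact Or.inl rfl
      · exact Or.inr (by linear_combination -h)
  refine ⟨hn3, fun i => if i = 0 then v else (f i : V), ?_, ?_⟩
  · intro i j hij
    by_cases hi : i = 0 <;> by_cases hj : j = 0
    · rw [hi, hj]
    · simp only [if_pos hi, if_neg hj] at hij
      exact absurd hij.symm (f j).prop
    · simp only [if_neg hi, if_pos hj] at hij
      exact absurd hij (f i).prop
    · simp only [if_neg hi, if_neg hj] at hij
      exact hfinj (Subtype.ext hij)
  · intro i j
    by_cases hi : i = 0
    · subst hi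
      by_cases hj : j = 0
      · subst hj
        simp only [eq_self_iff_true, if_true]
        constructor
        · intro h; exact absurd h (G.irrefl)
        · rintro (h | h) <;>
          · rw [zero_add] at h
            have := congrArg ZMod.val h.symm
            rw [hval1, hval0] at this
            omega
      · simp only [eq_self_iff_true, if_true, if_neg hj]
        rw [hGv j hj, hiff j]
    · by_cases hj : j = 0
      · subst hj
        simp only [eq_self_iff_true, if_true, if_neg hi]
        rw [G.adj_comm, hGv i hi]
        rw [hiff i]
        tauto
      · simp only [if_neg hi, if_neg hj]
        exact hadj i j hi hj

/-- Case C: the cycle stretches to length `n + 1` using both `u` and `v`. -/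
private lemma lemC {V : Type*} {G : SimpleGraph V} {u v : V} {n : ℕ}
    (huv : G.Adj u v) (hn3 : 3 ≤ n)
    (f : ZMod n → {x : V // x ≠ v}) (hfinj : Function.Injective f)
    (hf : ∀ i j, (contractEdge G u v).Adj (f i) (f j) ↔ (j = i + 1 ∨ i = j + 1))
    (hf0 : (f 0 : V) = u)
    (hu1 : G.Adj u (f 1)) (hvm : G.Adj v (f (-1)))
    (hum : ¬G.Adj u (f (-1))) (hv1 : ¬G.Adj v (f 1)) :
    HasInducedCycle G (n + 1) := by
  haveI : NeZero n := ⟨by omega⟩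
  haveI : NeZero (n + 1) := ⟨by omega⟩
  haveI : Fact (1 < n) := ⟨by omega⟩
  obtain ⟨hadj, hout⟩ := cycle_pairs f hfinj hf hf0
  have hval0 : (0 : ZMod n).val = 0 := ZMod.val_zero
  have hval1 : (1 : ZMod n).val = 1 := ZMod.val_one n
  have hvalm : (-1 : ZMod n).val = n - 1 := val_neg_one' (by omega)
  have hGu : ∀ a : ZMod n, G.Adj u (f a) ↔ a = 1 := by
    intro a
    constructor
    · intro h
      by_contra hc
      by_cases ha : a = 0
      · rw [ha, hf0] at h; exact G.irrefl h
      · by_cases ham : a = -1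
        · rw [ham] at h; exact hum h
        · exact (hout a ha hc ham).1 h
    · rintro rfl; exact hu1
  have hGv : ∀ a : ZMod n, G.Adj v (f a) ↔ (a = 0 ∨ a = -1) := by
    intro a
    constructor
    · intro h
      by_contra hc
      push_neg at hc
      by_cases ha : a = 1
      · rw [ha] at h; exact hv1 h
      · exact (hout a hc.1 ha hc.2).2 h
    · rintro (rfl | rfl)
      · rw [hf0]; exact huv.symm
      · exact hvm
  -- the extended cycle
  set e : ZMod (n + 1) → ZMod n := fun i => ((i.val - 1 : ℕ) : ZMod n) with he
  have heval : ∀ i : ZMod (n + 1), i ≠ 0 → (e i).val = i.val - 1 ∧ 1 ≤ i.val ∧ i.val ≤ n := by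
    intro i hi
    have h1 : i.val ≠ 0 := fun h => hi ((ZMod.val_eq_zero i).1 h)
    have h2 : i.val < n + 1 := ZMod.val_lt i
    exact ⟨ZMod.val_cast_of_lt (by omega), by omega, by omega⟩
  refine ⟨by omega, fun i => if i = 0 then v else (f (e i) : V), ?_, ?_⟩
  · intro i j hij
    by_cases hi : i = 0 <;> by_cases hj : j = 0
    · rw [hi, hj]
    · simp only [if_pos hi, if_neg hj] at hij
      exact absurd hij.symm (f (e j)).prop
    · simp only [if_neg hi, if_pos hj] at hij
      exact absurd hij (f (e i)).prop
    · simp only [if_neg hi, if_neg hj] at hij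
      have h := hfinj (Subtype.ext hij)
      have h1 := heval i hi
      have h2 := heval j hj
      have : (e i).val = (e j).val := by rw [h]
      apply ZMod.val_injective
      omega
  · intro i j
    have hsn : ∀ x y : ZMod (n + 1), y = x + 1 ↔
        (x.val + 1 < n + 1 ∧ y.val = x.val + 1) ∨ (x.val + 1 = n + 1 ∧ y.val = 0) :=
      succ_val (by omega)
    have hsm : ∀ x y : ZMod n, y = x + 1 ↔
        (x.val + 1 < n ∧ y.val = x.val + 1) ∨ (x.val + 1 = n ∧ y.val = 0) :=
      succ_val (by omega)
    by_cases hij : i = j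
    · subst hij
      constructor
      · intro h; exact absurd h (G.irrefl)
      · rintro (h | h) <;>
        · rw [hsn] at h
          have := ZMod.val_lt i
          omega
    · by_cases hi : i = 0
      · subst hi
        have hj : j ≠ 0 := fun h => hij h.symm
        obtain ⟨hej, hj1, hjn⟩ := heval j hj
        simp only [eq_self_iff_true, if_true, if_neg hj]
        rw [hGv (e j)]
        rw [hsn 0 j, hsn j 0]
        rw [zmod_eq_iff_val (e j) 0, zmod_eq_iff_val (e j) (-1), hej, hval0, hvalm]
        have hv00 : (0 : ZMod (n + 1)).val = 0 := ZMod.val_zero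
        rw [hv00]
        omega
      · by_cases hj : j = 0
        · subst hj
          obtain ⟨hei, hi1, hin⟩ := heval i hi
          simp only [eq_self_iff_true, if_true, if_neg hi]
          rw [G.adj_comm, hGv (e i)]
          rw [hsn 0 i, hsn i 0]
          rw [zmod_eq_iff_val (e i) 0, zmod_eq_iff_val (e i) (-1), hei, hval0, hvalm]
          have hv00 : (0 : ZMod (n + 1)).val = 0 := ZMod.val_zero
          rw [hv00]
          omega
        · -- both nonzero
          obtain ⟨hei, hi1, hin⟩ := heval i hi
          obtain ⟨hej, hj1, hjn⟩ := heval j hj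
          simp only [if_neg hi, if_neg hj]
          rw [hsn i j, hsn j i]
          by_cases hai : e i = 0
          · -- i is position of u
            have hiv : i.val = 1 := by
              have := congrArg ZMod.val hai
              rw [hei, hval0] at this
              omega
            rw [hai, hf0, hGu (e j)]
            rw [zmod_eq_iff_val (e j) 1, hej, hval1]
            omega
          · by_cases haj : e j = 0
            · have hjv : j.val = 1 := by
                have := congrArg ZMod.val haj
                rw [hej, hval0] at this
                omega
              rw [haj, hf0, G.adj_comm, hGu (e i)]
              rw [zmod_eq_iff_val (e i) 1, hei, hval1]
              omega
            · -- generic pair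
              have hivge : 2 ≤ i.val := by
                rcases Nat.lt_or_ge i.val 2 with h | h
                · exfalso; apply hai
                  apply ZMod.val_injective
                  rw [hei, hval0]; omega
                · exact h
              have hjvge : 2 ≤ j.val := by
                rcases Nat.lt_or_ge j.val 2 with h | h
                · exfalso; apply haj
                  apply ZMod.val_injective
                  rw [hej, hval0]; omega
                · exact h
              rw [hadj (e i) (e j) hai haj]
              rw [hsm (e i) (e j), hsm (e j) (e i), hei, hej]
              omega

/-- Transfer of an induced cycle through contraction. -/
private lemma key {V : Type*} {G : SimpleGraph V} {u v : V}
    (huv : G.Adj u v) {n : ℕ}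
    (h : HasInducedCycle (contractEdge G u v) n) :
    HasInducedCycle G n ∨ HasInducedCycle G (n + 1) := by
  obtain ⟨hn3, f, hfinj, hf⟩ := h
  haveI : NeZero n := ⟨by omega⟩
  haveI : Fact (1 < n) := ⟨by omega⟩
  by_cases hu : ∃ k, (f k : V) = u
  · obtain ⟨k, hk⟩ := hu
    -- normalize so that position 0 is u
    set f' : ZMod n → {x : V // x ≠ v} := fun i => f (i + k) with hf'def
    have hf'inj : Function.Injective f' := by
      intro i j h
      have := hfinj h
      exact add_right_cancel this
    have hf' : ∀ i j, (contractEdge G u v).Adj (f' i) (f' j) ↔ (j = i + 1 ∨ i = j + 1) := by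
      intro i j
      rw [hf'def]
      simp only
      rw [hf (i + k) (j + k)]
      constructor
      · rintro (h | h)
        · exact Or.inl (by linear_combination h)
        · exact Or.inr (by linear_combination h)
      · rintro (h | h)
        · exact Or.inl (by linear_combination h)
        · exact Or.inr (by linear_combination h)
    have hf'0 : (f' 0 : V) = u := by rw [hf'def]; simp only [zero_add]; exact hk
    -- basic distinctness
    have h10 : (1 : ZMod n) ≠ 0 := by
      intro h; have := congrArg ZMod.val h
      rw [ZMod.val_one n, ZMod.val_zero] at this; omega
    have hm0 : (-1 : ZMod n) ≠ 0 := by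
      intro h; have := congrArg ZMod.val h
      rw [val_neg_one' (show 1 < n by omega), ZMod.val_zero] at this; omega
    have hnonu : ∀ a : ZMod n, a ≠ 0 → (f' a : V) ≠ u := by
      intro a ha h
      exact ha (hf'inj (Subtype.ext (h.trans hf'0.symm)))
    have hd1 : G.Adj u (f' 1) ∨ G.Adj v (f' 1) := by
      have h1 : (contractEdge G u v).Adj (f' 0) (f' 1) :=
        (hf' 0 1).2 (Or.inl (zero_add 1).symm)
      rw [contractEdge_adj_iff] at h1
      rcases h1.2 with h | ⟨_, h⟩ | ⟨h, _⟩
      · exact Or.inl (hf'0 ▸ h)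
      · exact Or.inr h
      · exact absurd h (hnonu 1 h10)
    have hdm : G.Adj u (f' (-1)) ∨ G.Adj v (f' (-1)) := by
      have h1 : (contractEdge G u v).Adj (f' 0) (f' (-1)) :=
        (hf' 0 (-1)).2 (Or.inr (by ring))
      rw [contractEdge_adj_iff] at h1
      rcases h1.2 with h | ⟨_, h⟩ | ⟨h, _⟩
      · exact Or.inl (hf'0 ▸ h)
      · exact Or.inr h
      · exact absurd h (hnonu (-1) hm0)
    by_cases hA1 : G.Adj u (f' 1) <;> by_cases hAm : G.Adj u (f' (-1))
    · exact Or.inl (lemA hn3 f' hf'inj hf' hf'0 hA1 hAm)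
    · have hvm : G.Adj v (f' (-1)) := hdm.resolve_left hAm
      by_cases hv1 : G.Adj v (f' 1)
      · exact Or.inl (lemB hn3 f' hf'inj hf' hf'0 hv1 hvm)
      · exact Or.inr (lemC huv hn3 f' hf'inj hf' hf'0 hA1 hvm hAm hv1)
    · have hv1 : G.Adj v (f' 1) := hd1.resolve_left hA1
      by_cases hvm : G.Adj v (f' (-1))
      · exact Or.inl (lemB hn3 f' hf'inj hf' hf'0 hv1 hvm)
      · -- reflect the cycle
        set f2 : ZMod n → {x : V // x ≠ v} := fun i => f' (-i) with hf2def
        have hf2inj : Function.Injective f2 := by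
          intro i j h
          have := hf'inj h
          exact neg_injective this
        have hf2 : ∀ i j, (contractEdge G u v).Adj (f2 i) (f2 j) ↔ (j = i + 1 ∨ i = j + 1) := by
          intro i j
          rw [hf2def]
          simp only
          rw [hf' (-i) (-j)]
          constructor
          · rintro (h | h)
            · exact Or.inr (by linear_combination h)
            · exact Or.inl (by linear_combination h)
          · rintro (h | h)
            · exact Or.inr (by linear_combination h)
            · exact Or.inl (by linear_combination h)
        have hf20 : (f2 0 : V) = u := by rw [hf2def]; simp only [neg_zero]; exact hf'0
        have e1 : f2 1 = f' (-1) := by rw [hf2def]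
        have em : f2 (-1) = f' 1 := by rw [hf2def]; simp only [neg_neg]
        refine Or.inr (lemC huv hn3 f2 hf2inj hf2 hf20 ?_ ?_ ?_ ?_)
        · rw [e1]; exact hAm
        · rw [em]; exact hv1
        · rw [em]; exact hA1
        · rw [e1]; exact hvm
    · have hv1 : G.Adj v (f' 1) := hd1.resolve_left hA1
      have hvm : G.Adj v (f' (-1)) := hdm.resolve_left hAm
      exact Or.inl (lemB hn3 f' hf'inj hf' hf'0 hv1 hvm)
  · -- u not on the cycle: it maps straight into G
    push_neg at hu
    refine Or.inl ⟨hn3, fun i => (f i : V), fun i j h => hfinj (Subtype.ext h), fun i j => ?_⟩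
    beta_reduce
    rw [← hf i j, contractEdge_adj_iff]
    constructor
    · intro h
      exact ⟨h.ne, Or.inl h⟩
    · intro h
      rcases h.2 with h' | ⟨h', _⟩ | ⟨h', _⟩
      · exact h'
      · exact absurd h' (hu i)
      · exact absurd h' (hu j)

private lemma cycle_le_card {V : Type*} [Fintype V] {G : SimpleGraph V} {n : ℕ}
    (h : HasInducedCycle G n) : n ≤ Fintype.card V := by
  obtain ⟨hn3, f, hfinj, -⟩ := h
  haveI : NeZero n := ⟨by omega⟩
  calc n = Fintype.card (ZMod n) := (ZMod.card n).symm
    _ ≤ Fintype.card V := Fintype.card_le_of_injective f hfinj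

theorem stmt9 {V : Type*} [Fintype V] (G : SimpleGraph V) (u v : V)
    (huv : G.Adj u v) :
    chordality (contractEdge G u v) ≤ chordality G := by
  unfold chordality
  have hbdd : BddAbove {n : ℕ | HasInducedCycle G n} :=
    ⟨Fintype.card V, fun n hn => cycle_le_card hn⟩
  rcases Set.eq_empty_or_nonempty {n : ℕ | HasInducedCycle (contractEdge G u v) n} with h | h
  · rw [h, csSup_empty]
    exact Nat.zero_le _
  · apply csSup_le h
    intro n hn
    rcases key huv hn with h' | h'
    · exact le_csSup hbdd h'
    · exact le_trans (Nat.le_succ n) (le_csSup hbdd h')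
end

section
/- Let G be a connected distance-hereditary finite simple graph and let u be a vertex of G. Then for any two boundaries B_1, B_2 ∈ B(u), either B_1 ∩ B_2 = ∅, or B_1 ⊆ B_2, or B_2 ⊆ B_1. -/
/-- `G` is distance-hereditary: in every connected induced subgraph,
distances agree with those in `G`. -/
def IsDistanceHereditary {V : Type*} (G : SimpleGraph V) : Prop :=
  ∀ W : Set V, (G.induce W).Connected →
    ∀ x y : W, (G.induce W).dist x y = G.dist (x : V) (y : V)

/-- The boundaries `B(u)`: for each `i ≥ 1` and each connected component `H` of the
subgraph of `G` induced on the vertices at distance at least `i` from `u`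
(that is, on `L_i(u) ∪ … ∪ L_{s(u)}(u)`), the set `N_G(V(H))` of vertices outside
`V(H)` having a neighbor in `V(H)`. -/
def boundaries {V : Type*} (G : SimpleGraph V) (u : V) : Set (Set V) :=
  {B | ∃ i : ℕ, 1 ≤ i ∧
    ∃ C : (G.induce {v : V | i ≤ G.dist u v}).ConnectedComponent,
      B = {w : V | w ∉ Subtype.val '' C.supp ∧
        ∃ x ∈ Subtype.val '' C.supp, G.Adj w x}}

section Aux

open SimpleGraph

variable {V : Type*}

private lemma lip {V' : Type*} {H : SimpleGraph V'} (g : V' → ℕ)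
    (hg : ∀ x y, H.Adj x y → g y ≤ g x + 1) :
    ∀ {c d : V'} (r : H.Walk c d), g d ≤ g c + r.length := by
  intro c d r
  induction r with
  | nil => simp
  | cons h r ih =>
    have := hg _ _ h
    simp only [SimpleGraph.Walk.length_cons]
    omega

private lemma reach_induce {G : SimpleGraph V} {S : Set V} :
    ∀ {a b : V} (q : G.Walk a b), (∀ v ∈ q.support, v ∈ S) → ∀ (ha : a ∈ S) (hb : b ∈ S),
      (G.induce S).Reachable ⟨a, ha⟩ ⟨b, hb⟩ := by
  intro a b q
  induction q with
  | nil => intro _ ha hb; exact Reachable.refl _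
  | @cons a c b h q ih =>
    intro hq ha hb
    have hc : c ∈ S := hq c (by simp)
    have hadj : (G.induce S).Adj ⟨a, ha⟩ ⟨c, hc⟩ := by simpa using h
    exact hadj.reachable.trans (ih (fun v hv => hq v (by simp [hv])) hc hb)

private lemma induce_conn {G : SimpleGraph V} {a b : V} (q : G.Walk a b) :
    (G.induce {v | v ∈ q.support}).Connected := by
  classical
  rw [SimpleGraph.connected_iff]
  refine ⟨?_, ⟨⟨a, q.start_mem_support⟩⟩⟩
  rintro ⟨x, hx⟩ ⟨y, hy⟩
  have hax := reach_induce (q.takeUntil x hx)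
    (fun v hv => q.support_takeUntil_subset hx hv) q.start_mem_support hx
  have hay := reach_induce (q.takeUntil y hy)
    (fun v hv => q.support_takeUntil_subset hy hv) q.start_mem_support hy
  exact hax.symm.trans hay

private lemma walk_down {G : SimpleGraph V} {S : Set V} :
    ∀ {a b : ↥S} (r : (G.induce S).Walk a b),
      ∃ q : G.Walk a.val b.val, ∀ v ∈ q.support, v ∈ S := by
  intro a b r
  induction r with
  | @nil a0 =>
    refine ⟨SimpleGraph.Walk.nil, ?_⟩
    intro v hv
    simp only [SimpleGraph.Walk.support_nil, List.mem_singleton] at hv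
    subst hv; exact a0.2
  | @cons a0 c0 b0 h r ih =>
    obtain ⟨q, hq⟩ := ih
    refine ⟨SimpleGraph.Walk.cons (by simpa using h) q, ?_⟩
    intro v hv
    simp only [SimpleGraph.Walk.support_cons, List.mem_cons] at hv
    rcases hv with rfl | hv'
    · exact a0.2
    · exact hq v hv'

private lemma dh_short {G : SimpleGraph V} (hDH : IsDistanceHereditary G)
    {a b : V} (q : G.Walk a b) (f : V → ℕ)
    (hf : ∀ x y, x ∈ q.support → y ∈ q.support → G.Adj x y → f y ≤ f x + 1) :
    f b ≤ f a + G.dist a b := by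
  have hc : (G.induce {v | v ∈ q.support}).Connected := induce_conn q
  have ha : a ∈ {v | v ∈ q.support} := q.start_mem_support
  have hb : b ∈ {v | v ∈ q.support} := q.end_mem_support
  have hd := hDH _ hc ⟨a, ha⟩ ⟨b, hb⟩
  have hr : (G.induce {v | v ∈ q.support}).Reachable ⟨a, ha⟩ ⟨b, hb⟩ := hc.preconnected _ _
  obtain ⟨p, hp⟩ := hr.exists_walk_length_eq_dist
  have hl := lip (fun v => f v.val)
    (fun x y hxy => hf x.val y.val x.2 y.2 (by simpa using hxy)) p
  simp only at hl
  rw [hp, hd] at hl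
  exact hl

private lemma tri {G : SimpleGraph V} (hconn : G.Connected) {a b : V} (h : G.Adj a b) (u : V) :
    G.dist u b ≤ G.dist u a + 1 := by
  have h1 : G.dist u b ≤ G.dist u a + G.dist a b := hconn.dist_triangle
  have h2 : G.dist a b ≤ 1 := by
    have := SimpleGraph.dist_le h.toWalk
    simpa using this
  omega

private lemma penult {G : SimpleGraph V} (hconn : G.Connected) {a y : V} (hne : y ≠ a) :
    ∃ c, G.Adj c y ∧ G.dist a y = G.dist a c + 1 := by
  obtain ⟨p, hp⟩ := (hconn a y).exists_walk_length_eq_dist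
  cases hrev : p.reverse with
  | nil => exact absurd rfl hne
  | @cons _ c _ h r =>
    refine ⟨c, h.symm, ?_⟩
    have h1 : G.dist a c ≤ r.length := by
      have := SimpleGraph.dist_le r.reverse
      simpa using this
    have h2 : p.length = r.length + 1 := by
      have := congrArg SimpleGraph.Walk.length hrev
      simp only [SimpleGraph.Walk.length_reverse, SimpleGraph.Walk.length_cons] at this
      omega
    have h3 : G.dist a y ≤ G.dist a c + 1 := tri hconn h.symm a
    omega


private lemma geo_support {G : SimpleGraph V} (hconn : G.Connected) (u w : V) :
    ∃ p : G.Walk u w, p.length = G.dist u w ∧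
      ∀ v ∈ p.support, G.dist u v ≤ G.dist u w ∧ (G.dist u v = G.dist u w → v = w) := by
  classical
  obtain ⟨p, hp⟩ := (hconn u w).exists_walk_length_eq_dist
  refine ⟨p, hp, fun v hv => ?_⟩
  have h1 : G.dist u v ≤ (p.takeUntil v hv).length := SimpleGraph.dist_le _
  have h2 : G.dist v w ≤ (p.dropUntil v hv).length := SimpleGraph.dist_le _
  have h3 : (p.takeUntil v hv).length + (p.dropUntil v hv).length = p.length := by
    rw [← SimpleGraph.Walk.length_append, p.take_spec hv]
  have h4 : G.dist u w ≤ G.dist u v + G.dist v w := hconn.dist_triangle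
  refine ⟨by omega, fun he => ?_⟩
  have h5 : G.dist v w = 0 := by omega
  exact (hconn.dist_eq_zero_iff).mp h5

private lemma toLevel {G : SimpleGraph V} (hconn : G.Connected) (u : V) :
    ∀ (k i : ℕ) (x : V), 1 ≤ i → G.dist u x = k → i ≤ k →
      ∃ (y : V) (q : G.Walk x y), G.dist u y = i ∧ ∀ v ∈ q.support, i ≤ G.dist u v := by
  intro k
  induction k using Nat.strong_induction_on with
  | _ k ih =>
    intro i x hi hk hik
    by_cases hek : k = i
    · refine ⟨x, SimpleGraph.Walk.nil, by omega, ?_⟩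
      intro v hv
      simp only [SimpleGraph.Walk.support_nil, List.mem_singleton] at hv
      subst hv; omega
    · have hxu : x ≠ u := by
        intro h; subst h
        rw [SimpleGraph.dist_self] at hk; omega
      obtain ⟨c, hc, hd⟩ := penult hconn hxu
      obtain ⟨y, q, hy, hq⟩ := ih (G.dist u c) (by omega) i c hi rfl (by omega)
      refine ⟨y, SimpleGraph.Walk.cons hc.symm q, hy, ?_⟩
      intro v hv
      simp only [SimpleGraph.Walk.support_cons, List.mem_cons] at hv
      rcases hv with rfl | hv'
      · omega
      · exact hq v hv'

private lemma path4 {G : SimpleGraph V} (hconn : G.Connected) (hDH : IsDistanceHereditary G)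
    {a b c d : V} (hab : G.Adj a b) (hbc : G.Adj b c) (hcd : G.Adj c d)
    (n1 : ¬G.Adj a c) (n2 : ¬G.Adj a d) (n3 : ¬G.Adj b d) (hdist : G.dist a d ≤ 2) : False := by
  classical
  have hdb : d ≠ b := fun h => n2 (h ▸ hab)
  have hda : d ≠ a := fun h => n1 (by rw [h] at hcd; exact hcd.symm)
  have hca : c ≠ a := fun h => n2 (by rw [h] at hcd; exact hcd)
  have hdc : d ≠ c := hcd.ne.symm
  have hcb : c ≠ b := hbc.ne.symm
  have hba : b ≠ a := hab.ne.symm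
  set f : V → ℕ := fun v => if v = d then 3 else if v = c then 2 else if v = b then 1 else 0 with hfdef
  have e1 : f d = 3 := by simp [hfdef]
  have e2 : f c = 2 := by simp [hfdef, hdc.symm]
  have e3 : f b = 1 := by simp [hfdef, hdb.symm, hcb.symm]
  have e4 : f a = 0 := by simp [hfdef, hda.symm, hca.symm, hba.symm]
  have n1' : ¬G.Adj c a := fun h => n1 h.symm
  have n2' : ¬G.Adj d a := fun h => n2 h.symm
  have n3' : ¬G.Adj d b := fun h => n3 h.symm
  have key := dh_short hDH (SimpleGraph.Walk.cons hab (SimpleGraph.Walk.cons hbc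
      (SimpleGraph.Walk.cons hcd SimpleGraph.Walk.nil))) f ?hf
  case hf =>
    intro x y hx hy hxy
    simp only [SimpleGraph.Walk.support_cons, SimpleGraph.Walk.support_nil, List.mem_cons,
      List.not_mem_nil, or_false] at hx hy
    rcases hx with rfl | rfl | rfl | rfl
    all_goals rcases hy with rfl | rfl | rfl | rfl
    all_goals first
      | exact (hxy.ne rfl).elim
      | exact absurd hxy n1 | exact absurd hxy n1' | exact absurd hxy n2
      | exact absurd hxy n2' | exact absurd hxy n3 | exact absurd hxy n3'
      | (simp only [e1, e2, e3, e4]; omega)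
  rw [e1, e4] at key
  omega


private lemma path5 {G : SimpleGraph V} (hDH : IsDistanceHereditary G)
    {a b c d e : V} (hab : G.Adj a b) (hbc : G.Adj b c) (hcd : G.Adj c d) (hde : G.Adj d e)
    (nac : ¬G.Adj a c) (nad : ¬G.Adj a d) (nae : ¬G.Adj a e)
    (nbd : ¬G.Adj b d) (nbe : ¬G.Adj b e) (nce : ¬G.Adj c e)
    (hdist : G.dist a e ≤ 2) : False := by
  classical
  have heb : e ≠ b := fun h => nbd (by rw [h] at hde; exact hde.symm)
  have hea : e ≠ a := fun h => nad (by rw [h] at hde; exact hde.symm)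
  have hec : e ≠ c := fun h => nbe (by rw [← h] at hbc; exact hbc)
  have hed : e ≠ d := hde.ne.symm
  have hdc : d ≠ c := hcd.ne.symm
  have hdb : d ≠ b := fun h => nbe (by rw [h] at hde; exact hde)
  have hda : d ≠ a := fun h => nac (by rw [h] at hcd; exact hcd.symm)
  have hcb : c ≠ b := hbc.ne.symm
  have hca : c ≠ a := fun h => nad (by rw [h] at hcd; exact hcd)
  have hba : b ≠ a := hab.ne.symm
  set f : V → ℕ := fun v => if v = e then 4 else if v = d then 3 else if v = c then 2
    else if v = b then 1 else 0 with hfdef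
  have e1 : f e = 4 := by simp [hfdef]
  have e2 : f d = 3 := by simp [hfdef, hed.symm]
  have e3 : f c = 2 := by simp [hfdef, hec.symm, hdc.symm]
  have e4 : f b = 1 := by simp [hfdef, heb.symm, hdb.symm, hcb.symm]
  have e5 : f a = 0 := by simp [hfdef, hea.symm, hda.symm, hca.symm, hba.symm]
  have nac' : ¬G.Adj c a := fun h => nac h.symm
  have nad' : ¬G.Adj d a := fun h => nad h.symm
  have nae' : ¬G.Adj e a := fun h => nae h.symm
  have nbd' : ¬G.Adj d b := fun h => nbd h.symm
  have nbe' : ¬G.Adj e b := fun h => nbe h.symm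
  have nce' : ¬G.Adj e c := fun h => nce h.symm
  have key := dh_short hDH (SimpleGraph.Walk.cons hab (SimpleGraph.Walk.cons hbc
      (SimpleGraph.Walk.cons hcd (SimpleGraph.Walk.cons hde SimpleGraph.Walk.nil)))) f ?hf
  case hf =>
    intro x y hx hy hxy
    simp only [SimpleGraph.Walk.support_cons, SimpleGraph.Walk.support_nil, List.mem_cons,
      List.not_mem_nil, or_false] at hx hy
    rcases hx with rfl | rfl | rfl | rfl | rfl
    all_goals rcases hy with rfl | rfl | rfl | rfl | rfl
    all_goals first
      | exact (hxy.ne rfl).elim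
      | exact absurd hxy nac | exact absurd hxy nac' | exact absurd hxy nad
      | exact absurd hxy nad' | exact absurd hxy nae | exact absurd hxy nae'
      | exact absurd hxy nbd | exact absurd hxy nbd' | exact absurd hxy nbe
      | exact absurd hxy nbe' | exact absurd hxy nce | exact absurd hxy nce'
      | (simp only [e1, e2, e3, e4, e5]; omega)
  rw [e1, e5] at key
  omega

private lemma adj_step {G : SimpleGraph V} (hconn : G.Connected) (hDH : IsDistanceHereditary G)
    (u : V) {w x y : V} (hwx : G.Adj w x) (hxy : G.Adj x y)
    (hx : G.dist u x = G.dist u w + 1) (hy : G.dist u y = G.dist u w + 1) :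
    G.Adj w y := by
  classical
  by_contra hny
  obtain ⟨p, hp, hps⟩ := geo_support hconn u w
  have hxyne : x ≠ y := hxy.ne
  have hyu : y ≠ u := by
    intro h; rw [h, SimpleGraph.dist_self] at hy; omega
  have hxu : x ≠ u := by
    intro h; rw [h, SimpleGraph.dist_self] at hx; omega
  set d := G.dist u w with hd
  set f : V → ℕ := fun v => if v = y then d + 2 else if v = x then d + 1 else G.dist u v
    with hfdef
  have e1 : f y = d + 2 := by simp [hfdef]
  have e2 : f x = d + 1 := by simp [hfdef, hxyne]
  have e3 : ∀ v, v ≠ y → v ≠ x → f v = G.dist u v := by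
    intro v h1 h2; simp [hfdef, h1, h2]
  set q : G.Walk u y := p.append (SimpleGraph.Walk.cons hwx (SimpleGraph.Walk.cons hxy
    SimpleGraph.Walk.nil)) with hq
  have hmem : ∀ v, v ∈ q.support → v ∈ p.support ∨ v = x ∨ v = y := by
    intro v hv
    rw [hq, SimpleGraph.Walk.mem_support_append_iff] at hv
    rcases hv with h | h
    · exact Or.inl h
    · simp only [SimpleGraph.Walk.support_cons, SimpleGraph.Walk.support_nil, List.mem_cons,
        List.not_mem_nil, or_false] at h
      rcases h with rfl | rfl | rfl
      · exact Or.inl p.end_mem_support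
      · exact Or.inr (Or.inl rfl)
      · exact Or.inr (Or.inr rfl)
  have hplvl : ∀ v, v ∈ p.support → v ≠ x ∧ v ≠ y := by
    intro v hv
    have := (hps v hv).1
    constructor
    · intro h; rw [h] at this; omega
    · intro h; rw [h] at this; omega
  have key := dh_short hDH q f ?hf
  case hf =>
    intro s t hs ht hst
    rcases hmem t ht with htp | rfl | rfl
    · -- t on geodesic
      obtain ⟨ht1, ht2⟩ := hplvl t htp
      rw [e3 t ht2 ht1]
      have hle := (hps t htp).1
      rcases hmem s hs with hsp | rfl | rfl
      · obtain ⟨hs1, hs2⟩ := hplvl s hsp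
        rw [e3 s hs2 hs1]
        exact tri hconn hst u
      · rw [e2]; omega
      · rw [e1]; omega
    · -- t = x
      rw [e2]
      rcases hmem s hs with hsp | rfl | rfl
      · obtain ⟨hs1, hs2⟩ := hplvl s hsp
        rw [e3 s hs2 hs1]
        have := tri hconn hst u
        omega
      · exact (hst.ne rfl).elim
      · rw [e1]; omega
    · -- t = y
      rw [e1]
      rcases hmem s hs with hsp | rfl | rfl
      · obtain ⟨hs1, hs2⟩ := hplvl s hsp
        have h5 := (hps s hsp).1
        have h6 := tri hconn hst u
        have h7 : G.dist u s = d := by omega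
        have h8 : s = w := (hps s hsp).2 h7
        rw [h8] at hst
        exact absurd hst hny
      · rw [e2]
      · exact (hst.ne rfl).elim
  rw [e1] at key
  have hfu : f u = 0 := by
    rw [e3 u (Ne.symm hyu) (Ne.symm hxu), SimpleGraph.dist_self]
  rw [hfu] at key
  omega

private lemma roof {G : SimpleGraph V} (hconn : G.Connected) (hDH : IsDistanceHereditary G)
    (u : V) {w x z y : V} (hwx : G.Adj w x) (hxz : G.Adj x z) (hzy : G.Adj z y)
    (hx : G.dist u x = G.dist u w + 1) (hz : G.dist u z = G.dist u w + 2)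
    (hy : G.dist u y = G.dist u w + 1) :
    G.Adj w y := by
  classical
  by_cases hxy0 : x = y
  · rw [← hxy0]; exact hwx
  by_cases hxy : G.Adj x y
  · exact adj_step hconn hDH u hwx hxy hx hy
  by_contra hny
  obtain ⟨p, hp, hps⟩ := geo_support hconn u w
  set d := G.dist u w with hd
  have hzy' : z ≠ y := hzy.ne
  have hzx : z ≠ x := by intro h; rw [h] at hz; omega
  have hyu : y ≠ u := by intro h; rw [h, SimpleGraph.dist_self] at hy; omega
  have hxu : x ≠ u := by intro h; rw [h, SimpleGraph.dist_self] at hx; omega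
  have hzu : z ≠ u := by intro h; rw [h, SimpleGraph.dist_self] at hz; omega
  set f : V → ℕ := fun v => if v = y then d + 3 else if v = z then d + 2
    else if v = x then d + 1 else G.dist u v with hfdef
  have e1 : f y = d + 3 := by simp [hfdef]
  have e2 : f z = d + 2 := by simp [hfdef, hzy']
  have e3 : f x = d + 1 := by simp [hfdef, hxy0, hzx.symm]
  have e4 : ∀ v, v ≠ y → v ≠ z → v ≠ x → f v = G.dist u v := by
    intro v h1 h2 h3; simp [hfdef, h1, h2, h3]
  set q : G.Walk u y := p.append (SimpleGraph.Walk.cons hwx (SimpleGraph.Walk.cons hxz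
    (SimpleGraph.Walk.cons hzy SimpleGraph.Walk.nil))) with hq
  have hmem : ∀ v, v ∈ q.support → v ∈ p.support ∨ v = x ∨ v = z ∨ v = y := by
    intro v hv
    rw [hq, SimpleGraph.Walk.mem_support_append_iff] at hv
    rcases hv with h | h
    · exact Or.inl h
    · simp only [SimpleGraph.Walk.support_cons, SimpleGraph.Walk.support_nil, List.mem_cons,
        List.not_mem_nil, or_false] at h
      rcases h with rfl | rfl | rfl | rfl
      · exact Or.inl p.end_mem_support
      · exact Or.inr (Or.inl rfl)
      · exact Or.inr (Or.inr (Or.inl rfl))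
      · exact Or.inr (Or.inr (Or.inr rfl))
  have hplvl : ∀ v, v ∈ p.support → v ≠ x ∧ v ≠ z ∧ v ≠ y := by
    intro v hv
    have := (hps v hv).1
    refine ⟨?_, ?_, ?_⟩ <;> intro h <;> rw [h] at this <;> omega
  have key := dh_short hDH q f ?hf
  case hf =>
    intro s t hs ht hst
    rcases hmem t ht with htp | rfl | rfl | rfl
    · obtain ⟨ht1, ht2, ht3⟩ := hplvl t htp
      rw [e4 t ht3 ht2 ht1]
      have hle := (hps t htp).1
      rcases hmem s hs with hsp | rfl | rfl | rfl
      · obtain ⟨hs1, hs2, hs3⟩ := hplvl s hsp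
        rw [e4 s hs3 hs2 hs1]
        exact tri hconn hst u
      · rw [e3]; omega
      · rw [e2]; omega
      · rw [e1]; omega
    · -- t = x
      rw [e3]
      rcases hmem s hs with hsp | rfl | rfl | rfl
      · obtain ⟨hs1, hs2, hs3⟩ := hplvl s hsp
        rw [e4 s hs3 hs2 hs1]
        have := tri hconn hst u
        omega
      · exact (hst.ne rfl).elim
      · rw [e2]; omega
      · rw [e1]; omega
    · -- t = z
      rw [e2]
      rcases hmem s hs with hsp | rfl | rfl | rfl
      · exfalso
        have h5 := (hps s hsp).1
        have h6 := tri hconn hst u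
        omega
      · rw [e3]
      · exact (hst.ne rfl).elim
      · rw [e1]; omega
    · -- t = y
      rw [e1]
      rcases hmem s hs with hsp | rfl | rfl | rfl
      · exfalso
        have h5 := (hps s hsp).1
        have h6 := tri hconn hst u
        have h7 : G.dist u s = d := by omega
        have h8 : s = w := (hps s hsp).2 h7
        rw [h8] at hst
        exact hny hst
      · exact absurd hst hxy
      · rw [e2]
      · exact (hst.ne rfl).elim
  rw [e1] at key
  have hfu : f u = 0 := by
    rw [e4 u (Ne.symm hyu) (Ne.symm hzu) (Ne.symm hxu), SimpleGraph.dist_self]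
  rw [hfu] at key
  omega


private lemma helper {G : SimpleGraph V} (u : V) :
    ∀ {x₁ y : V} (r : G.Walk x₁ y) (d : ℕ),
      (∀ v ∈ r.support, d + 1 ≤ G.dist u v) →
      d + 2 ≤ G.dist u x₁ → G.dist u y = d + 1 →
      ∃ (b c : V), G.dist u b = d + 1 ∧ G.Adj c b ∧
        ∃ (w₁ : G.Walk x₁ c) (w₂ : G.Walk b y),
          (∀ v ∈ w₁.support, d + 2 ≤ G.dist u v) ∧
          (∀ v ∈ w₂.support, d + 1 ≤ G.dist u v) ∧
          w₁.length + 1 ≤ r.length ∧ w₂.length + 1 ≤ r.length := by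
  intro x₁ y r
  induction r with
  | nil =>
    intro d _ h2 h3
    exact absurd h3 (by omega)
  | @cons x₁ z y h r ih =>
    intro d hs h2 h3
    by_cases hz : G.dist u z = d + 1
    · refine ⟨z, x₁, hz, h, SimpleGraph.Walk.nil, r, ?_, ?_, ?_, ?_⟩
      · intro v hv
        simp only [SimpleGraph.Walk.support_nil, List.mem_singleton] at hv
        subst hv; exact h2
      · intro v hv; exact hs v (by simp [hv])
      · simp only [SimpleGraph.Walk.length_nil, SimpleGraph.Walk.length_cons]; omega
      · simp only [SimpleGraph.Walk.length_cons]; omega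
    · have hz2 : d + 2 ≤ G.dist u z := by
        have := hs z (by simp)
        omega
      obtain ⟨b, c, hb, hcb, w₁, w₂, a1, a2, a3, a4⟩ :=
        ih d (fun v hv => hs v (by simp [hv])) hz2 h3
      refine ⟨b, c, hb, hcb, SimpleGraph.Walk.cons h w₁, w₂, ?_, a2, ?_, ?_⟩
      · intro v hv
        simp only [SimpleGraph.Walk.support_cons, List.mem_cons] at hv
        rcases hv with rfl | hv'
        · exact h2
        · exact a1 v hv'
      · simp only [SimpleGraph.Walk.length_cons]; omega
      · simp only [SimpleGraph.Walk.length_cons]; omega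

private lemma key_s11 {G : SimpleGraph V} (hconn : G.Connected) (hDH : IsDistanceHereditary G)
    (u : V) :
    ∀ (n : ℕ) (w x y : V) (q : G.Walk x y), q.length ≤ n →
      (∀ v ∈ q.support, G.dist u w + 1 ≤ G.dist u v) →
      G.Adj w x → G.dist u y = G.dist u w + 1 → G.Adj w y := by
  intro n
  induction n with
  | zero =>
    intro w x y q hlen hsupp hwx hy
    cases q with
    | nil => exact hwx
    | cons h r => simp [SimpleGraph.Walk.length_cons] at hlen
  | succ n ih =>
    intro w x y q hlen hsupp hwx hy
    cases q with
    | nil => exact hwx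
    | @cons _ x₁ _ h r =>
      have hx : G.dist u x = G.dist u w + 1 :=
        le_antisymm (tri hconn hwx u) (hsupp x (by simp))
      have hx₁ : G.dist u w + 1 ≤ G.dist u x₁ := hsupp x₁ (by simp)
      simp only [SimpleGraph.Walk.length_cons] at hlen
      by_cases hcase : G.dist u x₁ = G.dist u w + 1
      · have hwx₁ : G.Adj w x₁ := adj_step hconn hDH u hwx h hx hcase
        exact ih w x₁ y r (by omega) (fun v hv => hsupp v (by simp [hv])) hwx₁ hy
      · have hx₁' : G.dist u x₁ = G.dist u w + 2 := by
          have := tri hconn h u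
          omega
        obtain ⟨b, c, hb, hcb, w₁, w₂, a1, a2, a3, a4⟩ :=
          helper u r (G.dist u w) (fun v hv => hsupp v (by simp [hv])) (by omega) hy
        have hbx₁ : G.Adj b x₁ := by
          apply ih b c x₁ w₁.reverse
          · rw [SimpleGraph.Walk.length_reverse]; omega
          · intro v hv
            rw [SimpleGraph.Walk.support_reverse, List.mem_reverse] at hv
            have := a1 v hv
            omega
          · exact hcb.symm
          · omega
        have hwb : G.Adj w b :=
          roof hconn hDH u hwx h hbx₁.symm hx hx₁' (by omega)
        exact ih w b y w₂ (by omega) (fun v hv => by have := a2 v hv; omega) hwb hy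


private lemma crux {G : SimpleGraph V} (hconn : G.Connected) (hDH : IsDistanceHereditary G)
    (u : V) {w w₁ w₂ y₁ y₂ : V} (d : ℕ) (hd : 1 ≤ d)
    (hw : G.dist u w = d) (hw₁ : G.dist u w₁ = d) (hw₂ : G.dist u w₂ = d)
    (hy₁ : G.dist u y₁ = d + 1) (hy₂ : G.dist u y₂ = d + 1)
    (h1 : G.Adj w y₁) (h2 : G.Adj w y₂) (h3 : G.Adj w₁ y₁) (h4 : G.Adj w₂ y₂)
    (n1 : ¬G.Adj w₁ y₂) (n2 : ¬G.Adj w₂ y₁) (n3 : ¬G.Adj y₁ y₂) (hne : y₁ ≠ y₂) : False := by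
  have hwu : w ≠ u := by
    intro h; rw [h, SimpleGraph.dist_self] at hw; omega
  obtain ⟨t, htw, htd⟩ := penult hconn hwu
  have ht : G.dist u t + 1 = d := by omega
  -- t is adjacent to w₁ via key applied to the walk w - y₁ - w₁ inside D_d
  have htw₁ : G.Adj t w₁ := by
    apply key_s11 hconn hDH u 2 t w w₁
      (SimpleGraph.Walk.cons h1 (SimpleGraph.Walk.cons h3.symm SimpleGraph.Walk.nil))
    · simp
    · intro v hv
      simp only [SimpleGraph.Walk.support_cons, SimpleGraph.Walk.support_nil, List.mem_cons,
        List.not_mem_nil, or_false] at hv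
      rcases hv with rfl | rfl | rfl <;> omega
    · exact htw
    · omega
  have htw₂ : G.Adj t w₂ := by
    apply key_s11 hconn hDH u 2 t w w₂
      (SimpleGraph.Walk.cons h2 (SimpleGraph.Walk.cons h4.symm SimpleGraph.Walk.nil))
    · simp
    · intro v hv
      simp only [SimpleGraph.Walk.support_cons, SimpleGraph.Walk.support_nil, List.mem_cons,
        List.not_mem_nil, or_false] at hv
      rcases hv with rfl | rfl | rfl <;> omega
    · exact htw
    · omega
  have n1' : ¬G.Adj y₂ w₁ := fun h => n1 h.symm
  have n2' : ¬G.Adj y₁ w₂ := fun h => n2 h.symm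
  have nty₁ : ¬G.Adj t y₁ := fun h => absurd (tri hconn h u) (by omega)
  have nty₂ : ¬G.Adj t y₂ := fun h => absurd (tri hconn h u) (by omega)
  have nty₁' : ¬G.Adj y₁ t := fun h => nty₁ h.symm
  have nty₂' : ¬G.Adj y₂ t := fun h => nty₂ h.symm
  have hdy₁y₂ : G.dist y₁ y₂ ≤ 2 := by
    have := SimpleGraph.dist_le (SimpleGraph.Walk.cons h1.symm
      (SimpleGraph.Walk.cons h2 SimpleGraph.Walk.nil))
    simpa using this
  by_cases c12 : G.Adj w₁ w₂
  · -- induced path y₁ w₁ w₂ y₂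
    exact path4 hconn hDH h3.symm c12 h4 n2' n3 n1 hdy₁y₂
  by_cases c01 : G.Adj w w₁
  · -- induced path y₂ w₂ t w₁, dist y₂ w₁ ≤ 2 via w
    have hdle : G.dist y₂ w₁ ≤ 2 := by
      have := SimpleGraph.dist_le (SimpleGraph.Walk.cons h2.symm
        (SimpleGraph.Walk.cons c01 SimpleGraph.Walk.nil))
      simpa using this
    exact path4 hconn hDH h4.symm htw₂.symm htw₁ nty₂' n1' (fun hh => c12 hh.symm) hdle
  by_cases c02 : G.Adj w w₂
  · have hdle : G.dist y₁ w₂ ≤ 2 := by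
      have := SimpleGraph.dist_le (SimpleGraph.Walk.cons h1.symm
        (SimpleGraph.Walk.cons c02 SimpleGraph.Walk.nil))
      simpa using this
    exact path4 hconn hDH h3.symm htw₁.symm htw₂ nty₁' n2' c12 hdle
  · -- induced path y₁ w₁ t w₂ y₂
    exact path5 hDH h3.symm htw₁.symm htw₂ h4 nty₁' n2' n3 c12 n1 nty₂ hdy₁y₂


private lemma charB {G : SimpleGraph V} (hconn : G.Connected) (hDH : IsDistanceHereditary G)
    (u : V) (i : ℕ) (hi : 1 ≤ i)
    (C : (G.induce {v : V | i ≤ G.dist u v}).ConnectedComponent) :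
    ∃ y : V, G.dist u y = i ∧ y ∈ Subtype.val '' C.supp ∧
      {w : V | w ∉ Subtype.val '' C.supp ∧ ∃ x ∈ Subtype.val '' C.supp, G.Adj w x}
        = {w : V | G.dist u w + 1 = i ∧ G.Adj w y} := by
  classical
  obtain ⟨v, hv⟩ := C.exists_rep
  have hvD : i ≤ G.dist u v.val := v.2
  obtain ⟨y, q, hy, hq⟩ := toLevel hconn u (G.dist u v.val) i v.val hi rfl hvD
  have hyD : i ≤ G.dist u y := le_of_eq hy.symm
  have hreach : (G.induce {v : V | i ≤ G.dist u v}).Reachable ⟨v.val, v.2⟩ ⟨y, hyD⟩ :=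
    reach_induce q hq v.2 hyD
  have hymem : (⟨y, hyD⟩ : {v : V | i ≤ G.dist u v}) ∈ C.supp := by
    rw [SimpleGraph.ConnectedComponent.mem_supp_iff, ← hv]
    exact (SimpleGraph.ConnectedComponent.sound hreach.symm)
  refine ⟨y, hy, ⟨⟨y, hyD⟩, hymem, rfl⟩, ?_⟩
  ext w
  simp only [Set.mem_setOf_eq]
  constructor
  · rintro ⟨hnot, x₀, hx₀, hadj⟩
    obtain ⟨x', hx's, hx'v⟩ := hx₀
    subst hx'v
    have hadj2 : G.Adj w x'.val := hadj
    have hx₀D : i ≤ G.dist u x'.val := x'.2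
    have hlt : G.dist u w < i := by
      by_contra hge
      push_neg at hge
      apply hnot
      have hadj' : (G.induce {v : V | i ≤ G.dist u v}).Adj ⟨w, hge⟩ x' := by
        cases x' with
        | mk xv xp => simpa using hadj2
      refine ⟨⟨w, hge⟩, ?_, rfl⟩
      rw [SimpleGraph.ConnectedComponent.mem_supp_iff]
      rw [← (SimpleGraph.ConnectedComponent.mem_supp_iff C x').mp hx's]
      exact SimpleGraph.ConnectedComponent.sound hadj'.reachable
    have hw1 : G.dist u w + 1 = i := by
      have := tri hconn hadj2 u
      omega
    refine ⟨hw1, ?_⟩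
    have hreach2 : (G.induce {v : V | i ≤ G.dist u v}).Reachable x' ⟨y, hyD⟩ := by
      apply SimpleGraph.ConnectedComponent.exact
      rw [(SimpleGraph.ConnectedComponent.mem_supp_iff C x').mp hx's,
        (SimpleGraph.ConnectedComponent.mem_supp_iff C _).mp hymem]
    obtain ⟨r2⟩ := hreach2
    obtain ⟨q2, hq2⟩ := walk_down r2
    apply key_s11 hconn hDH u q2.length w x'.val y q2 le_rfl
    · intro s hs
      have hmem : i ≤ G.dist u s := hq2 s hs
      omega
    · exact hadj2
    · omega
  · rintro ⟨hw1, hadjy⟩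
    refine ⟨?_, y, ⟨⟨y, hyD⟩, hymem, rfl⟩, hadjy⟩
    rintro ⟨w', hw's, hww⟩
    have h2 : i ≤ G.dist u w := by
      rw [← hww]; exact w'.2
    omega


end Aux

theorem stmt11 {V : Type*} [Fintype V] (G : SimpleGraph V)
    (hconn : G.Connected) (hDH : IsDistanceHereditary G) (u : V) :
    ∀ B₁ ∈ boundaries G u, ∀ B₂ ∈ boundaries G u,
      B₁ ∩ B₂ = ∅ ∨ B₁ ⊆ B₂ ∨ B₂ ⊆ B₁ := by
  intro B₁ hB₁ B₂ hB₂
  obtain ⟨i₁, hi₁, C₁, hBe₁⟩ := hB₁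
  obtain ⟨i₂, hi₂, C₂, hBe₂⟩ := hB₂
  obtain ⟨y₁, hy₁, hy₁m, hch₁⟩ := charB hconn hDH u i₁ hi₁ C₁
  obtain ⟨y₂, hy₂, hy₂m, hch₂⟩ := charB hconn hDH u i₂ hi₂ C₂
  have hB₁' : B₁ = {w | G.dist u w + 1 = i₁ ∧ G.Adj w y₁} := hBe₁.trans hch₁
  have hB₂' : B₂ = {w | G.dist u w + 1 = i₂ ∧ G.Adj w y₂} := hBe₂.trans hch₂
  by_cases hdis : B₁ ∩ B₂ = ∅
  · exact Or.inl hdis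
  rw [← Set.not_nonempty_iff_eq_empty, not_not] at hdis
  obtain ⟨w, hw₁, hw₂⟩ := hdis
  rw [hB₁'] at hw₁
  rw [hB₂'] at hw₂
  obtain ⟨dw1, aw1⟩ := hw₁
  obtain ⟨dw2, aw2⟩ := hw₂
  have hii : i₁ = i₂ := by omega
  subst hii
  by_cases hone : i₁ = 1
  · -- all boundary vertices equal u
    subst hone
    right; left
    intro s hs
    rw [hB₁'] at hs
    obtain ⟨ds, _⟩ := hs
    have hsw : s = w := by
      have h1 : G.dist u s = 0 := by omega
      have h2 : G.dist u w = 0 := by omega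
      rw [hconn.dist_eq_zero_iff] at h1 h2
      rw [← h1, h2]
    rw [hB₂', hsw]
    exact ⟨dw2, aw2⟩
  · by_cases hC : C₁ = C₂
    · subst hC
      right; left
      rw [hBe₁, hBe₂]
    · by_cases h12 : B₁ ⊆ B₂
      · exact Or.inr (Or.inl h12)
      by_cases h21 : B₂ ⊆ B₁
      · exact Or.inr (Or.inr h21)
      exfalso
      rw [Set.not_subset] at h12 h21
      obtain ⟨w₁, hw₁B, hw₁n⟩ := h12
      obtain ⟨w₂, hw₂B, hw₂n⟩ := h21
      rw [hB₁'] at hw₁B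
      rw [hB₂'] at hw₂B
      rw [hB₂'] at hw₁n
      rw [hB₁'] at hw₂n
      obtain ⟨dw₁, aw₁⟩ := hw₁B
      obtain ⟨dw₂, aw₂⟩ := hw₂B
      have naw₁ : ¬G.Adj w₁ y₂ := by
        intro h
        exact hw₁n ⟨by omega, h⟩
      have naw₂ : ¬G.Adj w₂ y₁ := by
        intro h
        exact hw₂n ⟨by omega, h⟩
      -- y₁ ≠ y₂ and non-adjacent since different components
      obtain ⟨a₁, ha₁, hv₁⟩ := hy₁m
      obtain ⟨a₂, ha₂, hv₂⟩ := hy₂m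
      have hyne : y₁ ≠ y₂ := by
        intro he
        apply hC
        have haa : a₁ = a₂ := Subtype.ext (hv₁.trans (he.trans hv₂.symm))
        rw [← (SimpleGraph.ConnectedComponent.mem_supp_iff C₁ a₁).mp ha₁, haa,
          (SimpleGraph.ConnectedComponent.mem_supp_iff C₂ a₂).mp ha₂]
      have hnadj : ¬G.Adj y₁ y₂ := by
        intro hadj
        apply hC
        have hadj' : (G.induce {v : V | i₁ ≤ G.dist u v}).Adj a₁ a₂ := by
          cases a₁ with
          | mk v₁ p₁ =>
            cases a₂ with
            | mk v₂ p₂ =>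
              simp only at hv₁ hv₂
              subst hv₁; subst hv₂
              simpa using hadj
        rw [← (SimpleGraph.ConnectedComponent.mem_supp_iff C₁ a₁).mp ha₁,
          ← (SimpleGraph.ConnectedComponent.mem_supp_iff C₂ a₂).mp ha₂]
        exact SimpleGraph.ConnectedComponent.sound hadj'.reachable
      exact crux hconn hDH u (G.dist u w) (by omega) rfl (by omega) (by omega)
        (by omega) (by omega) aw1 aw2 aw₁ aw₂ naw₁ naw₂ hnadj hyne
end

section
/- Let G be a connected distance-hereditary finite simple graph, let u be a vertex of G, and let B be an inclusion-minimal set of B(u). If B is an independent set of G, then the vertices of B are pairwise false twins, i.e., any two distinct vertices x, y ∈ B satisfy N_G(x) = N_G(y). -/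
open SimpleGraph

namespace DH12
variable {V : Type*} {G : SimpleGraph V}

lemma induceAdj {W : Set V} {a b : W} (h : G.Adj a.1 b.1) : (G.induce W).Adj a b := by
  simp [SimpleGraph.comap_adj]; exact h

lemma induceAdj' {W : Set V} {a b : W} (h : (G.induce W).Adj a b) : G.Adj a.1 b.1 := by
  simpa [SimpleGraph.comap_adj] using h

/-- lift a `G`-walk with support in `W` to reachability in the induced graph -/
lemma reach_of_walk {W : Set V} {a c : V} (p : G.Walk a c)
    (hp : ∀ x ∈ p.support, x ∈ W) (ha : a ∈ W) (hc : c ∈ W) :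
    (G.induce W).Reachable ⟨a, ha⟩ ⟨c, hc⟩ := by
  induction p with
  | nil => exact Reachable.refl _
  | @cons u v w h q ih =>
    have hv : v ∈ W := hp v (by simp)
    exact (induceAdj (a := ⟨u, ha⟩) (b := ⟨v, hv⟩) h).reachable.trans
      (ih (fun x hx => hp x (by simp [hx])) hv hc)

/-- extract a `G`-walk from a walk of an induced graph -/
lemma walk_of_induce {W : Set V} {a c : W} (p : (G.induce W).Walk a c) :
    ∃ q : G.Walk a.1 c.1, ∀ x ∈ q.support, x ∈ W := by
  induction p with
  | nil => exact ⟨.nil, by simp⟩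
  | @cons u v w h q ih =>
    obtain ⟨q', hq'⟩ := ih
    refine ⟨.cons (induceAdj' h) q', ?_⟩
    intro x hx
    rcases (by simpa using hx : x = u.1 ∨ x ∈ q'.support) with rfl | hx
    · exact u.2
    · exact hq' x hx

lemma phi_walk {W : Set V} (φ : V → ℕ)
    (hφ : ∀ a ∈ W, ∀ b ∈ W, G.Adj a b → φ b ≤ φ a + 1)
    {s t : W} (p : (G.induce W).Walk s t) : φ t ≤ φ s + p.length := by
  induction p with
  | nil => simp
  | @cons u v w h q ih =>
    have := hφ u.1 u.2 v.1 v.2 (induceAdj' h)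
    simp only [Walk.length_cons]
    omega

lemma dh_bound (hDH : IsDistanceHereditary G) {W : Set V}
    (hc : (G.induce W).Connected) (φ : V → ℕ)
    (hφ : ∀ a ∈ W, ∀ b ∈ W, G.Adj a b → φ b ≤ φ a + 1)
    {s t : V} (hs : s ∈ W) (ht : t ∈ W) : φ t ≤ φ s + G.dist s t := by
  obtain ⟨p, hp⟩ := (hc.preconnected ⟨s, hs⟩ ⟨t, ht⟩).exists_walk_length_eq_dist
  have h1 := phi_walk φ hφ p
  rw [hp, hDH W hc ⟨s, hs⟩ ⟨t, ht⟩] at h1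
  exact h1

lemma adj_level (hconn : G.Connected) {u x y : V} (h : G.Adj x y) :
    G.dist u y ≤ G.dist u x + 1 := by
  obtain ⟨p, hp⟩ := hconn.exists_walk_length_eq_dist u x
  have := SimpleGraph.dist_le (p.concat h)
  rwa [Walk.length_concat, hp] at this

lemma exists_down (hconn : G.Connected) {u x : V} {j : ℕ} (hx : G.dist u x = j + 1) :
    ∃ y, G.Adj y x ∧ G.dist u y = j := by
  have hne : u ≠ x := by rintro rfl; simp [SimpleGraph.dist_self] at hx
  obtain ⟨p, hp⟩ := hconn.exists_walk_length_eq_dist u x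
  obtain ⟨y, hadj, q', hq⟩ := Walk.exists_eq_cons_of_ne hne.symm p.reverse
  have hlen : q'.length = j := by
    have := congrArg Walk.length hq
    simp only [Walk.length_reverse, Walk.length_cons, hp, hx] at this
    omega
  refine ⟨y, hadj.symm, ?_⟩
  have h1 : G.dist u y ≤ j := by
    have := SimpleGraph.dist_le q'.reverse
    simpa [hlen] using this
  have h2 := adj_level hconn (u := u) hadj.symm
  omega

lemma support_dist [DecidableEq V] {u b x : V} (hconn : G.Connected) (p : G.Walk u b)
    (hp : p.length = G.dist u b) (hx : x ∈ p.support) :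
    G.dist u x + G.dist x b = G.dist u b := by
  have hsplit := p.take_spec hx
  have hlen : (p.takeUntil x hx).length + (p.dropUntil x hx).length = G.dist u b := by
    rw [← hp, ← Walk.length_append, hsplit]
  have h1 := SimpleGraph.dist_le (p.takeUntil x hx)
  have h2 := SimpleGraph.dist_le (p.dropUntil x hx)
  have h3 := hconn.dist_triangle (u := u) (v := x) (w := b)
  omega


/-- flat lemma: `b` at level `j` adjacent to `v` at level `j+1`;
if `w` at level `j+1` is adjacent to `v` then `b ~ w`. -/
lemma flat [DecidableEq V] (hconn : G.Connected) (hDH : IsDistanceHereditary G)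
    {u b v w : V} {j : ℕ} (hb : G.dist u b = j) (hv : G.dist u v = j + 1)
    (hw : G.dist u w = j + 1) (hbv : G.Adj b v) (hvw : G.Adj v w) : G.Adj b w := by
  by_cases hvw_eq : v = w
  · exact hvw_eq ▸ hbv
  by_contra hbw
  obtain ⟨p, hp⟩ := hconn.exists_walk_length_eq_dist u b
  have hp' : p.length = G.dist u b := hp
  set W : Set V := {x | x ∈ p.support} ∪ {v, w} with hW
  have hsup : ∀ x ∈ p.support, G.dist u x + G.dist x b = j := by
    intro x hx; rw [← hb]; exact support_dist hconn p hp hx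
  have hsup_le : ∀ x ∈ p.support, G.dist u x ≤ j := fun x hx => by have := hsup x hx; omega
  have hsup_eq : ∀ x ∈ p.support, G.dist u x = j → x = b := by
    intro x hx hxj
    have h1 := hsup x hx
    have h2 : G.dist x b = 0 := by omega
    exact (hconn.dist_eq_zero_iff.mp h2)
  have hvW : v ∈ W := by right; left; rfl
  have hwW : w ∈ W := by right; right; rfl
  have huW : u ∈ W := by left; exact p.start_mem_support
  have hbW : b ∈ W := by left; exact p.end_mem_support
  have hvns : v ∉ p.support := fun hmem => by have := hsup_le v hmem; omega
  have hwns : w ∉ p.support := fun hmem => by have := hsup_le w hmem; omega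
  -- connectivity
  have hreach : ∀ x (hx : x ∈ W), (G.induce W).Reachable ⟨x, hx⟩ ⟨b, hbW⟩ := by
    intro x hx
    rcases hx with hx | hx
    · exact reach_of_walk (p.dropUntil x hx) (fun y hy => Or.inl (p.support_dropUntil_subset hx hy)) (Or.inl hx) hbW
    · rcases hx with rfl | rfl
      · exact ((induceAdj (a := ⟨b, hbW⟩) (b := ⟨x, hvW⟩) hbv).reachable).symm
      · exact ((induceAdj (a := ⟨v, hvW⟩) (b := ⟨x, hwW⟩) hvw).reachable.symm).trans
          ((induceAdj (a := ⟨b, hbW⟩) (b := ⟨v, hvW⟩) hbv).reachable).symm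
  have hcW : (G.induce W).Connected := by
    rw [SimpleGraph.connected_iff]
    exact ⟨fun x y => (hreach x.1 x.2).trans (hreach y.1 y.2).symm, ⟨⟨u, huW⟩⟩⟩
  -- potential function
  set φ : V → ℕ := fun x => if x = w then j + 2 else if x = v then j + 1 else G.dist u x with hφdef
  have hφv : φ v = j + 1 := by simp [hφdef, hvw_eq]
  have hφw : φ w = j + 2 := by simp [hφdef]
  have hφs : ∀ x ∈ p.support, φ x = G.dist u x := by
    intro x hx
    have h1 : x ≠ w := fun h => hwns (h ▸ hx)
    have h2 : x ≠ v := fun h => hvns (h ▸ hx)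
    simp [hφdef, h1, h2]
  have hφ : ∀ a ∈ W, ∀ c ∈ W, G.Adj a c → φ c ≤ φ a + 1 := by
    intro a ha c hc hadj
    have hcases : ∀ x, x ∈ W → x = v ∨ x = w ∨ x ∈ p.support := by
      intro x hx
      rcases hx with hx | hx
      · right; right; exact hx
      · rcases hx with rfl | rfl
        · left; rfl
        · right; left; rfl
    rcases hcases a ha with rfl | rfl | has
    · -- a = v
      rcases hcases c hc with rfl | rfl | hcs
      · exact absurd rfl hadj.ne
      · rw [hφv, hφw]
      · rw [hφs c hcs, hφv]; have := hsup_le c hcs; omega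
    · -- a = w
      rcases hcases c hc with rfl | rfl | hcs
      · rw [hφv, hφw]; omega
      · exact absurd rfl hadj.ne
      · rw [hφs c hcs, hφw]; have := hsup_le c hcs; omega
    · rcases hcases c hc with rfl | rfl | hcs
      · -- c = v : a in support adjacent to v forces level j
        rw [hφs a has, hφv]
        have h1 := adj_level hconn (u := u) hadj
        rw [hv] at h1; omega
      · -- c = w : impossible
        exfalso
        have h1 := adj_level hconn (u := u) hadj
        rw [hw] at h1
        have h2 := hsup_le a has
        have h3 : G.dist u a = j := by omega
        exact hbw ((hsup_eq a has h3) ▸ hadj)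
      · rw [hφs a has, hφs c hcs]
        exact adj_level hconn hadj
  have hmain := dh_bound hDH hcW φ hφ huW hwW
  have hφu : φ u = 0 := by
    rw [hφs u p.start_mem_support, SimpleGraph.dist_self]
  rw [hφu, hφw, hw] at hmain
  omega

/-- peak lemma: `b~v`, `v~z`, `z~w` with levels `j, j+1, j+2, j+1` implies `b~w`. -/
lemma peak [DecidableEq V] (hconn : G.Connected) (hDH : IsDistanceHereditary G)
    {u b v z w : V} {j : ℕ} (hb : G.dist u b = j) (hv : G.dist u v = j + 1)
    (hz : G.dist u z = j + 2) (hw : G.dist u w = j + 1)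
    (hbv : G.Adj b v) (hvz : G.Adj v z) (hzw : G.Adj z w) : G.Adj b w := by
  by_cases hvw_eq : v = w
  · exact hvw_eq ▸ hbv
  by_cases hvw : G.Adj v w
  · exact flat hconn hDH hb hv hw hbv hvw
  by_contra hbw
  obtain ⟨p, hp⟩ := hconn.exists_walk_length_eq_dist u b
  have hp' : p.length = G.dist u b := hp
  set W : Set V := {x | x ∈ p.support} ∪ {v, z, w} with hW
  have hsup : ∀ x ∈ p.support, G.dist u x + G.dist x b = j := by
    intro x hx; rw [← hb]; exact support_dist hconn p hp hx
  have hsup_le : ∀ x ∈ p.support, G.dist u x ≤ j := fun x hx => by have := hsup x hx; omega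
  have hsup_eq : ∀ x ∈ p.support, G.dist u x = j → x = b := by
    intro x hx hxj
    have h1 := hsup x hx
    have h2 : G.dist x b = 0 := by omega
    exact (hconn.dist_eq_zero_iff.mp h2)
  have hvW : v ∈ W := by right; left; rfl
  have hzW : z ∈ W := by right; right; left; rfl
  have hwW : w ∈ W := by right; right; right; rfl
  have huW : u ∈ W := by left; exact p.start_mem_support
  have hbW : b ∈ W := by left; exact p.end_mem_support
  have hvns : v ∉ p.support := fun hmem => by have := hsup_le v hmem; omega
  have hzns : z ∉ p.support := fun hmem => by have := hsup_le z hmem; omega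
  have hwns : w ∉ p.support := fun hmem => by have := hsup_le w hmem; omega
  have hreach : ∀ x (hx : x ∈ W), (G.induce W).Reachable ⟨x, hx⟩ ⟨b, hbW⟩ := by
    intro x hx
    have rbv : (G.induce W).Reachable ⟨v, hvW⟩ ⟨b, hbW⟩ :=
      ((induceAdj (a := ⟨b, hbW⟩) (b := ⟨v, hvW⟩) hbv).reachable).symm
    have rzv : (G.induce W).Reachable ⟨z, hzW⟩ ⟨v, hvW⟩ :=
      ((induceAdj (a := ⟨v, hvW⟩) (b := ⟨z, hzW⟩) hvz).reachable).symm
    rcases hx with hx | hx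
    · exact reach_of_walk (p.dropUntil x hx) (fun y hy => Or.inl (p.support_dropUntil_subset hx hy)) (Or.inl hx) hbW
    · rcases hx with rfl | rfl | rfl
      · exact rbv
      · exact rzv.trans rbv
      · exact ((induceAdj (a := ⟨z, hzW⟩) (b := ⟨x, hwW⟩) hzw).reachable).symm.trans (rzv.trans rbv)
  have hcW : (G.induce W).Connected := by
    rw [SimpleGraph.connected_iff]
    exact ⟨fun x y => (hreach x.1 x.2).trans (hreach y.1 y.2).symm, ⟨⟨u, huW⟩⟩⟩
  set φ : V → ℕ := fun x => if x = w then j + 3 else if x = z then j + 2 else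
    if x = v then j + 1 else G.dist u x with hφdef
  have hzw_ne : z ≠ w := by intro h; rw [h, hw] at hz; omega
  have hvz_ne : v ≠ z := by intro h; rw [h, hz] at hv; omega
  have hφv : φ v = j + 1 := by simp [hφdef, hvw_eq, hvz_ne]
  have hφz : φ z = j + 2 := by simp [hφdef, hzw_ne]
  have hφw : φ w = j + 3 := by simp [hφdef]
  have hφs : ∀ x ∈ p.support, φ x = G.dist u x := by
    intro x hx
    have h1 : x ≠ w := fun h => hwns (h ▸ hx)
    have h2 : x ≠ v := fun h => hvns (h ▸ hx)
    have h3 : x ≠ z := fun h => hzns (h ▸ hx)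
    simp [hφdef, h1, h2, h3]
  have hφ : ∀ a ∈ W, ∀ c ∈ W, G.Adj a c → φ c ≤ φ a + 1 := by
    intro a ha c hc hadj
    have hcases : ∀ x, x ∈ W → x = v ∨ x = z ∨ x = w ∨ x ∈ p.support := by
      intro x hx
      rcases hx with hx | hx
      · right; right; right; exact hx
      · rcases hx with rfl | rfl | rfl
        · left; rfl
        · right; left; rfl
        · right; right; left; rfl
    have hlev : ∀ x y : V, G.Adj x y → G.dist u y ≤ G.dist u x + 1 := fun x y h => adj_level hconn h
    rcases hcases a ha with rfl | rfl | rfl | has <;> rcases hcases c hc with rfl | rfl | rfl | hcs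
    · exact absurd rfl hadj.ne
    · rw [hφv, hφz]
    · exact absurd hadj hvw
    · rw [hφs c hcs, hφv]; have := hsup_le c hcs; omega
    · rw [hφv, hφz]; omega
    · exact absurd rfl hadj.ne
    · rw [hφz, hφw]
    · exfalso; have := hlev c a hadj.symm; rw [hz] at this; have := hsup_le c hcs; omega
    · exact absurd hadj.symm hvw
    · rw [hφz, hφw]; omega
    · exact absurd rfl hadj.ne
    · rw [hφs c hcs, hφw]; have := hsup_le c hcs; omega
    · -- a in support, c = v
      rw [hφs a has, hφv]
      have h1 := hlev a c hadj; rw [hv] at h1; omega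
    · exfalso; have := hlev a c hadj; rw [hz] at this; have := hsup_le a has; omega
    · -- a in support, c = w : forces a = b, contradiction
      exfalso
      have h1 := hlev a c hadj; rw [hw] at h1
      have h2 := hsup_le a has
      have h3 : G.dist u a = j := by omega
      exact hbw ((hsup_eq a has h3) ▸ hadj)
    · rw [hφs a has, hφs c hcs]; exact hlev a c hadj
  have hmain := dh_bound hDH hcW φ hφ huW hwW
  have hφu : φ u = 0 := by
    rw [hφs u p.start_mem_support, SimpleGraph.dist_self]
  rw [hφu, hφw, hw] at hmain
  omega


/-- excess of a walk over level `i` -/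
noncomputable def exc (G : SimpleGraph V) (u : V) (i : ℕ) {a c : V} (p : G.Walk a c) : ℕ :=
  (p.support.map (fun x => G.dist u x - i)).sum

lemma exc_cons (u : V) (i : ℕ) {a a₂ c : V} (h : G.Adj a a₂) (q : G.Walk a₂ c) :
    exc G u i (.cons h q) = (G.dist u a - i) + exc G u i q := by
  simp [exc]

lemma exc_nil (u : V) (i : ℕ) {a : V} : exc G u i (.nil : G.Walk a a) = G.dist u a - i := by
  simp [exc]

lemma list_shift (G : SimpleGraph V) (u : V) (i : ℕ) :
    ∀ l : List V, (∀ x ∈ l, i + 1 ≤ G.dist u x) →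
      (l.map (fun x => G.dist u x - (i + 1))).sum + l.length
        = (l.map (fun x => G.dist u x - i)).sum := by
  intro l
  induction l with
  | nil => simp
  | cons x l ih =>
    intro hp
    have hx : i + 1 ≤ G.dist u x := hp x List.mem_cons_self
    have ih' := ih (fun y hy => hp y (List.mem_cons_of_mem x hy))
    simp only [List.map_cons, List.sum_cons, List.length_cons]
    omega

lemma exc_shift (u : V) (i : ℕ) {a c : V} (p : G.Walk a c)
    (hp : ∀ x ∈ p.support, i + 1 ≤ G.dist u x) :
    exc G u (i + 1) p + p.support.length = exc G u i p :=
  list_shift G u i p.support hp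

lemma firstHit (u : V) {i : ℕ} :
    ∀ {a c : V} (q : G.Walk a c), i + 1 ≤ G.dist u a → G.dist u c = i →
    (∀ x ∈ q.support, i ≤ G.dist u x) →
    ∃ (a' m : V) (q1 : G.Walk a a') (q2 : G.Walk m c), G.Adj a' m ∧
      (∀ x ∈ q1.support, i + 1 ≤ G.dist u x) ∧ G.dist u m = i ∧
      (∀ x ∈ q2.support, i ≤ G.dist u x) ∧
      exc G u i q1 + exc G u i q2 ≤ exc G u i q ∧ 1 ≤ exc G u i q1 := by
  intro a c q
  induction q with
  | nil => intro h1 h2 _; omega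
  | @cons a a₂ c h q' ih =>
    intro h1 h2 hsupp
    by_cases hm : G.dist u a₂ = i
    · refine ⟨a, a₂, .nil, q', h, ?_, hm, ?_, ?_, ?_⟩
      · intro x hx; simp at hx; subst hx; exact h1
      · intro x hx; exact hsupp x (by simp [hx])
      · rw [exc_cons, exc_nil]
      · rw [exc_nil]; omega
    · have h1' : i + 1 ≤ G.dist u a₂ := by
        have := hsupp a₂ (by simp); omega
      obtain ⟨a', m, q1', q2, hadj', hs1, hmm, hs2, hexc12, hexc1⟩ :=
        ih h1' h2 (fun x hx => hsupp x (by simp [hx]))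
      refine ⟨a', m, .cons h q1', q2, hadj', ?_, hmm, hs2, ?_, ?_⟩
      · intro x hx
        rcases (by simpa using hx : x = a ∨ x ∈ q1'.support) with rfl | hx
        · exact h1
        · exact hs1 x hx
      · rw [exc_cons, exc_cons]; omega
      · rw [exc_cons]; omega

lemma L1core [DecidableEq V] (hconn : G.Connected) (hDH : IsDistanceHereditary G) (u : V) :
    ∀ t k : ℕ, ∀ (j : ℕ) (b : V), ∀ {v w : V} (p : G.Walk v w),
    exc G u (j + 1) p ≤ t → p.length ≤ k →
    (∀ x ∈ p.support, j + 1 ≤ G.dist u x) →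
    G.dist u v = j + 1 → G.dist u w = j + 1 → G.dist u b = j →
    G.Adj b v → G.Adj b w := by
  intro t
  induction t using Nat.strong_induction_on with
  | _ t iht =>
  intro k
  induction k using Nat.strong_induction_on with
  | _ k ihk =>
  intro j b v w p hexc hlen hsupp hv hw hb hbv
  cases p with
  | nil => exact hbv
  | @cons _ v₂ _ hadj q =>
    have h1 : j + 1 ≤ G.dist u v₂ := hsupp v₂ (by simp)
    have h2 : G.dist u v₂ ≤ j + 2 := by
      have := adj_level hconn (u := u) hadj; omega
    have hlenq : q.length < k := by
      simp only [Walk.length_cons] at hlen; omega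
    have hexcq : exc G u (j + 1) q ≤ t := by
      rw [exc_cons] at hexc; omega
    by_cases hcase : G.dist u v₂ = j + 1
    · have hbv2 : G.Adj b v₂ := flat hconn hDH hb hv hcase hbv hadj
      exact ihk q.length hlenq j b q hexcq le_rfl
        (fun x hx => hsupp x (by simp [hx])) hcase hw hb hbv2
    · have hv2 : G.dist u v₂ = j + 2 := by omega
      obtain ⟨a', m, q1, q2, hadj', hs1, hm, hs2, hexc12, hexc1⟩ :=
        firstHit u (i := j + 1) q (by omega) hw (fun x hx => by have := hsupp x (by simp [hx]); omega)
      have ha' : G.dist u a' = j + 2 := by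
        have hle := adj_level hconn (u := u) (hadj'.symm)
        have hge := hs1 a' q1.end_mem_support
        rw [hm] at hle; omega
      have hshift : exc G u (j + 2) q1 + q1.support.length = exc G u (j + 1) q1 := by
        have h := exc_shift u (j + 1) q1 hs1
        norm_num at h ⊢
        convert h using 3
      have hpos : 1 ≤ q1.support.length := by
        have := q1.support_ne_nil
        cases hsup : q1.support with
        | nil => exact absurd hsup this
        | cons _ _ => simp
      have ht1 : 1 ≤ t := by omega
      have hq1exc : exc G u (j + 2) q1 ≤ t - 1 := by omega
      have hva' : G.Adj v a' :=
        iht (t - 1) (by omega) q1.length (j + 1) v q1 hq1exc le_rfl hs1 hv2 ha' hv hadj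
      have hbm : G.Adj b m := peak hconn hDH hb hv ha' hm hbv hva' hadj'
      exact iht (t - 1) (by omega) q2.length j b q2 (by omega) le_rfl hs2 hm hw hb hbm


lemma mem_image_supp {S : Set V} {C : (G.induce S).ConnectedComponent} {x : V} :
    x ∈ Subtype.val '' C.supp ↔
      ∃ hx : x ∈ S, (G.induce S).connectedComponentMk ⟨x, hx⟩ = C := by
  constructor
  · rintro ⟨⟨a, ha⟩, haC, rfl⟩
    exact ⟨ha, (ConnectedComponent.mem_supp_iff _ _).mp haC⟩
  · rintro ⟨hx, hC⟩
    exact ⟨⟨x, hx⟩, (ConnectedComponent.mem_supp_iff _ _).mpr hC, rfl⟩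

lemma supp_closed {S : Set V} {C : (G.induce S).ConnectedComponent} {x y : V}
    (hx : x ∈ Subtype.val '' C.supp) (hadj : G.Adj x y) (hy : y ∈ S) :
    y ∈ Subtype.val '' C.supp := by
  rw [mem_image_supp] at hx ⊢
  obtain ⟨hxS, hC⟩ := hx
  refine ⟨hy, ?_⟩
  rw [← hC]
  exact ConnectedComponent.sound
    ((induceAdj (a := ⟨y, hy⟩) (b := ⟨x, hxS⟩) hadj.symm).reachable)

lemma keyAdj [DecidableEq V] (hconn : G.Connected) (hDH : IsDistanceHereditary G)
    (u : V) {j : ℕ}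
    (C : (G.induce {v : V | j + 1 ≤ G.dist u v}).ConnectedComponent) {b w : V}
    (hb : G.dist u b = j)
    (hbC : ∃ c ∈ Subtype.val '' C.supp, G.Adj b c)
    (hw : G.dist u w = j + 1) (hwC : w ∈ Subtype.val '' C.supp) : G.Adj b w := by
  obtain ⟨c, hcC, hbc⟩ := hbC
  obtain ⟨hcS, hcmk⟩ := mem_image_supp.mp hcC
  have hcS' : j + 1 ≤ G.dist u c := hcS
  have hc : G.dist u c = j + 1 := by
    have := adj_level hconn (u := u) hbc; omega
  obtain ⟨hwS, hwmk⟩ := mem_image_supp.mp hwC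
  have hmk : (G.induce {v : V | j + 1 ≤ G.dist u v}).connectedComponentMk ⟨c, hcS⟩
      = (G.induce {v : V | j + 1 ≤ G.dist u v}).connectedComponentMk ⟨w, hwS⟩ := by
    rw [hcmk, hwmk]
  obtain ⟨pw⟩ := (ConnectedComponent.eq).mp hmk
  obtain ⟨q, hq⟩ := walk_of_induce pw
  exact L1core hconn hDH u (exc G u (j + 1) q) q.length j b q le_rfl le_rfl
    (fun x hx => hq x hx) hc hw hb hbc

lemma boundary_dist (hconn : G.Connected) (u : V) {j : ℕ}
    {C : (G.induce {v : V | j + 1 ≤ G.dist u v}).ConnectedComponent} {b : V}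
    (hb1 : b ∉ Subtype.val '' C.supp) (hb2 : ∃ c ∈ Subtype.val '' C.supp, G.Adj b c) :
    G.dist u b = j := by
  obtain ⟨c, hcC, hbc⟩ := hb2
  obtain ⟨hcS, -⟩ := mem_image_supp.mp hcC
  have hcS' : j + 1 ≤ G.dist u c := hcS
  have hge : j ≤ G.dist u b := by
    have := adj_level hconn (u := u) hbc; omega
  have hlt : G.dist u b < j + 1 := by
    by_contra hcon
    push_neg at hcon
    exact hb1 (supp_closed hcC hbc.symm hcon)
  omega

lemma exists_level (hconn : G.Connected) (u : V) {j : ℕ}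
    (C : (G.induce {v : V | j + 1 ≤ G.dist u v}).ConnectedComponent) :
    ∃ h ∈ Subtype.val '' C.supp, G.dist u h = j + 1 := by
  obtain ⟨⟨c, hcS⟩, hc⟩ := C.exists_rep
  have hcC : c ∈ Subtype.val '' C.supp := mem_image_supp.mpr ⟨hcS, hc⟩
  clear hc
  have key : ∀ n (c : V), c ∈ Subtype.val '' C.supp → G.dist u c = n →
      ∃ h ∈ Subtype.val '' C.supp, G.dist u h = j + 1 := by
    intro n
    induction n using Nat.strong_induction_on with
    | _ n ih =>
      intro c hcC hn
      have hcS' : j + 1 ≤ G.dist u c := (mem_image_supp.mp hcC).1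
      by_cases hn' : n = j + 1
      · exact ⟨c, hcC, hn' ▸ hn⟩
      · have hn2 : n = (n - 1) + 1 := by omega
        obtain ⟨y, hy, hyd⟩ := exists_down hconn (hn2 ▸ hn)
        have hyS : j + 1 ≤ G.dist u y := by omega
        exact ih (n - 1) (by omega) y (supp_closed hcC hy.symm hyS) hyd
  exact key _ c hcC rfl


lemma P4 (hDH : IsDistanceHereditary G) {a b c e : V}
    (hab : G.Adj a b) (hbc : G.Adj b c) (hce : G.Adj c e)
    (hac : ¬G.Adj a c) (hae : ¬G.Adj a e) (hbe : ¬G.Adj b e)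
    (hac' : a ≠ c) (hae' : a ≠ e) (hbe' : b ≠ e) : 3 ≤ G.dist a e := by
  set W : Set V := {a, b, c, e} with hW
  have haW : a ∈ W := by simp [hW]
  have hbW : b ∈ W := by simp [hW]
  have hcW : c ∈ W := by simp [hW]
  have heW : e ∈ W := by simp [hW]
  have hreach : ∀ x (hx : x ∈ W), (G.induce W).Reachable ⟨x, hx⟩ ⟨a, haW⟩ := by
    intro x hx
    have rba : (G.induce W).Reachable ⟨b, hbW⟩ ⟨a, haW⟩ :=
      (induceAdj (a := ⟨b, hbW⟩) (b := ⟨a, haW⟩) hab.symm).reachable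
    have rcb : (G.induce W).Reachable ⟨c, hcW⟩ ⟨b, hbW⟩ :=
      (induceAdj (a := ⟨c, hcW⟩) (b := ⟨b, hbW⟩) hbc.symm).reachable
    have rec' : (G.induce W).Reachable ⟨e, heW⟩ ⟨c, hcW⟩ :=
      (induceAdj (a := ⟨e, heW⟩) (b := ⟨c, hcW⟩) hce.symm).reachable
    have hx' : x = a ∨ x = b ∨ x = c ∨ x = e := by simpa [hW] using hx
    rcases hx' with rfl | rfl | rfl | rfl
    · exact Reachable.refl _
    · exact rba
    · exact rcb.trans rba
    · exact (rec'.trans rcb).trans rba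
  have hconnW : (G.induce W).Connected := by
    rw [SimpleGraph.connected_iff]
    exact ⟨fun p q => (hreach p.1 p.2).trans (hreach q.1 q.2).symm, ⟨⟨a, haW⟩⟩⟩
  classical
  set φ : V → ℕ := fun x => if x = a then 0 else if x = b then 1 else if x = c then 2 else 3
    with hφdef
  have hφa : φ a = 0 := by simp [hφdef]
  have hφb : φ b = 1 := by simp [hφdef, hab.ne']
  have hφc : φ c = 2 := by simp [hφdef, hac'.symm, hbc.ne']
  have hφe : φ e = 3 := by simp [hφdef, hae'.symm, hbe'.symm, hce.ne']
  have hφ : ∀ p ∈ W, ∀ q ∈ W, G.Adj p q → φ q ≤ φ p + 1 := by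
    intro p hp q hq hadj
    have hp' : p = a ∨ p = b ∨ p = c ∨ p = e := by simpa [hW] using hp
    have hq' : q = a ∨ q = b ∨ q = c ∨ q = e := by simpa [hW] using hq
    rcases hp' with rfl | rfl | rfl | rfl <;> rcases hq' with rfl | rfl | rfl | rfl <;>
      first
      | exact absurd rfl hadj.ne
      | exact absurd hadj hac
      | exact absurd hadj.symm hac
      | exact absurd hadj hae
      | exact absurd hadj.symm hae
      | exact absurd hadj hbe
      | exact absurd hadj.symm hbe
      | omega
  have hmain := dh_bound hDH hconnW φ hφ haW heW
  omega

lemma P5 (hDH : IsDistanceHereditary G) {a b c d e : V}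
    (hab : G.Adj a b) (hbc : G.Adj b c) (hcd : G.Adj c d) (hde : G.Adj d e)
    (hac : ¬G.Adj a c) (had : ¬G.Adj a d) (hae : ¬G.Adj a e)
    (hbd : ¬G.Adj b d) (hbe : ¬G.Adj b e) (hce : ¬G.Adj c e)
    (hac' : a ≠ c) (had' : a ≠ d) (hae' : a ≠ e)
    (hbd' : b ≠ d) (hbe' : b ≠ e) (hce' : c ≠ e) : 3 ≤ G.dist a e := by
  set W : Set V := {a, b, c, d, e} with hW
  have haW : a ∈ W := by simp [hW]
  have hbW : b ∈ W := by simp [hW]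
  have hcW : c ∈ W := by simp [hW]
  have hdW : d ∈ W := by simp [hW]
  have heW : e ∈ W := by simp [hW]
  have hreach : ∀ x (hx : x ∈ W), (G.induce W).Reachable ⟨x, hx⟩ ⟨a, haW⟩ := by
    intro x hx
    have rba : (G.induce W).Reachable ⟨b, hbW⟩ ⟨a, haW⟩ :=
      (induceAdj (a := ⟨b, hbW⟩) (b := ⟨a, haW⟩) hab.symm).reachable
    have rcb : (G.induce W).Reachable ⟨c, hcW⟩ ⟨b, hbW⟩ :=
      (induceAdj (a := ⟨c, hcW⟩) (b := ⟨b, hbW⟩) hbc.symm).reachable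
    have rdc : (G.induce W).Reachable ⟨d, hdW⟩ ⟨c, hcW⟩ :=
      (induceAdj (a := ⟨d, hdW⟩) (b := ⟨c, hcW⟩) hcd.symm).reachable
    have red : (G.induce W).Reachable ⟨e, heW⟩ ⟨d, hdW⟩ :=
      (induceAdj (a := ⟨e, heW⟩) (b := ⟨d, hdW⟩) hde.symm).reachable
    have hx' : x = a ∨ x = b ∨ x = c ∨ x = d ∨ x = e := by simpa [hW] using hx
    rcases hx' with rfl | rfl | rfl | rfl | rfl
    · exact Reachable.refl _
    · exact rba
    · exact rcb.trans rba
    · exact (rdc.trans rcb).trans rba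
    · exact ((red.trans rdc).trans rcb).trans rba
  have hconnW : (G.induce W).Connected := by
    rw [SimpleGraph.connected_iff]
    exact ⟨fun p q => (hreach p.1 p.2).trans (hreach q.1 q.2).symm, ⟨⟨a, haW⟩⟩⟩
  classical
  set φ : V → ℕ := fun x => if x = a then 0 else if x = b then 1 else if x = c then 2
    else if x = d then 3 else 4 with hφdef
  have hφa : φ a = 0 := by simp [hφdef]
  have hφb : φ b = 1 := by simp [hφdef, hab.ne']
  have hφc : φ c = 2 := by simp [hφdef, hac'.symm, hbc.ne']
  have hφd : φ d = 3 := by simp [hφdef, had'.symm, hbd'.symm, hcd.ne']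
  have hφe : φ e = 4 := by simp [hφdef, hae'.symm, hbe'.symm, hce'.symm, hde.ne']
  have hφ : ∀ p ∈ W, ∀ q ∈ W, G.Adj p q → φ q ≤ φ p + 1 := by
    intro p hp q hq hadj
    have hp' : p = a ∨ p = b ∨ p = c ∨ p = d ∨ p = e := by simpa [hW] using hp
    have hq' : q = a ∨ q = b ∨ q = c ∨ q = d ∨ q = e := by simpa [hW] using hq
    rcases hp' with rfl | rfl | rfl | rfl | rfl <;> rcases hq' with rfl | rfl | rfl | rfl | rfl <;>
      first
      | exact absurd rfl hadj.ne
      | exact absurd hadj hac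
      | exact absurd hadj.symm hac
      | exact absurd hadj had
      | exact absurd hadj.symm had
      | exact absurd hadj hae
      | exact absurd hadj.symm hae
      | exact absurd hadj hbd
      | exact absurd hadj.symm hbd
      | exact absurd hadj hbe
      | exact absurd hadj.symm hbe
      | exact absurd hadj hce
      | exact absurd hadj.symm hce
      | omega
  have hmain := dh_bound hDH hconnW φ hφ haW heW
  omega

/-- wrappers at general level `i ≥ 1` -/
lemma keyAdjI [DecidableEq V] (hconn : G.Connected) (hDH : IsDistanceHereditary G)
    (u : V) {i : ℕ} (hi : 1 ≤ i)
    (C : (G.induce {v : V | i ≤ G.dist u v}).ConnectedComponent) {b w : V}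
    (hb : G.dist u b + 1 = i)
    (hbC : ∃ c ∈ Subtype.val '' C.supp, G.Adj b c)
    (hw : G.dist u w = i) (hwC : w ∈ Subtype.val '' C.supp) : G.Adj b w := by
  obtain ⟨j, rfl⟩ : ∃ j, i = j + 1 := ⟨i - 1, by omega⟩
  exact keyAdj hconn hDH u C (by omega) hbC hw hwC

lemma boundary_distI (hconn : G.Connected) (u : V) {i : ℕ} (hi : 1 ≤ i)
    {C : (G.induce {v : V | i ≤ G.dist u v}).ConnectedComponent} {b : V}
    (hb1 : b ∉ Subtype.val '' C.supp)
    (hb2 : ∃ c ∈ Subtype.val '' C.supp, G.Adj b c) :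
    G.dist u b + 1 = i := by
  obtain ⟨j, rfl⟩ : ∃ j, i = j + 1 := ⟨i - 1, by omega⟩
  have := boundary_dist hconn u hb1 hb2
  omega

lemma exists_levelI (hconn : G.Connected) (u : V) {i : ℕ} (hi : 1 ≤ i)
    (C : (G.induce {v : V | i ≤ G.dist u v}).ConnectedComponent) :
    ∃ h ∈ Subtype.val '' C.supp, G.dist u h = i := by
  obtain ⟨j, rfl⟩ : ∃ j, i = j + 1 := ⟨i - 1, by omega⟩
  exact exists_level hconn u C

end DH12


open DH12 in
theorem stmt12 {V : Type*} [Fintype V] (G : SimpleGraph V)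
    (hconn : G.Connected) (hDH : IsDistanceHereditary G) (u : V)
    (B : Set V) (hB : B ∈ boundaries G u)
    (hmin : ∀ B' ∈ boundaries G u, B' ⊆ B → B' = B)
    (hind : ∀ x ∈ B, ∀ y ∈ B, ¬ G.Adj x y) :
    ∀ x ∈ B, ∀ y ∈ B, x ≠ y → G.neighborSet x = G.neighborSet y := by
  classical
  obtain ⟨i, hi, C, rfl⟩ := hB
  set B : Set V := {w : V | w ∉ Subtype.val '' C.supp ∧
        ∃ x ∈ Subtype.val '' C.supp, G.Adj w x} with hBdef
  -- key one-sided lemma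
  have key : ∀ x ∈ B, ∀ y ∈ B, x ≠ y → ∀ z, G.Adj x z → G.Adj y z := by
    intro x hx y hy hxy z hxz
    obtain ⟨hx1, hx2⟩ := hx
    obtain ⟨hy1, hy2⟩ := hy
    have hdx : G.dist u x + 1 = i := boundary_distI hconn u hi hx1 hx2
    have hdy : G.dist u y + 1 = i := boundary_distI hconn u hi hy1 hy2
    -- i = 1 is impossible since then x = y = u
    rcases Nat.lt_or_ge i 2 with hilt | hi2
    · exfalso
      have hxu : u = x := hconn.dist_eq_zero_iff.mp (by omega)
      have hyu : u = y := hconn.dist_eq_zero_iff.mp (by omega)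
      exact hxy (hxu ▸ hyu)
    -- pick h in C at level i
    obtain ⟨h, hhC, hdh⟩ := exists_levelI hconn u hi C
    have hxh : G.Adj x h := keyAdjI hconn hDH u hi C hdx hx2 hdh hhC
    have hyh : G.Adj y h := keyAdjI hconn hDH u hi C hdy hy2 hdh hhC
    -- a : a neighbour of x one level down
    have hdx2 : G.dist u x = (i - 2) + 1 := by omega
    obtain ⟨a, hax, hda⟩ := exists_down hconn hdx2
    -- the component C' of x at level i - 1
    have hxS' : x ∈ {v : V | i - 1 ≤ G.dist u v} := by
      show i - 1 ≤ G.dist u x; omega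
    set C' := (G.induce {v : V | i - 1 ≤ G.dist u v}).connectedComponentMk ⟨x, hxS'⟩ with hC'def
    have hi' : 1 ≤ i - 1 := by omega
    have hxC' : x ∈ Subtype.val '' C'.supp := mem_image_supp.mpr ⟨hxS', rfl⟩
    have hhC' : h ∈ Subtype.val '' C'.supp :=
      supp_closed hxC' hxh (by show i - 1 ≤ G.dist u h; omega)
    have hyC' : y ∈ Subtype.val '' C'.supp :=
      supp_closed hhC' hyh.symm (by show i - 1 ≤ G.dist u y; omega)
    have haC' : ∃ c ∈ Subtype.val '' C'.supp, G.Adj a c := ⟨x, hxC', hax⟩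
    have hda' : G.dist u a + 1 = i - 1 := by omega
    have hay : G.Adj a y := keyAdjI hconn hDH u hi' C' hda' haC' (by omega) hyC'
    -- z basic facts
    have hzy : z ≠ y := by
      rintro rfl
      exact hind x ⟨hx1, hx2⟩ z ⟨hy1, hy2⟩ hxz
    have hyx : ¬G.Adj y x := fun hh => hind y ⟨hy1, hy2⟩ x ⟨hx1, hx2⟩ hh
    have hdz_ub : G.dist u z ≤ i := by
      have := adj_level hconn (u := u) hxz; omega
    have hdz_lb : i - 2 ≤ G.dist u z := by
      have := adj_level hconn (u := u) hxz.symm; omega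
    by_contra hyz
    have hcases : G.dist u z = i - 2 ∨ G.dist u z = i - 1 ∨ G.dist u z = i := by omega
    rcases hcases with hdz | hdz | hdz
    · -- z one level below x : z is adjacent to all of C' ∩ L_{i-1}, in particular y
      have : G.Adj z y :=
        keyAdjI hconn hDH u hi' C' (by omega) ⟨x, hxC', hxz.symm⟩ (by omega) hyC'
      exact hyz this.symm
    · -- z at the level of x
      have hzC' : z ∈ Subtype.val '' C'.supp :=
        supp_closed hxC' hxz (by show i - 1 ≤ G.dist u z; omega)
      have haz : G.Adj a z := keyAdjI hconn hDH u hi' C' hda' haC' (by omega) hzC'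
      have hzB : z ∉ B := fun hzB => hind x ⟨hx1, hx2⟩ z hzB hxz
      have hznC : z ∉ Subtype.val '' C.supp := by
        intro hzC
        have := (mem_image_supp.mp hzC).1
        have : i ≤ G.dist u z := this
        omega
      have hzh : ¬G.Adj z h := by
        intro hh
        exact hzB ⟨hznC, ⟨h, hhC, hh⟩⟩
      have h3 : 3 ≤ G.dist y z := by
        refine P4 hDH hyh hxh.symm hxz hyx hyz (fun hh => hzh hh.symm) hxy.symm hzy.symm ?_
        intro he
        rw [he] at hdh; omega
      have h2 : G.dist y z ≤ 2 := by
        have := SimpleGraph.dist_le (Walk.cons hay.symm (Walk.cons haz Walk.nil))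
        simpa using this
      omega
    · -- z at level i
      have hzS : z ∈ {v : V | i ≤ G.dist u v} := by show i ≤ G.dist u z; omega
      by_cases hzC : z ∈ Subtype.val '' C.supp
      · exact hyz (keyAdjI hconn hDH u hi C hdy hy2 hdz hzC)
      -- z lies in another component C₂ at level i
      set C₂ := (G.induce {v : V | i ≤ G.dist u v}).connectedComponentMk ⟨z, hzS⟩ with hC₂def
      set B₂ : Set V := {w : V | w ∉ Subtype.val '' C₂.supp ∧
        ∃ c ∈ Subtype.val '' C₂.supp, G.Adj w c} with hB₂def
      have hB₂ : B₂ ∈ boundaries G u := ⟨i, hi, C₂, rfl⟩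
      have hzC₂ : z ∈ Subtype.val '' C₂.supp := mem_image_supp.mpr ⟨hzS, rfl⟩
      have hxnC₂ : x ∉ Subtype.val '' C₂.supp := by
        intro hmem
        have : i ≤ G.dist u x := (mem_image_supp.mp hmem).1
        omega
      have hxB₂ : x ∈ B₂ := ⟨hxnC₂, ⟨z, hzC₂, hxz⟩⟩
      have hyB₂ : y ∉ B₂ := by
        intro hyB₂
        exact hyz (keyAdjI hconn hDH u hi C₂ hdy hyB₂.2 hdz hzC₂)
      have hnss : ¬B₂ ⊆ B := by
        intro hss
        have : y ∈ B₂ := by rw [hmin B₂ hB₂ hss]; exact ⟨hy1, hy2⟩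
        exact hyB₂ this
      obtain ⟨q, hqB₂, hqB⟩ := Set.not_subset.mp hnss
      obtain ⟨hq1, hq2⟩ := hqB₂
      have hdq : G.dist u q + 1 = i := boundary_distI hconn u hi hq1 hq2
      have hqz : G.Adj q z := keyAdjI hconn hDH u hi C₂ hdq hq2 hdz hzC₂
      have hqnC : q ∉ Subtype.val '' C.supp := by
        intro hmem
        have : i ≤ G.dist u q := (mem_image_supp.mp hmem).1
        omega
      have hqE : ¬∃ c ∈ Subtype.val '' C.supp, G.Adj q c := by
        intro hE
        exact hqB ⟨hqnC, hE⟩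
      have hqh : ¬G.Adj q h := fun hh => hqE ⟨h, hhC, hh⟩
      have hhz : ¬G.Adj h z := fun hh => hzC (supp_closed hhC hh hzS)
      have hzC'2 : z ∈ Subtype.val '' C'.supp :=
        supp_closed hxC' hxz (by show i - 1 ≤ G.dist u z; omega)
      have hqC' : q ∈ Subtype.val '' C'.supp :=
        supp_closed hzC'2 hqz.symm (by show i - 1 ≤ G.dist u q; omega)
      have haq : G.Adj a q := keyAdjI hconn hDH u hi' C' hda' haC' (by omega) hqC'
      have hyq_ne : y ≠ q := by rintro rfl; exact hqB ⟨hy1, hy2⟩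
      have hxq_ne : x ≠ q := by rintro rfl; exact hqB ⟨hx1, hx2⟩
      have hhz_ne : h ≠ z := by rintro rfl; exact hzC hhC
      have hhq_ne : h ≠ q := by intro he; rw [he] at hdh; omega
      have hyz_ne : y ≠ z := fun he => hzy he.symm
      have hyq2 : G.dist y q ≤ 2 := by
        have := SimpleGraph.dist_le (Walk.cons hay.symm (Walk.cons haq Walk.nil))
        simpa using this
      by_cases hyq : G.Adj y q
      · -- P4 on h - y - q - z
        have h3 : 3 ≤ G.dist h z :=
          P4 hDH hyh.symm hyq hqz (fun hh => hqh hh.symm) hhz hyz hhq_ne hhz_ne hyz_ne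
        have h2 : G.dist h z ≤ 2 := by
          have := SimpleGraph.dist_le (Walk.cons hxh.symm (Walk.cons hxz Walk.nil))
          simpa using this
        omega
      by_cases hxq : G.Adj x q
      · -- P4 on y - h - x - q
        have h3 : 3 ≤ G.dist y q :=
          P4 hDH hyh hxh.symm hxq hyx hyq (fun hh => hqh hh.symm) hxy.symm hyq_ne hhq_ne
        omega
      · -- P5 on y - h - x - z - q
        have h3 : 3 ≤ G.dist y q :=
          P5 hDH hyh hxh.symm hxz hqz.symm hyx hyz hyq hhz
            (fun hh => hqh hh.symm) hxq hxy.symm hyz_ne hyq_ne hhz_ne hhq_ne hxq_ne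
        omega
  -- conclude
  intro x hx y hy hxy
  ext z
  simp only [SimpleGraph.mem_neighborSet]
  exact ⟨key x hx y hy hxy z, key y hy x hx hxy.symm z⟩
end
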